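/- arXiv:math/9407204 — 4 statements merged into one kernel-verified Lean document; each statement's English description precedes it below -/
import Mathlib

section
/- Let S be a Sacks tree, k ∈ ω, and let R_0, …, R_{k-1} be pairwise disjoint relations with ⋃_{i<k} R_i = {⟨ρ,τ⟩ : ρ, τ ∈ S, |ρ| = |τ|}. Then there are a Sacks tree S' ⊆ S in which every splitting node has exactly two immediate successors, and a pair ⟨i,j⟩ ∈ k × k, such that every splitting node of S' is of type ⟨i,j⟩ in S'. -/
/-- `σ` is a strictly increasing finite sequence of naturals (an element of `ω^{↑<ω}`). -/
def IncSeq (σ : List ℕ) : Prop := List.Chain' (· < ·) σ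

/-- A tree: a nonempty set of strictly increasing finite sequences closed under
initial segments. -/
def IsTree (T : Set (List ℕ)) : Prop :=
  T.Nonempty ∧ (∀ σ ∈ T, IncSeq σ) ∧ ∀ σ ∈ T, ∀ τ, τ <+: σ → τ ∈ T

/-- The initial segment of `f` of length `n`, as a finite sequence. -/
def seg (f : ℕ → ℕ) (n : ℕ) : List ℕ := (List.range n).map f

/-- The branches of `T`: strictly increasing `f : ℕ → ℕ` all of whose initial
segments lie in `T`. -/
def branches (T : Set (List ℕ)) : Set (ℕ → ℕ) :=
  {f | StrictMono f ∧ ∀ n, seg f n ∈ T}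

/-- The values of the immediate successors of `σ` in `T`. -/
def succs (T : Set (List ℕ)) (σ : List ℕ) : Set ℕ := {n | σ ++ [n] ∈ T}

/-- `σ` is a splitting node of `T`: it has at least two immediate successors. -/
def IsSplit (T : Set (List ℕ)) (σ : List ℕ) : Prop :=
  σ ∈ T ∧ ∃ m n : ℕ, m ≠ n ∧ σ ++ [m] ∈ T ∧ σ ++ [n] ∈ T

/-- `σ` is an infinite-splitting node of `T`. -/
def IsInfSplit (T : Set (List ℕ)) (σ : List ℕ) : Prop :=
  σ ∈ T ∧ (succs T σ).Infinite

/-- A Sacks tree: every node extends to a splitting node. -/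
def IsSacks (S : Set (List ℕ)) : Prop :=
  IsTree S ∧ ∀ σ ∈ S, ∃ τ, σ <+: τ ∧ IsSplit S τ

/-- A Miller tree: every node extends to an infinite-splitting node. -/
def IsMiller (M : Set (List ℕ)) : Prop :=
  IsTree M ∧ ∀ σ ∈ M, ∃ τ, σ <+: τ ∧ IsInfSplit M τ

/-- A Laver tree with stem `s`: `s` is comparable with all nodes, and every node
extending `s` has infinitely many immediate successors. -/
def IsLaverWithStem (L : Set (List ℕ)) (s : List ℕ) : Prop :=
  IsTree L ∧ s ∈ L ∧ (∀ σ ∈ L, σ <+: s ∨ s <+: σ) ∧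
    ∀ σ ∈ L, s <+: σ → (succs L σ).Infinite

/-- A Laver tree. -/
def IsLaver (L : Set (List ℕ)) : Prop := ∃ s, IsLaverWithStem L s

namespace STT

/-- comparability of lists -/
def Comp (x y : List ℕ) : Prop := x <+: y ∨ y <+: x

lemma Comp.symm {x y : List ℕ} (h : Comp x y) : Comp y x := h.elim .inr .inl

lemma comp_of_prefix {x y z : List ℕ} (hx : x <+: z) (hy : y <+: z) : Comp x y := by
  rcases le_total x.length y.length with h | h
  · exact .inl (List.prefix_of_prefix_length_le hx hy h)
  · exact .inr (List.prefix_of_prefix_length_le hy hx h)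

lemma eq_of_comp_length {x y : List ℕ} (h : Comp x y) (hl : x.length = y.length) : x = y := by
  rcases h with h | h
  · exact h.eq_of_length hl
  · exact (h.eq_of_length hl.symm).symm

lemma take_eq_of_prefix {x x' : List ℕ} (h : x <+: x') {n : ℕ} (hn : n ≤ x.length) :
    x'.take n = x.take n := by
  obtain ⟨t, rfl⟩ := h
  exact List.take_append_of_le_length hn

lemma getD_eq_of_prefix {x x' : List ℕ} (h : x <+: x') {n : ℕ} (hn : n < x.length) :
    x'.getD n 0 = x.getD n 0 := by
  have hn' : n < x'.length := lt_of_lt_of_le hn h.length_le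
  rw [List.getD_eq_getElem _ _ hn, List.getD_eq_getElem _ _ hn']
  exact (h.getElem hn).symm

lemma not_comp_of_val_ne {x y : List ℕ} {d : ℕ} (hx : d < x.length) (hy : d < y.length)
    (h : x.getD d 0 ≠ y.getD d 0) : ¬ Comp x y := by
  rintro (hp | hp)
  · exact h (by rw [getD_eq_of_prefix hp hx])
  · exact h (getD_eq_of_prefix hp hy)

/-- divergence point -/
noncomputable def dvg (x y : List ℕ) : ℕ :=
  Nat.findGreatest (fun n => x.take n = y.take n) (min x.length y.length)

lemma dvg_take (x y : List ℕ) : x.take (dvg x y) = y.take (dvg x y) :=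
  Nat.findGreatest_spec (P := fun n => x.take n = y.take n) (Nat.zero_le _) rfl

lemma dvg_le (x y : List ℕ) : dvg x y ≤ min x.length y.length := Nat.findGreatest_le _

lemma take_eq_mono {x y : List ℕ} {n m : ℕ} (h : x.take n = y.take n) (hm : m ≤ n) :
    x.take m = y.take m := by
  have := congrArg (List.take m) h
  rwa [List.take_take, List.take_take, inf_eq_left.mpr hm] at this

lemma take_succ_iff {x y : List ℕ} {d : ℕ} (hx : d < x.length) (hy : d < y.length) :
    x.take (d+1) = y.take (d+1) ↔ (x.take d = y.take d ∧ x.getD d 0 = y.getD d 0) := by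
  rw [List.take_succ, List.take_succ]
  rw [List.getD_eq_getElem _ _ hx, List.getD_eq_getElem _ _ hy]
  rw [List.getElem?_eq_getElem hx, List.getElem?_eq_getElem hy]
  constructor
  · intro h
    have hlen : (x.take d).length = (y.take d).length := by
      simp [List.length_take]
      omega
    obtain ⟨h1, h2⟩ := List.append_inj h hlen
    exact ⟨h1, by simpa using h2⟩
  · rintro ⟨h1, h2⟩; rw [h1, h2]

lemma dvg_spec {x y : List ℕ} (hc : ¬ Comp x y) :
    dvg x y < x.length ∧ dvg x y < y.length ∧ x.getD (dvg x y) 0 ≠ y.getD (dvg x y) 0 := by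
  have hle := dvg_le x y
  have hxle : dvg x y ≤ x.length := le_trans hle (min_le_left _ _)
  have hyle : dvg x y ≤ y.length := le_trans hle (min_le_right _ _)
  have ht := dvg_take x y
  rcases Nat.lt_or_ge (dvg x y) x.length with h1 | h1
  · rcases Nat.lt_or_ge (dvg x y) y.length with h2 | h2
    · refine ⟨h1, h2, fun hval => ?_⟩
      have hgr : ¬ (x.take (dvg x y + 1) = y.take (dvg x y + 1)) :=
        Nat.findGreatest_is_greatest (P := fun n => x.take n = y.take n)
          (n := min x.length y.length) (Nat.lt_succ_self _) (le_min (by omega) (by omega))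
      exact hgr ((take_succ_iff h1 h2).2 ⟨ht, hval⟩)
    · exfalso
      have hd : dvg x y = y.length := le_antisymm hyle h2
      rw [hd, List.take_of_length_le (le_refl _)] at ht
      exact hc (.inr (ht ▸ (x.take_prefix y.length)))
  · exfalso
    have hd : dvg x y = x.length := le_antisymm hxle h1
    rw [hd, List.take_of_length_le (le_refl _)] at ht
    exact hc (.inl (ht.symm ▸ (y.take_prefix x.length)))

lemma dvg_unique {x y : List ℕ} {d : ℕ} (ht : x.take d = y.take d) (hx : d < x.length)
    (hy : d < y.length) (hv : x.getD d 0 ≠ y.getD d 0) : dvg x y = d := by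
  have hled : d ≤ dvg x y := Nat.le_findGreatest (le_min (le_of_lt hx) (le_of_lt hy)) ht
  rcases lt_or_eq_of_le hled with h | h
  · exfalso
    have h1 : x.take (d+1) = y.take (d+1) := take_eq_mono (dvg_take x y) (by omega)
    exact hv ((take_succ_iff hx hy).1 h1).2
  · exact h.symm

lemma not_comp_of_ne {x y : List ℕ} (hl : x.length = y.length) (h : x ≠ y) : ¬ Comp x y :=
  fun hcomp => h (eq_of_comp_length hcomp hl)

lemma dvg_ext {x y x' y' : List ℕ} (hc : ¬ Comp x y) (hx : x <+: x') (hy : y <+: y') :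
    dvg x' y' = dvg x y ∧ ¬ Comp x' y' ∧
    x'.getD (dvg x y) 0 = x.getD (dvg x y) 0 ∧ y'.getD (dvg x y) 0 = y.getD (dvg x y) 0 := by
  obtain ⟨h1, h2, h3⟩ := dvg_spec hc
  have e1 : x'.take (dvg x y) = x.take (dvg x y) := take_eq_of_prefix hx (by omega)
  have e2 : y'.take (dvg x y) = y.take (dvg x y) := take_eq_of_prefix hy (by omega)
  have v1 : x'.getD (dvg x y) 0 = x.getD (dvg x y) 0 := getD_eq_of_prefix hx h1
  have v2 : y'.getD (dvg x y) 0 = y.getD (dvg x y) 0 := getD_eq_of_prefix hy h2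
  have hx' : dvg x y < x'.length := lt_of_lt_of_le h1 hx.length_le
  have hy' : dvg x y < y'.length := lt_of_lt_of_le h2 hy.length_le
  have hv : x'.getD (dvg x y) 0 ≠ y'.getD (dvg x y) 0 := by rw [v1, v2]; exact h3
  exact ⟨dvg_unique (by rw [e1, e2, dvg_take]) hx' hy' hv,
    not_comp_of_val_ne hx' hy' hv, v1, v2⟩

lemma dvg_of_append {p x y : List ℕ} {a b : ℕ} (ha : p ++ [a] <+: x) (hb : p ++ [b] <+: y)
    (hab : a ≠ b) :
    dvg x y = p.length ∧ ¬ Comp x y ∧ x.getD p.length 0 = a ∧ y.getD p.length 0 = b := by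
  have hla : p.length < (p ++ [a]).length := by simp
  have hlb : p.length < (p ++ [b]).length := by simp
  have hva : (p ++ [a]).getD p.length 0 = a := by
    rw [List.getD_eq_getElem _ _ hla]; simp
  have hvb : (p ++ [b]).getD p.length 0 = b := by
    rw [List.getD_eq_getElem _ _ hlb]; simp
  have hx : x.getD p.length 0 = a := by rw [getD_eq_of_prefix ha hla, hva]
  have hy : y.getD p.length 0 = b := by rw [getD_eq_of_prefix hb hlb, hvb]
  have hxl : p.length < x.length := lt_of_lt_of_le hla ha.length_le
  have hyl : p.length < y.length := lt_of_lt_of_le hlb hb.length_le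
  have ht : x.take p.length = y.take p.length := by
    have t1 : x.take p.length = p := by
      have hp : p <+: x := ((p.prefix_append [a]).trans ha)
      rw [take_eq_of_prefix hp (le_refl _), List.take_length]
    have t2 : y.take p.length = p := by
      have hp : p <+: y := ((p.prefix_append [b]).trans hb)
      rw [take_eq_of_prefix hp (le_refl _), List.take_length]
    rw [t1, t2]
  have hv : x.getD p.length 0 ≠ y.getD p.length 0 := by rw [hx, hy]; exact hab
  exact ⟨dvg_unique ht hxl hyl hv, not_comp_of_val_ne hxl hyl hv, hx, hy⟩


/-! ### Tree basics -/

open scoped Classical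

lemma incseq_prefix {x y : List ℕ} (h : IncSeq y) (hp : x <+: y) : IncSeq x :=
  List.IsChain.sublist h hp.sublist

/-- a nice tree: a Sacks subtree of `S` -/
def Nice (S T : Set (List ℕ)) : Prop := IsSacks T ∧ T ⊆ S

lemma tree_mem_of_prefix {T : Set (List ℕ)} (hT : IsTree T) {σ τ : List ℕ}
    (hσ : σ ∈ T) (h : τ <+: σ) : τ ∈ T := hT.2.2 σ hσ τ h

lemma tree_nil_mem {T : Set (List ℕ)} (hT : IsTree T) : [] ∈ T := by
  obtain ⟨σ, hσ⟩ := hT.1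
  exact tree_mem_of_prefix hT hσ List.nil_prefix

lemma take_mem {T : Set (List ℕ)} (hT : IsTree T) {σ : List ℕ} (hσ : σ ∈ T) (n : ℕ) :
    σ.take n ∈ T := tree_mem_of_prefix hT hσ (σ.take_prefix n)

lemma take_prefix_take {l : List ℕ} {m n : ℕ} (h : m ≤ n) : l.take m <+: l.take n := by
  have heq : l.take m = (l.take n).take m := by
    rw [List.take_take, inf_eq_left.mpr h]
  rw [heq]
  exact (l.take n).take_prefix m

/-- one-step extension in a Sacks tree -/
lemma sacks_step {T : Set (List ℕ)} (hT : IsSacks T) {σ : List ℕ} (hσ : σ ∈ T) :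
    ∃ τ ∈ T, σ <+: τ ∧ τ.length = σ.length + 1 := by
  obtain ⟨ρ, hρ1, hρmem, m, n, hmn, hm, hn⟩ := hT.2 σ hσ
  have hσρ : σ.length ≤ ρ.length := hρ1.length_le
  have hlen : σ.length + 1 ≤ (ρ ++ [m]).length := by simp; omega
  refine ⟨(ρ ++ [m]).take (σ.length + 1), take_mem hT.1 hm _, ?_,
    by simp only [List.length_take, List.length_append, List.length_cons, List.length_nil]; omega⟩
  have h1 : σ <+: ρ ++ [m] := hρ1.trans (ρ.prefix_append [m])
  have h2 : σ = (ρ ++ [m]).take σ.length := List.prefix_iff_eq_take.1 h1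
  nth_rewrite 1 [h2]
  exact take_prefix_take (by omega)

/-- no dead ends: nodes of every length above any node -/
lemma sacks_nde {T : Set (List ℕ)} (hT : IsSacks T) {σ : List ℕ} (hσ : σ ∈ T) {ℓ : ℕ}
    (hℓ : σ.length ≤ ℓ) : ∃ τ ∈ T, σ <+: τ ∧ τ.length = ℓ := by
  induction ℓ with
  | zero =>
    have hh : σ = [] := List.length_eq_zero_iff.1 (by omega)
    exact ⟨[], hh ▸ hσ, by simp [hh]⟩
  | succ n ih =>
    rcases Nat.lt_or_ge σ.length (n+1) with h | h
    · obtain ⟨τ, hτ, hpre, hlen⟩ := ih (by omega)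
      obtain ⟨τ', hτ', hpre', hlen'⟩ := sacks_step hT hτ
      exact ⟨τ', hτ', hpre.trans hpre', by omega⟩
    · exact ⟨σ, hσ, List.prefix_refl σ, by omega⟩

lemma sacks_len_mem {T : Set (List ℕ)} (hT : IsSacks T) (ℓ : ℕ) :
    ∃ τ ∈ T, τ.length = ℓ := by
  obtain ⟨τ, h1, _, h3⟩ := sacks_nde hT (tree_nil_mem hT.1) (by simp : ([] : List ℕ).length ≤ ℓ)
  exact ⟨τ, h1, h3⟩

lemma split_mono {T U : Set (List ℕ)} (h : T ⊆ U) {ρ : List ℕ} (hρ : IsSplit T ρ) :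
    IsSplit U ρ := by
  obtain ⟨h1, m, n, hmn, hm, hn⟩ := hρ
  exact ⟨h h1, m, n, hmn, h hm, h hn⟩

/-- localization of a tree at a node -/
def loc (T : Set (List ℕ)) (σ : List ℕ) : Set (List ℕ) := {x ∈ T | Comp x σ}

lemma loc_subset (T : Set (List ℕ)) (σ : List ℕ) : loc T σ ⊆ T := fun _ h => h.1

lemma loc_comp {T : Set (List ℕ)} {σ x : List ℕ} (h : x ∈ loc T σ) : Comp x σ := h.2

lemma loc_mono {T U : Set (List ℕ)} (h : T ⊆ U) (σ : List ℕ) : loc T σ ⊆ loc U σ :=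
  fun _ hx => ⟨h hx.1, hx.2⟩

lemma loc_self {T : Set (List ℕ)} {σ : List ℕ} (h : σ ∈ T) : σ ∈ loc T σ :=
  ⟨h, .inl (List.prefix_refl σ)⟩

lemma loc_mem_of_prefix {T : Set (List ℕ)} {σ x : List ℕ} (hx : x ∈ T) (h : σ <+: x) :
    x ∈ loc T σ := ⟨hx, .inr h⟩

lemma loc_sacks {T : Set (List ℕ)} (hT : IsSacks T) {σ : List ℕ} (hσ : σ ∈ T) :
    IsSacks (loc T σ) := by
  constructor
  · refine ⟨⟨σ, loc_self hσ⟩, fun x hx => hT.1.2.1 x hx.1, ?_⟩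
    rintro x ⟨hx1, hx2⟩ τ hτ
    refine ⟨tree_mem_of_prefix hT.1 hx1 hτ, ?_⟩
    rcases hx2 with h | h
    · exact .inl (hτ.trans h)
    · exact comp_of_prefix hτ h
  · rintro x ⟨hx1, hx2⟩
    have hy : ∃ y ∈ T, x <+: y ∧ σ <+: y := by
      rcases hx2 with h | h
      · exact ⟨σ, hσ, h, List.prefix_refl σ⟩
      · exact ⟨x, hx1, List.prefix_refl x, h⟩
    obtain ⟨y, hy1, hy2, hy3⟩ := hy
    obtain ⟨ρ, hρ1, hρ2, m, n, hmn, hm, hn⟩ := hT.2 y hy1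
    have hρσ : σ <+: ρ := hy3.trans hρ1
    exact ⟨ρ, hy2.trans hρ1, ⟨hρ2, .inr hρσ⟩, m, n, hmn,
      ⟨hm, .inr (hρσ.trans (ρ.prefix_append [m]))⟩,
      ⟨hn, .inr (hρσ.trans (ρ.prefix_append [n]))⟩⟩

lemma loc_nice {S T : Set (List ℕ)} (hT : Nice S T) {σ : List ℕ} (hσ : σ ∈ T) :
    Nice S (loc T σ) := ⟨loc_sacks hT.1 hσ, (loc_subset T σ).trans hT.2⟩

/-- rooted tree: every node comparable with the root -/
def Rooted (S : Set (List ℕ)) (e : List ℕ) (T : Set (List ℕ)) : Prop :=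
  Nice S T ∧ e ∈ T ∧ ∀ x ∈ T, Comp x e

lemma rooted_loc {S T : Set (List ℕ)} (hT : Nice S T) {σ : List ℕ} (hσ : σ ∈ T) :
    Rooted S σ (loc T σ) := ⟨loc_nice hT hσ, loc_self hσ, fun _ h => h.2⟩

lemma rooted_split {S : Set (List ℕ)} {e : List ℕ} {T : Set (List ℕ)}
    (hT : Rooted S e T) {ρ : List ℕ} (hρ : IsSplit T ρ) : e <+: ρ := by
  obtain ⟨hρT, m, n, hmn, hm, hn⟩ := hρ
  by_cases hlen : ρ.length + 1 ≤ e.length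
  · exfalso
    have c1 : ρ ++ [m] <+: e := by
      rcases hT.2.2 _ hm with h | h
      · exact h
      · have hh : e = ρ ++ [m] := h.eq_of_length (by have := h.length_le; simp at this ⊢; omega)
        exact hh ▸ List.prefix_refl _
    have c2 : ρ ++ [n] <+: e := by
      rcases hT.2.2 _ hn with h | h
      · exact h
      · have hh : e = ρ ++ [n] := h.eq_of_length (by have := h.length_le; simp at this ⊢; omega)
        exact hh ▸ List.prefix_refl _
    have heq : ρ ++ [m] = ρ ++ [n] := eq_of_comp_length (comp_of_prefix c1 c2) (by simp)
    simp at heq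
    exact hmn heq
  · rcases hT.2.2 ρ hρT with h | h
    · have hh : ρ = e := h.eq_of_length (le_antisymm h.length_le (by omega))
      exact hh ▸ List.prefix_refl _
    · exact h

lemma rooted_root_mem {A : Set (List ℕ)} {r : List ℕ}
    (hA : IsSacks A) (hcomp : ∀ x ∈ A, Comp x r) : r ∈ A := by
  obtain ⟨τ, hτ, hlen⟩ := sacks_len_mem hA r.length
  have := eq_of_comp_length (hcomp τ hτ) hlen
  exact this ▸ hτ

/-! ### colors -/

noncomputable def col (k : ℕ) (R : ℕ → Set (List ℕ × List ℕ)) (ρ τ : List ℕ) : ℕ :=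
  if h : ∃ i, i < k ∧ (ρ, τ) ∈ R i then h.choose else 0

lemma col_lt_mem {k : ℕ} {R : ℕ → Set (List ℕ × List ℕ)} {ρ τ : List ℕ}
    (h : ∃ i, i < k ∧ (ρ, τ) ∈ R i) :
    col k R ρ τ < k ∧ (ρ, τ) ∈ R (col k R ρ τ) := by
  rw [col, dif_pos h]
  exact h.choose_spec

/-! ### the persistence relation Pers -/

def Pers (S : Set (List ℕ)) (k : ℕ) (R : ℕ → Set (List ℕ × List ℕ))
    (T W : Set (List ℕ)) (t : ℕ) : Prop :=
  ∀ T', Nice S T' → T' ⊆ T → ∀ W', Nice S W' → W' ⊆ W →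
    ∃ ρ τ, IsSplit T' ρ ∧ τ ∈ W' ∧ τ.length = ρ.length ∧ col k R ρ τ = t

lemma Pers_mono {S : Set (List ℕ)} {k : ℕ} {R : ℕ → Set (List ℕ × List ℕ)}
    {T W T' W' : Set (List ℕ)} {t : ℕ} (h : Pers S k R T W t)
    (hT : T' ⊆ T) (hW : W' ⊆ W) : Pers S k R T' W' t :=
  fun T'' h1 h2 W'' h3 h4 => h T'' h1 (h2.trans hT) W'' h3 (h4.trans hW)


/-! ### derivative lemma: persistent colors exist after shrinking -/

lemma exists_Pers {S : Set (List ℕ)} {k : ℕ} {R : ℕ → Set (List ℕ × List ℕ)}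
    (hcover : ∀ ρ ∈ S, ∀ τ ∈ S, ρ.length = τ.length → ∃ i < k, (ρ, τ) ∈ R i)
    {T W : Set (List ℕ)} (hT : Nice S T) (hW : Nice S W) :
    ∃ T' W' t, Nice S T' ∧ T' ⊆ T ∧ Nice S W' ∧ W' ⊆ W ∧ t < k ∧ Pers S k R T' W' t := by
  by_contra hcon
  push_neg at hcon
  have key : ∀ s, s ≤ k → ∃ T' W', Nice S T' ∧ T' ⊆ T ∧ Nice S W' ∧ W' ⊆ W ∧
      ∀ t, t < s → ∀ ρ τ, IsSplit T' ρ → τ ∈ W' → τ.length = ρ.length → col k R ρ τ ≠ t := by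
    intro s
    induction s with
    | zero => exact fun _ => ⟨T, W, hT, subset_rfl, hW, subset_rfl,
        fun t ht => absurd ht (by omega)⟩
    | succ s ih =>
      intro hs
      obtain ⟨T', W', h1, h2, h3, h4, h5⟩ := ih (by omega)
      have hnp : ¬ Pers S k R T' W' s := hcon T' W' s h1 h2 h3 h4 (by omega)
      rw [Pers] at hnp
      push_neg at hnp
      obtain ⟨T'', hT'', hsub'', W'', hW'', hsubW'', hno⟩ := hnp
      refine ⟨T'', W'', hT'', hsub''.trans h2, hW'', hsubW''.trans h4, ?_⟩
      intro t ht ρ τ hsp hτ hlen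
      rcases Nat.lt_or_ge t s with h | h
      · exact h5 t h ρ τ (split_mono hsub'' hsp) (hsubW'' hτ) hlen
      · have hts : t = s := by omega
        subst hts
        exact hno ρ τ hsp hτ hlen
  obtain ⟨T', W', h1, h2, h3, h4, h5⟩ := key k (le_refl k)
  obtain ⟨ρ, _, hsp⟩ := h1.1.2 [] (tree_nil_mem h1.1.1)
  obtain ⟨τ, hτ, hlen⟩ := sacks_len_mem h3.1 ρ.length
  have hmem : ∃ i, i < k ∧ (ρ, τ) ∈ R i := by
    obtain ⟨i, h6, h7⟩ := hcover ρ (h1.2 hsp.1) τ (h3.2 hτ) hlen.symm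
    exact ⟨i, h6, h7⟩
  obtain ⟨hc1, _⟩ := col_lt_mem hmem
  exact h5 (col k R ρ τ) hc1 ρ τ hsp hτ hlen rfl

/-! ### good splits -/

/-- `V` has a good split for the pair `(i,j)`. -/
def GoodAt (S : Set (List ℕ)) (k : ℕ) (R : ℕ → Set (List ℕ × List ℕ))
    (i j : ℕ) (V : Set (List ℕ)) : Prop :=
  ∃ ρ v₀ v₁ A B, ρ ++ [v₀] ∈ V ∧ ρ ++ [v₁] ∈ V ∧ v₀ < v₁ ∧
    Nice S A ∧ A ⊆ loc V (ρ ++ [v₀]) ∧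
    Nice S B ∧ B ⊆ loc V (ρ ++ [v₁]) ∧
    Pers S k R A B i ∧ Pers S k R B A j

lemma GoodAt_mono {S : Set (List ℕ)} {k : ℕ} {R : ℕ → Set (List ℕ × List ℕ)}
    {i j : ℕ} {V V' : Set (List ℕ)} (h : GoodAt S k R i j V) (hsub : V ⊆ V') :
    GoodAt S k R i j V' := by
  obtain ⟨ρ, v₀, v₁, A, B, m1, m2, hlt, hA, hA2, hB, hB2, hP1, hP2⟩ := h
  exact ⟨ρ, v₀, v₁, A, B, hsub m1, hsub m2, hlt, hA, hA2.trans (loc_mono hsub _),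
    hB, hB2.trans (loc_mono hsub _), hP1, hP2⟩

/-- `GS i j T`: every nice subtree of `T` has a good split for `(i,j)`. -/
def GS (S : Set (List ℕ)) (k : ℕ) (R : ℕ → Set (List ℕ × List ℕ))
    (i j : ℕ) (T : Set (List ℕ)) : Prop :=
  ∀ V, Nice S V → V ⊆ T → GoodAt S k R i j V

lemma GS_mono {S : Set (List ℕ)} {k : ℕ} {R : ℕ → Set (List ℕ × List ℕ)}
    {i j : ℕ} {T U : Set (List ℕ)} (h : GS S k R i j T) (hsub : U ⊆ T) :
    GS S k R i j U := fun V hV hVsub => h V hV (hVsub.trans hsub)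

lemma exists_GS {S : Set (List ℕ)} {k : ℕ} {R : ℕ → Set (List ℕ × List ℕ)}
    (hS : IsSacks S)
    (hcover : ∀ ρ ∈ S, ∀ τ ∈ S, ρ.length = τ.length → ∃ i < k, (ρ, τ) ∈ R i) :
    ∃ i j T₀, i < k ∧ j < k ∧ Nice S T₀ ∧ GS S k R i j T₀ := by
  by_contra hcon
  push_neg at hcon
  -- hcon : ∀ i j T₀, i < k → j < k → Nice S T₀ → ¬ GS S k R i j T₀
  have chain : ∀ l : List (ℕ × ℕ), (∀ p ∈ l, p.1 < k ∧ p.2 < k) →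
      ∃ T', Nice S T' ∧ ∀ p ∈ l, ¬ GoodAt S k R p.1 p.2 T' := by
    intro l
    induction l with
    | nil => exact fun _ => ⟨S, ⟨hS, subset_rfl⟩, by simp⟩
    | cons p l ih =>
      intro hl
      obtain ⟨T', hT', hprev⟩ := ih (fun q hq => hl q (List.mem_cons_of_mem p hq))
      have hnGS : ¬ GS S k R p.1 p.2 T' :=
        hcon p.1 p.2 T' (hl p (List.mem_cons_self)).1 (hl p (List.mem_cons_self)).2 hT'
      rw [GS] at hnGS
      push_neg at hnGS
      obtain ⟨V, hV, hVsub, hVno⟩ := hnGS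
      refine ⟨V, hV, ?_⟩
      intro q hq
      rcases List.mem_cons.1 hq with rfl | hq
      · exact hVno
      · exact fun hgood => hprev q hq (GoodAt_mono hgood hVsub)
  obtain ⟨T', hT', hno⟩ := chain ((List.range k).product (List.range k))
    (by
      intro p hp
      have := List.mem_product.1 hp
      simp only [List.mem_range] at this
      exact this)
  -- now find a good split in T', contradiction
  obtain ⟨ρ, _, hsp⟩ := hT'.1.2 [] (tree_nil_mem hT'.1.1)
  obtain ⟨hρT, m, n, hmn, hm, hn⟩ := hsp
  set v₀ := min m n with hv₀
  set v₁ := max m n with hv₁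
  have hv : v₀ < v₁ := min_lt_max.2 hmn
  have hm0 : ρ ++ [v₀] ∈ T' := by
    rcases le_total m n with h | h
    · rwa [hv₀, min_eq_left h]
    · rwa [hv₀, min_eq_right h]
  have hm1 : ρ ++ [v₁] ∈ T' := by
    rcases le_total m n with h | h
    · rwa [hv₁, max_eq_right h]
    · rwa [hv₁, max_eq_left h]
  have hA₀ : Nice S (loc T' (ρ ++ [v₀])) := loc_nice hT' hm0
  have hB₀ : Nice S (loc T' (ρ ++ [v₁])) := loc_nice hT' hm1
  obtain ⟨A1, B1, i₀, hA1, hA1s, hB1, hB1s, hi₀, hP1⟩ := exists_Pers hcover hA₀ hB₀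
  obtain ⟨B2, A2, j₀, hB2, hB2s, hA2, hA2s, hj₀, hP2⟩ := exists_Pers hcover hB1 hA1
  have hgood : GoodAt S k R i₀ j₀ T' :=
    ⟨ρ, v₀, v₁, A2, B2, hm0, hm1, hv, hA2, hA2s.trans hA1s, hB2, hB2s.trans hB1s,
      Pers_mono hP1 hA2s hB2s, hP2⟩
  refine hno (i₀, j₀) (List.mem_product.2 ?_) hgood
  simp only [List.mem_range]
  exact ⟨hi₀, hj₀⟩


/-! ### perfect systems -/

structure PSys (T : Set (List ℕ)) where
  g : List Bool → List ℕ
  v : List Bool → Bool → ℕ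
  mem : ∀ s, g s ∈ T
  vne : ∀ s, v s false ≠ v s true
  ext : ∀ s b, g s ++ [v s b] <+: g (b :: s)

def psU {T : Set (List ℕ)} (P : PSys T) : Set (List ℕ) := {σ | ∃ s, σ <+: P.g s}

lemma psU_subset {T : Set (List ℕ)} (hT : IsTree T) (P : PSys T) : psU P ⊆ T := by
  rintro σ ⟨s, hs⟩
  exact tree_mem_of_prefix hT (P.mem s) hs

lemma psU_mem {T : Set (List ℕ)} (P : PSys T) (s : List Bool) : P.g s ∈ psU P :=
  ⟨s, List.prefix_refl _⟩

lemma psU_mono {T : Set (List ℕ)} (P : PSys T) : ∀ {s t : List Bool}, s <:+ t →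
    P.g s <+: P.g t := by
  intro s t
  induction t with
  | nil => intro h; rw [List.suffix_nil.1 h]
  | cons b t' ih =>
    intro h
    rcases List.suffix_cons_iff.1 h with h | h
    · rw [h]
    · exact (ih h).trans (((P.g t').prefix_append [P.v t' b]).trans (P.ext t' b))

lemma psU_succ_mem {T : Set (List ℕ)} (P : PSys T) (s : List Bool) (b : Bool) :
    P.g s ++ [P.v s b] ∈ psU P := ⟨b :: s, P.ext s b⟩

lemma psU_tree {T : Set (List ℕ)} (hT : IsTree T) (hinc : ∀ σ ∈ T, IncSeq σ)
    (P : PSys T) : IsTree (psU P) := by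
  refine ⟨⟨P.g [], psU_mem P []⟩, ?_, ?_⟩
  · intro σ hσ
    exact hinc σ (psU_subset hT P hσ)
  · rintro σ ⟨s, hs⟩ τ hτ
    exact ⟨s, hτ.trans hs⟩

lemma psU_sacks {T : Set (List ℕ)} (hT : IsTree T) (hinc : ∀ σ ∈ T, IncSeq σ)
    (P : PSys T) : IsSacks (psU P) := by
  refine ⟨psU_tree hT hinc P, ?_⟩
  rintro σ ⟨s, hs⟩
  exact ⟨P.g s, hs, psU_mem P s, P.v s false, P.v s true, P.vne s,
    psU_succ_mem P s false, psU_succ_mem P s true⟩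

/-- common suffix / meet structure of two binary strings -/
lemma suffix_meet : ∀ s t : List Bool, s <:+ t ∨ t <:+ s ∨
    ∃ w b, (b :: w) <:+ s ∧ ((!b) :: w) <:+ t := by
  intro s
  induction s with
  | nil => exact fun t => .inl (List.nil_suffix)
  | cons a s' ih =>
    intro t
    by_cases h : a :: s' <:+ t
    · exact .inl h
    · rcases ih t with h' | h' | ⟨w, b, h1, h2⟩
      · -- s' <:+ t, but not a :: s' <:+ t
        obtain ⟨u, rfl⟩ := h'
        rcases List.eq_nil_or_concat u with rfl | ⟨u', c, rfl⟩
        · exact .inr (.inl ⟨[a], by simp⟩)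
        · refine .inr (.inr ⟨s', a, List.suffix_refl _, ?_⟩)
          have hca : c ≠ a := by
            rintro rfl
            exact h ⟨u', by simp⟩
          have hc : c = !a := by
            cases a <;> cases c <;> simp_all
          exact ⟨u', by simp [hc]⟩
      · exact .inr (.inl (h'.trans (List.suffix_cons a s')))
      · exact .inr (.inr ⟨w, b, h1.trans (List.suffix_cons a s'), h2⟩)

lemma psU_vne' {T : Set (List ℕ)} (P : PSys T) (w : List Bool) (b : Bool) :
    P.v w b ≠ P.v w (!b) := by
  cases b
  · simpa using P.vne w
  · simpa using (P.vne w).symm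

lemma psU_divergent {T : Set (List ℕ)} (P : PSys T) {s t w : List Bool} {b : Bool}
    (h1 : (b :: w) <:+ s) (h2 : ((!b) :: w) <:+ t) :
    dvg (P.g s) (P.g t) = (P.g w).length ∧ ¬ Comp (P.g s) (P.g t) := by
  have e1 : P.g w ++ [P.v w b] <+: P.g s := (P.ext w b).trans (psU_mono P h1)
  have e2 : P.g w ++ [P.v w (!b)] <+: P.g t := (P.ext w (!b)).trans (psU_mono P h2)
  obtain ⟨hd, hc, _, _⟩ := dvg_of_append e1 e2 (psU_vne' P w b)
  exact ⟨hd, hc⟩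

/-- splitting nodes of `psU P` are exactly the `P.g w` -/
lemma psU_split_char {T : Set (List ℕ)} (P : PSys T) {σ : List ℕ}
    (h : IsSplit (psU P) σ) : ∃ w, σ = P.g w := by
  obtain ⟨hσ, a, b, hab, ⟨s₁, ha⟩, ⟨s₂, hb⟩⟩ := h
  rcases suffix_meet s₁ s₂ with h' | h' | ⟨w, c, h1, h2⟩
  · exfalso
    have h3 : σ ++ [a] <+: P.g s₂ := ha.trans (psU_mono P h')
    have heq : σ ++ [a] = σ ++ [b] := eq_of_comp_length (comp_of_prefix h3 hb) (by simp)
    simp at heq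
    exact hab heq
  · exfalso
    have h3 : σ ++ [b] <+: P.g s₁ := hb.trans (psU_mono P h')
    have heq : σ ++ [a] = σ ++ [b] := eq_of_comp_length (comp_of_prefix ha h3) (by simp)
    simp at heq
    exact hab heq
  · obtain ⟨hd, hc⟩ := psU_divergent P h1 h2
    obtain ⟨hd', _, _, _⟩ := dvg_of_append ha hb hab
    refine ⟨w, ?_⟩
    have p1 : σ = (P.g s₁).take σ.length :=
      List.prefix_iff_eq_take.1 ((σ.prefix_append [a]).trans ha)
    have p2 : P.g w = (P.g s₁).take (P.g w).length :=
      List.prefix_iff_eq_take.1 (psU_mono P ((List.suffix_cons c w).trans h1))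
    rw [p1, p2, ← hd, hd']

/-- Lemma F: from a set of splits dense in all nice subtrees, extract a subtree
all of whose splits lie in the set. -/
lemma exists_subtree_splits_in {S T : Set (List ℕ)} (hT : Nice S T) (X : Set (List ℕ))
    (hdense : ∀ V, Nice S V → V ⊆ T → ∃ ρ, IsSplit V ρ ∧ ρ ∈ X) :
    ∃ U, Nice S U ∧ U ⊆ T ∧ ∀ ρ, IsSplit U ρ → ρ ∈ X := by
  classical
  have hstep : ∀ y ∈ T, ∃ ρ, (y <+: ρ ∧ ρ ∈ X) ∧
      ∃ m n, m ≠ n ∧ ρ ++ [m] ∈ T ∧ ρ ++ [n] ∈ T := by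
    intro y hy
    obtain ⟨ρ, hsp, hX⟩ := hdense (loc T y) (loc_nice hT hy) (loc_subset T y)
    have hroot : y <+: ρ := rooted_split (rooted_loc hT hy) hsp
    obtain ⟨hρ, m, n, hmn, hm, hn⟩ := hsp
    exact ⟨ρ, ⟨hroot, hX⟩, m, n, hmn, (loc_subset T y) hm, (loc_subset T y) hn⟩
  -- the packs
  let Pack := {p : List ℕ × ℕ × ℕ // p.1 ∈ X ∧ p.2.1 ≠ p.2.2 ∧
    p.1 ++ [p.2.1] ∈ T ∧ p.1 ++ [p.2.2] ∈ T}
  have base : Pack := by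
    have h := hstep [] (tree_nil_mem hT.1.1)
    exact ⟨(h.choose, h.choose_spec.2.choose, h.choose_spec.2.choose_spec.choose),
      h.choose_spec.1.2, h.choose_spec.2.choose_spec.choose_spec.1,
      h.choose_spec.2.choose_spec.choose_spec.2.1,
      h.choose_spec.2.choose_spec.choose_spec.2.2⟩
  have stepfun : ∀ (b : Bool) (p : Pack),
      {q : Pack // p.val.1 ++ [if b then p.val.2.2 else p.val.2.1] <+: q.val.1} := by
    intro b p
    obtain ⟨hX', hne, hm, hn⟩ := p.property
    have hy : p.val.1 ++ [if b then p.val.2.2 else p.val.2.1] ∈ T := by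
      cases b
      · simpa using hm
      · simpa using hn
    have h := hstep _ hy
    exact ⟨⟨((h.choose), h.choose_spec.2.choose, h.choose_spec.2.choose_spec.choose),
      h.choose_spec.1.2, h.choose_spec.2.choose_spec.choose_spec.1,
      h.choose_spec.2.choose_spec.choose_spec.2.1,
      h.choose_spec.2.choose_spec.choose_spec.2.2⟩, h.choose_spec.1.1⟩
  let FRec : List Bool → Pack := fun s =>
    List.rec base (fun b _ ih => (stepfun b ih).val) s
  have FRec_cons : ∀ b s, FRec (b :: s) = (stepfun b (FRec s)).val := fun _ _ => rfl
  let P : PSys T := {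
    g := fun s => (FRec s).val.1
    v := fun s b => if b then (FRec s).val.2.2 else (FRec s).val.2.1
    mem := fun s => tree_mem_of_prefix hT.1.1 (FRec s).property.2.2.1
      ((((FRec s).val.1).prefix_append _))
    vne := by
      intro s
      simpa using (FRec s).property.2.1
    ext := fun s b => (stepfun b (FRec s)).property
  }
  refine ⟨psU P, ⟨psU_sacks hT.1.1 hT.1.1.2.1 P, (psU_subset hT.1.1 P).trans hT.2⟩,
    psU_subset hT.1.1 P, ?_⟩
  intro ρ hρ
  obtain ⟨w, rfl⟩ := psU_split_char P hρ
  exact (FRec w).property.1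


/-! ### the fusion state -/

/-- the target color for a pair of incomparable nodes -/
noncomputable def tgt (i j : ℕ) (x y : List ℕ) : ℕ :=
  if x.getD (dvg x y) 0 < y.getD (dvg x y) 0 then i else j

lemma tgt_ext {i j : ℕ} {x y x' y' : List ℕ} (hc : ¬ Comp x y) (hx : x <+: x')
    (hy : y <+: y') : tgt i j x' y' = tgt i j x y := by
  obtain ⟨hd, _, hv1, hv2⟩ := dvg_ext hc hx hy
  rw [tgt, tgt, hd, hv1, hv2]

lemma tgt_append_lt {i j : ℕ} {p x y : List ℕ} {a b : ℕ} (ha : p ++ [a] <+: x)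
    (hb : p ++ [b] <+: y) (hab : a < b) : tgt i j x y = i := by
  obtain ⟨hd, _, hv1, hv2⟩ := dvg_of_append ha hb (by omega)
  rw [tgt, hd, hv1, hv2, if_pos hab]

lemma tgt_append_gt {i j : ℕ} {p x y : List ℕ} {a b : ℕ} (ha : p ++ [a] <+: x)
    (hb : p ++ [b] <+: y) (hab : b < a) : tgt i j x y = j := by
  obtain ⟨hd, _, hv1, hv2⟩ := dvg_of_append ha hb (by omega)
  rw [tgt, hd, hv1, hv2, if_neg (by omega)]

lemma dvg_comm {x y : List ℕ} (hc : ¬ Comp x y) : dvg y x = dvg x y := by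
  obtain ⟨h1, h2, h3⟩ := dvg_spec hc
  exact dvg_unique (dvg_take x y).symm h2 h1 (fun h => h3 h.symm)

lemma comp_refl (x : List ℕ) : Comp x x := .inl (List.prefix_refl x)

lemma ne_of_not_comp {x y : List ℕ} (h : ¬ Comp x y) : x ≠ y := by
  rintro rfl; exact h (comp_refl x)

/-- helper: choose componentwise -/
lemma forall₂_of_forall_exists {α β : Type*} {P : α → β → Prop} :
    ∀ (l : List α), (∀ a ∈ l, ∃ b, P a b) → ∃ l', List.Forall₂ P l l' := by
  intro l
  induction l with
  | nil => exact fun _ => ⟨[], List.Forall₂.nil⟩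
  | cons a l ih =>
    intro h
    obtain ⟨l', hl'⟩ := ih (fun x hx => h x (List.mem_cons_of_mem a hx))
    obtain ⟨b, hb⟩ := h a (List.mem_cons_self)
    exact ⟨b :: l', List.Forall₂.cons hb hl'⟩

lemma forall₂_mem_left {α β : Type*} {P : α → β → Prop} {l : List α} {l' : List β}
    (h : List.Forall₂ P l l') {a : α} (ha : a ∈ l) : ∃ b ∈ l', P a b := by
  induction h with
  | nil => simp at ha
  | cons hab _ ih =>
    rcases List.mem_cons.1 ha with rfl | ha
    · exact ⟨_, List.mem_cons_self, hab⟩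
    · obtain ⟨b, hb1, hb2⟩ := ih ha
      exact ⟨b, List.mem_cons_of_mem _ hb1, hb2⟩

lemma forall₂_mem_right {α β : Type*} {P : α → β → Prop} {l : List α} {l' : List β}
    (h : List.Forall₂ P l l') {b : β} (hb : b ∈ l') : ∃ a ∈ l, P a b := by
  induction h with
  | nil => simp at hb
  | cons hab _ ih =>
    rcases List.mem_cons.1 hb with rfl | hb
    · exact ⟨_, List.mem_cons_self, hab⟩
    · obtain ⟨a, ha1, ha2⟩ := ih hb
      exact ⟨a, List.mem_cons_of_mem _ ha1, ha2⟩

lemma forall₂_getElem? {α β : Type*} {P : α → β → Prop} {l : List α} {l' : List β}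
    (h : List.Forall₂ P l l') : ∀ {n : ℕ} {a : α}, l[n]? = some a →
      ∃ b, l'[n]? = some b ∧ P a b := by
  induction h with
  | nil => intro n a ha; simp at ha
  | cons hab hrest ih =>
    intro n a ha
    cases n with
    | zero => simp at ha; exact ⟨_, by simp, ha ▸ hab⟩
    | succ n => simp at ha ⊢; exact ih ha

lemma pairwise_transfer {α : Type*} {P D D' : α → α → Prop} {l l' : List α}
    (h : List.Forall₂ P l l') (hp : List.Pairwise D l)
    (htr : ∀ a b a' b', a ∈ l → b ∈ l → P a a' → P b b' → D a b → D' a' b') :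
    List.Pairwise D' l' := by
  induction h with
  | nil => exact List.Pairwise.nil
  | @cons a a' l₀ l₀' hab hrest ih =>
    rw [List.pairwise_cons] at hp
    refine List.Pairwise.cons ?_ (ih hp.2 (fun x y x' y' hx hy hxy hxy' hd =>
      htr x y x' y' (List.mem_cons_of_mem _ hx) (List.mem_cons_of_mem _ hy) hxy hxy' hd))
    intro b' hb'
    obtain ⟨b, hb1, hb2⟩ := forall₂_mem_right hrest hb'
    exact htr a b a' b' (List.mem_cons_self) (List.mem_cons_of_mem _ hb1) hab hb2
      (hp.1 b hb1)

/-- the fusion state -/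
structure St where
  l : List (List ℕ × Set (List ℕ))
  sp : List (List ℕ × ℕ × ℕ)
  L : ℕ

/-- pairwise relation in a state -/
def PairRel (S : Set (List ℕ)) (k : ℕ) (R : ℕ → Set (List ℕ × List ℕ)) (i j : ℕ)
    (sp : List (List ℕ × ℕ × ℕ)) (p q : List ℕ × Set (List ℕ)) : Prop :=
  p.1 ≠ q.1 ∧
  Pers S k R p.2 q.2 (tgt i j p.1 q.1) ∧ Pers S k R q.2 p.2 (tgt i j q.1 p.1) ∧
  ∃ r ∈ sp, r.1 = p.1.take (dvg p.1 q.1) ∧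
    ((r.2.1 = p.1.getD (dvg p.1 q.1) 0 ∧ r.2.2 = q.1.getD (dvg p.1 q.1) 0) ∨
     (r.2.1 = q.1.getD (dvg p.1 q.1) 0 ∧ r.2.2 = p.1.getD (dvg p.1 q.1) 0))

structure StOK (S : Set (List ℕ)) (k : ℕ) (R : ℕ → Set (List ℕ × List ℕ))
    (i j : ℕ) (st : St) : Prop where
  ne : st.l ≠ []
  len : ∀ p ∈ st.l, (p : List ℕ × Set (List ℕ)).1.length = st.L
  rooted : ∀ p ∈ st.l, Rooted S (p : List ℕ × Set (List ℕ)).1 p.2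
  gs : ∀ p ∈ st.l, GS S k R i j (p : List ℕ × Set (List ℕ)).2
  pw : st.l.Pairwise (PairRel S k R i j st.sp)
  spwf : ∀ r ∈ st.sp, (r : List ℕ × ℕ × ℕ).2.1 < r.2.2 ∧ r.1.length < st.L ∧
    (∃ p ∈ st.l, r.1 ++ [r.2.1] <+: (p : List ℕ × Set (List ℕ)).1) ∧
    (∃ p ∈ st.l, r.1 ++ [r.2.2] <+: (p : List ℕ × Set (List ℕ)).1)
  h5 : ∀ r ∈ st.sp, ∀ p ∈ st.l, ∀ x : ℕ,
    (r : List ℕ × ℕ × ℕ).1 ++ [x] <+: (p : List ℕ × Set (List ℕ)).1 →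
      x = r.2.1 ∨ x = r.2.2
  h6 : ∀ r ∈ st.sp, ∀ p ∈ st.l, ¬ Comp (r : List ℕ × ℕ × ℕ).1 (p : List ℕ × Set (List ℕ)).1 →
    col k R r.1 (p.1.take r.1.length) = tgt i j r.1 p.1

def TransP (st st' : St) : Prop :=
  ∃ e₀ T₀ rest ρ v₀ v₁ A B rest',
    st.l = (e₀, T₀) :: rest ∧
    st'.l = rest' ++ [(ρ ++ [v₀], A), (ρ ++ [v₁], B)] ∧
    st'.sp = (ρ, v₀, v₁) :: st.sp ∧
    st'.L = ρ.length + 1 ∧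
    e₀ <+: ρ ∧
    List.Forall₂ (fun p p' : List ℕ × Set (List ℕ) => p.1 <+: p'.1) rest rest'


set_option maxHeartbeats 1000000 in
lemma stage {S : Set (List ℕ)} {k : ℕ} {R : ℕ → Set (List ℕ × List ℕ)} {i j : ℕ}
    (st : St) (h : StOK S k R i j st) :
    ∃ st', StOK S k R i j st' ∧ TransP st st' := by
  classical
  rcases hl : st.l with _ | ⟨⟨e₀, T₀⟩, rest⟩
  · exact absurd hl h.ne
  have hmem₀ : (e₀, T₀) ∈ st.l := by rw [hl]; exact List.mem_cons_self
  have hrest_mem : ∀ p ∈ rest, p ∈ st.l := fun p hp => by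
    rw [hl]; exact List.mem_cons_of_mem _ hp
  have hroot₀ := h.rooted _ hmem₀
  have hlen₀ : e₀.length = st.L := h.len _ hmem₀
  have hpw' := h.pw
  rw [hl, List.pairwise_cons] at hpw'
  obtain ⟨hheadrel, hpwrest⟩ := hpw'
  -- Step 1: construct U
  have hUex : ∀ rest₀ : List (List ℕ × Set (List ℕ)), (∀ p ∈ rest₀, p ∈ rest) →
      ∃ U, Nice S U ∧ U ⊆ T₀ ∧ ∀ ρ, IsSplit U ρ →
        ∀ p ∈ rest₀, ∃ τ ∈ p.2, τ.length = ρ.length ∧ col k R ρ τ = tgt i j e₀ p.1 := by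
    intro rest₀
    induction rest₀ with
    | nil => exact fun _ => ⟨T₀, hroot₀.1, subset_rfl,
        fun _ _ p hp => absurd hp List.not_mem_nil⟩
    | cons p rest₀ ih =>
      intro hsubm
      obtain ⟨U', hU'nice, hU'sub, hU'prop⟩ := ih (fun q hq => hsubm q (List.mem_cons_of_mem _ hq))
      have hp : p ∈ rest := hsubm p (List.mem_cons_self)
      have hpers : Pers S k R T₀ p.2 (tgt i j e₀ p.1) := (hheadrel p hp).2.1
      have hdense : ∀ V, Nice S V → V ⊆ U' → ∃ ρ', IsSplit V ρ' ∧ ρ' ∈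
          {x | ∃ τ ∈ p.2, τ.length = x.length ∧ col k R x τ = tgt i j e₀ p.1} := by
        intro V hV hVsub
        obtain ⟨ρ', τ, h1, h2, h3, h4⟩ := hpers V hV (hVsub.trans hU'sub) p.2
          (h.rooted p (hrest_mem p hp)).1 subset_rfl
        exact ⟨ρ', h1, τ, h2, h3, h4⟩
      obtain ⟨U, hUnice, hUsub, hUX⟩ := exists_subtree_splits_in hU'nice _ hdense
      refine ⟨U, hUnice, hUsub.trans hU'sub, ?_⟩
      intro ρ' hρ' q hq
      rcases List.mem_cons.1 hq with rfl | hq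
      · exact hUX ρ' hρ'
      · exact hU'prop ρ' (split_mono hUsub hρ') q hq
  obtain ⟨U, hUnice, hUsub, hUprop⟩ := hUex rest (fun p hp => hp)
  -- Step 2: good split of U
  obtain ⟨ρ, v₀, v₁, A, B, hρ0U, hρ1U, hv01, hAnice, hAsub, hBnice, hBsub, hPAB, hPBA⟩ :=
    h.gs _ hmem₀ U hUnice hUsub
  have hρU : ρ ∈ U := tree_mem_of_prefix hUnice.1.1 hρ0U (ρ.prefix_append [v₀])
  have hsplitU : IsSplit U ρ := ⟨hρU, v₀, v₁, by omega, hρ0U, hρ1U⟩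
  have he₀ρ : e₀ <+: ρ := rooted_split hroot₀ (split_mono hUsub hsplitU)
  have hLe : st.L ≤ ρ.length := by
    have h1 := he₀ρ.length_le; omega
  have memA : ρ ++ [v₀] ∈ A := rooted_root_mem hAnice.1 (fun x hx => loc_comp (hAsub hx))
  have memB : ρ ++ [v₁] ∈ B := rooted_root_mem hBnice.1 (fun x hx => loc_comp (hBsub hx))
  have hArooted : Rooted S (ρ ++ [v₀]) A := ⟨hAnice, memA, fun x hx => loc_comp (hAsub hx)⟩
  have hBrooted : Rooted S (ρ ++ [v₁]) B := ⟨hBnice, memB, fun x hx => loc_comp (hBsub hx)⟩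
  have hAsubT₀ : A ⊆ T₀ := hAsub.trans ((loc_subset _ _).trans hUsub)
  have hBsubT₀ : B ⊆ T₀ := hBsub.trans ((loc_subset _ _).trans hUsub)
  have he₀c : ∀ v : ℕ, e₀ <+: ρ ++ [v] := fun v => he₀ρ.trans (ρ.prefix_append [v])
  -- Step 3: extend the other ends
  have hrex : ∀ p ∈ rest, ∃ p' : List ℕ × Set (List ℕ),
      p.1 <+: p'.1 ∧ p'.1.length = ρ.length + 1 ∧ Rooted S p'.1 p'.2 ∧ p'.2 ⊆ p.2 ∧
      GS S k R i j p'.2 ∧ p'.1.take ρ.length ∈ p.2 ∧ p.1 <+: p'.1.take ρ.length ∧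
      col k R ρ (p'.1.take ρ.length) = tgt i j e₀ p.1 := by
    intro p hp
    obtain ⟨τ, hτ2, hτlen, hτcol⟩ := hUprop ρ hsplitU p hp
    have hproot := h.rooted p (hrest_mem p hp)
    have hplen : p.1.length = st.L := h.len p (hrest_mem p hp)
    have hτp1 : p.1 <+: τ := by
      rcases hproot.2.2 τ hτ2 with hc | hc
      · have hle := hc.length_le
        have heq : τ = p.1 := hc.eq_of_length (by omega)
        rw [heq]
      · exact hc
    obtain ⟨y, hy2, hyext, hylen⟩ := sacks_step hproot.1.1 hτ2
    have hytake : y.take ρ.length = τ := by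
      have h1 : y.take ρ.length = τ.take ρ.length := take_eq_of_prefix hyext (by omega)
      rw [h1, List.take_of_length_le (by omega)]
    refine ⟨(y, loc p.2 y), hτp1.trans hyext, by simp; omega,
      rooted_loc hproot.1 hy2, loc_subset _ _,
      GS_mono (h.gs p (hrest_mem p hp)) (loc_subset _ _), ?_, ?_, ?_⟩
    · rw [hytake]; exact hτ2
    · rw [hytake]; exact hτp1
    · rw [hytake]; exact hτcol
  obtain ⟨rest', hF⟩ := forall₂_of_forall_exists rest hrex
  -- the new state
  refine ⟨⟨rest' ++ [(ρ ++ [v₀], A), (ρ ++ [v₁], B)], (ρ, v₀, v₁) :: st.sp, ρ.length + 1⟩,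
    ?_, ⟨e₀, T₀, rest, ρ, v₀, v₁, A, B, rest', hl, rfl, rfl, rfl, he₀ρ,
      List.Forall₂.imp (fun _ _ hab => hab.1) hF⟩⟩

  have hmemcase : ∀ q ∈ (rest' ++ [(ρ ++ [v₀], A), (ρ ++ [v₁], B)] : List (List ℕ × Set (List ℕ))),
      q ∈ rest' ∨ q = (ρ ++ [v₀], A) ∨ q = (ρ ++ [v₁], B) := by
    intro q hq
    rcases List.mem_append.1 hq with h' | h'
    · exact .inl h'
    · right; simpa using h'
  have hqfacts : ∀ q ∈ rest', ∃ p ∈ rest,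
      p.1 <+: q.1 ∧ q.1.length = ρ.length + 1 ∧ Rooted S q.1 q.2 ∧ q.2 ⊆ p.2 ∧
      GS S k R i j q.2 ∧ q.1.take ρ.length ∈ p.2 ∧ p.1 <+: q.1.take ρ.length ∧
      col k R ρ (q.1.take ρ.length) = tgt i j e₀ p.1 := fun q hq => forall₂_mem_right hF hq
  have hplen' : ∀ p ∈ rest, p.1.length = st.L := fun p hp => h.len p (hrest_mem p hp)
  have hnce : ∀ p ∈ rest, ¬ Comp e₀ p.1 := fun p hp =>
    not_comp_of_ne (by rw [hlen₀, hplen' p hp]) (hheadrel p hp).1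
  have hncpq : ∀ p ∈ rest, ∀ q ∈ rest, p.1 ≠ q.1 → ¬ Comp p.1 q.1 := fun p hp q hq hne =>
    not_comp_of_ne (by rw [hplen' p hp, hplen' q hq]) hne
  -- no element of rest' passes through ρ
  have hnotρ : ∀ q ∈ rest', ¬ ρ <+: q.1 := by
    intro q hq hρq
    obtain ⟨p, hp, _, hqlen, _, _, _, _, hptake, _⟩ := hqfacts q hq
    have h1 : ρ = q.1.take ρ.length := List.prefix_iff_eq_take.1 hρq
    rw [← h1] at hptake
    exact hnce p hp (comp_of_prefix he₀ρ hptake)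
  constructor
  case ne => simp
  case len =>
    intro q hq
    rcases hmemcase q hq with h' | h' | h'
    · exact (hqfacts q h').choose_spec.2.2.1
    · rw [h']; simp
    · rw [h']; simp
  case rooted =>
    intro q hq
    rcases hmemcase q hq with h' | h' | h'
    · exact (hqfacts q h').choose_spec.2.2.2.1
    · rw [h']; exact hArooted
    · rw [h']; exact hBrooted
  case gs =>
    intro q hq
    rcases hmemcase q hq with h' | h' | h'
    · exact (hqfacts q h').choose_spec.2.2.2.2.2.1
    · rw [h']; exact GS_mono (h.gs _ hmem₀) hAsubT₀
    · rw [h']; exact GS_mono (h.gs _ hmem₀) hBsubT₀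
  case spwf =>
    intro r hr
    rcases List.mem_cons.1 hr with rfl | hrold
    · refine ⟨hv01, by simp, ⟨(ρ ++ [v₀], A), by simp, by simp⟩,
        ⟨(ρ ++ [v₁], B), by simp, by simp⟩⟩
    · obtain ⟨ho1, ho2, ⟨p₁, hp₁, hpre₁⟩, ⟨p₂, hp₂, hpre₂⟩⟩ := h.spwf r hrold
      have hext : ∀ p ∈ st.l, ∃ q ∈ (rest' ++ [(ρ ++ [v₀], A), (ρ ++ [v₁], B)] :
          List (List ℕ × Set (List ℕ))), p.1 <+: q.1 := by
        intro p hp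
        rw [hl] at hp
        rcases List.mem_cons.1 hp with rfl | hp
        · exact ⟨(ρ ++ [v₀], A), by simp, he₀c v₀⟩
        · obtain ⟨q, hq1, hq2⟩ := forall₂_mem_left hF hp
          exact ⟨q, List.mem_append_left _ hq1, hq2.1⟩
      obtain ⟨q₁, hq₁, hq₁p⟩ := hext p₁ hp₁
      obtain ⟨q₂, hq₂, hq₂p⟩ := hext p₂ hp₂
      exact ⟨ho1, by simp; omega, ⟨q₁, hq₁, hpre₁.trans hq₁p⟩, ⟨q₂, hq₂, hpre₂.trans hq₂p⟩⟩
  case h5 =>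
    intro r hr q hq x hx
    rcases List.mem_cons.1 hr with rfl | hrold
    · simp only at hx ⊢
      rcases hmemcase q hq with h' | h' | h'
      · exact absurd ((ρ.prefix_append [x]).trans hx) (hnotρ q h')
      · rw [h'] at hx
        have heq : ρ ++ [x] = ρ ++ [v₀] := hx.eq_of_length (by simp)
        simp at heq; exact .inl heq
      · rw [h'] at hx
        have heq : ρ ++ [x] = ρ ++ [v₁] := hx.eq_of_length (by simp)
        simp at heq; exact .inr heq
    · obtain ⟨ho1, ho2, _, _⟩ := h.spwf r hrold
      have conegen : ∀ v : ℕ, r.1 ++ [x] <+: ρ ++ [v] → x = r.2.1 ∨ x = r.2.2 := by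
        intro v hxv
        have hxe : r.1 ++ [x] <+: e₀ :=
          List.prefix_of_prefix_length_le hxv (he₀c v) (by simp; omega)
        exact h.h5 r hrold (e₀, T₀) hmem₀ x hxe
      rcases hmemcase q hq with h' | h' | h'
      · obtain ⟨p, hp, hpq, hqlen, _, _, _, _, _⟩ := hqfacts q h'
        have hplen : p.1.length = st.L := hplen' p hp
        have hxp : r.1 ++ [x] <+: p.1 :=
          List.prefix_of_prefix_length_le hx hpq (by simp; omega)
        exact h.h5 r hrold p (hrest_mem p hp) x hxp
      · subst h'; exact conegen v₀ hx
      · subst h'; exact conegen v₁ hx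
  case h6 =>
    intro r hr q hq hcomp
    rcases List.mem_cons.1 hr with rfl | hrold
    · simp only at hcomp ⊢
      rcases hmemcase q hq with h' | h' | h'
      · obtain ⟨p, hp, hpq, hqlen, _, _, _, _, hptake, hcol⟩ := hqfacts q h'
        have htgt : tgt i j ρ q.1 = tgt i j e₀ p.1 := tgt_ext (hnce p hp) he₀ρ hpq
        rw [htgt]
        exact hcol
      · subst h'; exact absurd (.inl (ρ.prefix_append [v₀])) hcomp
      · subst h'; exact absurd (.inl (ρ.prefix_append [v₁])) hcomp
    · obtain ⟨ho1, ho2, _, _⟩ := h.spwf r hrold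
      have conegen : ∀ v : ℕ, ¬ Comp r.1 (ρ ++ [v]) →
          col k R r.1 ((ρ ++ [v]).take r.1.length) = tgt i j r.1 (ρ ++ [v]) := by
        intro v hcomp'
        have hnc₀ : ¬ Comp r.1 e₀ := by
          intro hc
          rcases hc with hc | hc
          · exact hcomp' (.inl (hc.trans (he₀c v)))
          · have := hc.length_le; omega
        have htake : (ρ ++ [v]).take r.1.length = e₀.take r.1.length :=
          take_eq_of_prefix (he₀c v) (by omega)
        have htgt : tgt i j r.1 (ρ ++ [v]) = tgt i j r.1 e₀ :=
          tgt_ext hnc₀ (List.prefix_refl _) (he₀c v)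
        rw [htake, htgt]
        exact h.h6 r hrold (e₀, T₀) hmem₀ hnc₀
      rcases hmemcase q hq with h' | h' | h'
      · obtain ⟨p, hp, hpq, hqlen, _, _, _, _, _⟩ := hqfacts q h'
        have hplen : p.1.length = st.L := hplen' p hp
        have hncr : ¬ Comp r.1 p.1 := by
          intro hc
          rcases hc with hc | hc
          · exact hcomp (.inl (hc.trans hpq))
          · have := hc.length_le; omega
        have htake : q.1.take r.1.length = p.1.take r.1.length :=
          take_eq_of_prefix hpq (by omega)
        have htgt : tgt i j r.1 q.1 = tgt i j r.1 p.1 :=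
          tgt_ext hncr (List.prefix_refl _) hpq
        rw [htake, htgt]
        exact h.h6 r hrold p (hrest_mem p hp) hncr
      · subst h'; exact conegen v₀ hcomp
      · subst h'; exact conegen v₁ hcomp
  case pw =>
    rw [List.pairwise_append]
    refine ⟨?_, ?_, ?_⟩
    · refine pairwise_transfer hF hpwrest ?_
      intro a b a' b' ha hb hba hbb hd
      obtain ⟨haext, halen, _, hasub, _, _, _, _⟩ := hba
      obtain ⟨hbext, hblen, _, hbsub, _, _, _, _⟩ := hbb
      obtain ⟨hne, hpab, hpba, r, hrmem, hrtake, hrvals⟩ := hd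
      have hnc : ¬ Comp a.1 b.1 := hncpq a ha b hb hne
      have hncb : ¬ Comp b.1 a.1 := fun hc => hnc hc.symm
      obtain ⟨hdg, hnc', hva, hvb⟩ := dvg_ext hnc haext hbext
      obtain ⟨hlt1, hlt2, _⟩ := dvg_spec hnc
      refine ⟨ne_of_not_comp hnc', ?_, ?_, r, List.mem_cons_of_mem _ hrmem, ?_, ?_⟩
      · rw [tgt_ext hnc haext hbext]; exact Pers_mono hpab hasub hbsub
      · rw [tgt_ext hncb hbext haext]; exact Pers_mono hpba hbsub hasub
      · rw [hdg, take_eq_of_prefix haext (le_of_lt hlt1)]; exact hrtake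
      · rw [hdg, hva, hvb]; exact hrvals
    · have htgt01 : tgt i j (ρ ++ [v₀]) (ρ ++ [v₁]) = i :=
        tgt_append_lt (List.prefix_refl _) (List.prefix_refl _) hv01
      have htgt10 : tgt i j (ρ ++ [v₁]) (ρ ++ [v₀]) = j :=
        tgt_append_gt (List.prefix_refl _) (List.prefix_refl _) hv01
      obtain ⟨hdg01, hnc01, hva01, hvb01⟩ := dvg_of_append (List.prefix_refl (ρ ++ [v₀]))
        (List.prefix_refl (ρ ++ [v₁])) (show v₀ ≠ v₁ by omega)
      refine List.pairwise_cons.2 ⟨?_, List.pairwise_singleton _ _⟩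
      intro c hc
      simp only [List.mem_singleton] at hc
      subst hc
      refine ⟨?_, ?_, ?_, (ρ, v₀, v₁), List.mem_cons_self, ?_, ?_⟩
      · simp only
        intro heq
        have := List.append_inj_right heq (by rfl)
        simp at this; omega
      · simp only
        rw [htgt01]; exact hPAB
      · simp only
        rw [htgt10]; exact hPBA
      · simp only
        rw [hdg01, take_eq_of_prefix (ρ.prefix_append [v₀]) (le_refl _), List.take_length]
      · simp only
        rw [hdg01, hva01, hvb01]
        exact .inl ⟨rfl, rfl⟩
    · intro q' hq' c hc
      obtain ⟨p, hp, hpext, hqlen, hqroot, hqsub, hqgs, htkmem, hptake, hcol⟩ := hqfacts q' hq'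
      have hnc : ¬ Comp e₀ p.1 := hnce p hp
      have hncp : ¬ Comp p.1 e₀ := fun hcc => hnc hcc.symm
      have hplen := hplen' p hp
      obtain ⟨hrel1, hrel2, hrel3, r, hrmem, hrtake, hrvals⟩ := hheadrel p hp
      obtain ⟨hdlt1, hdlt2, _⟩ := dvg_spec hnc
      have hdcomm : dvg p.1 e₀ = dvg e₀ p.1 := dvg_comm hnc
      have crossgen : ∀ (v : ℕ) (C : Set (List ℕ)), C ⊆ T₀ →
          PairRel S k R i j ((ρ, v₀, v₁) :: st.sp) q' (ρ ++ [v], C) := by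
        intro v C hCsub
        obtain ⟨hdq, hncq, hvp, hve⟩ := dvg_ext hncp hpext (he₀c v)
        refine ⟨ne_of_not_comp hncq, ?_, ?_, r, List.mem_cons_of_mem _ hrmem, ?_, ?_⟩
        · show Pers S k R q'.2 C _
          rw [tgt_ext hncp hpext (he₀c v)]
          exact Pers_mono hrel3 hqsub hCsub
        · show Pers S k R C q'.2 _
          rw [tgt_ext hnc (he₀c v) hpext]
          exact Pers_mono hrel2 hCsub hqsub
        · show r.1 = q'.1.take (dvg q'.1 (ρ ++ [v]))
          rw [hdq, hdcomm, take_eq_of_prefix hpext (le_of_lt hdlt2), ← dvg_take]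
          exact hrtake
        · show _ ∨ _
          rw [show dvg q'.1 (ρ ++ [v], C).1 = dvg p.1 e₀ from hdq]
          rw [hvp, hve, hdcomm]
          rcases hrvals with ⟨h1, h2⟩ | ⟨h1, h2⟩
          · exact .inr ⟨h1, h2⟩
          · exact .inl ⟨h1, h2⟩
      simp only [List.mem_cons, List.mem_singleton, List.not_mem_nil, or_false] at hc
      rcases hc with hc | hc
      · subst hc; exact crossgen v₀ A hAsubT₀
      · subst hc; exact crossgen v₁ B hBsubT₀


/-! ### the global construction -/

theorem main_theorem
    (S : Set (List ℕ)) (hS : IsSacks S) (k : ℕ)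
    (R : ℕ → Set (List ℕ × List ℕ))
    (hcover : ∀ ρ ∈ S, ∀ τ ∈ S, ρ.length = τ.length → ∃ i < k, (ρ, τ) ∈ R i) :
    ∃ S' i j, i < k ∧ j < k ∧ IsSacks S' ∧ S' ⊆ S ∧
      ∀ σ, IsSplit S' σ → ∃ n₀ n₁ : ℕ, n₀ < n₁ ∧ succs S' σ = {n₀, n₁} ∧
        (∀ ρ τ, (σ ++ [n₀]) <+: ρ → IsSplit S' ρ → (σ ++ [n₁]) <+: τ → τ ∈ S' →
          ρ.length = τ.length → (ρ, τ) ∈ R i) ∧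
        (∀ ρ τ, (σ ++ [n₁]) <+: ρ → IsSplit S' ρ → (σ ++ [n₀]) <+: τ → τ ∈ S' →
          ρ.length = τ.length → (ρ, τ) ∈ R j) := by
  classical
  obtain ⟨i, j, T₀, hi, hj, hT₀nice, hGS⟩ := exists_GS hS hcover
  -- the initial state
  have h₀ : StOK S k R i j ⟨[(([] : List ℕ), T₀)], [], 0⟩ := by
    constructor
    case ne => simp
    case len => intro p hp; simp at hp; rw [hp]; rfl
    case rooted =>
      intro p hp; simp at hp; rw [hp]
      exact ⟨hT₀nice, tree_nil_mem hT₀nice.1.1, fun x _ => .inr List.nil_prefix⟩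
    case gs => intro p hp; simp at hp; rw [hp]; exact hGS
    case pw => exact List.pairwise_singleton _ _
    case spwf => intro r hr; simp at hr
    case h5 => intro r hr; simp at hr
    case h6 => intro r hr; simp at hr
  -- the sequence of states
  let F : {st : St // StOK S k R i j st} → {st : St // StOK S k R i j st} := fun p =>
    ⟨(stage p.1 p.2).choose, (stage p.1 p.2).choose_spec.1⟩
  let seq : ℕ → {st : St // StOK S k R i j st} := fun n =>
    Nat.rec ⟨⟨[(([] : List ℕ), T₀)], [], 0⟩, h₀⟩ (fun _ p => F p) n
  have htr : ∀ n, TransP (seq n).1 (seq (n+1)).1 :=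
    fun n => (stage (seq n).1 (seq n).2).choose_spec.2
  -- the tree S'
  set S' : Set (List ℕ) := {σ | ∃ n, ∃ p ∈ (seq n).1.l, σ <+: p.1} with hS'def
  have hendS : ∀ n, ∀ p ∈ (seq n).1.l, (p : List ℕ × Set (List ℕ)).1 ∈ S := fun n p hp =>
    ((seq n).2.rooted p hp).1.2 ((seq n).2.rooted p hp).2.1
  have hS'S : S' ⊆ S := by
    rintro σ ⟨n, p, hp, hpre⟩
    exact tree_mem_of_prefix hS.1 (hendS n p hp) hpre
  have hS'mem : ∀ n, ∀ p ∈ (seq n).1.l, (p : List ℕ × Set (List ℕ)).1 ∈ S' :=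
    fun n p hp => ⟨n, p, hp, List.prefix_refl _⟩
  -- sp is monotone
  have hsp_mono : ∀ n m, n ≤ m → ∀ r ∈ (seq n).1.sp, r ∈ (seq m).1.sp := by
    intro n m hnm
    induction m with
    | zero => intro r hr; have : n = 0 := by omega
              subst this; exact hr
    | succ m ih =>
      intro r hr
      rcases Nat.lt_or_ge n (m+1) with h' | h'
      · have hr' : r ∈ (seq m).1.sp := ih (by omega) r hr
        obtain ⟨e₀, T₀', rest, ρ, v₀, v₁, A, B, rest', h1, h2, h3, h4, h5, h6⟩ := htr m
        rw [h3]
        exact List.mem_cons_of_mem _ hr'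
      · have : n = m + 1 := by omega
        subst this; exact hr
  -- ends extend
  have hext1 : ∀ n, ∀ p ∈ (seq n).1.l, ∃ q ∈ (seq (n+1)).1.l,
      (p : List ℕ × Set (List ℕ)).1 <+: (q : List ℕ × Set (List ℕ)).1 := by
    intro n p hp
    obtain ⟨e₀, T₀', rest, ρ, v₀, v₁, A, B, rest', h1, h2, h3, h4, h5, h6⟩ := htr n
    rw [h1] at hp
    rcases List.mem_cons.1 hp with rfl | hp
    · exact ⟨(ρ ++ [v₀], A), by rw [h2]; simp, h5.trans (ρ.prefix_append [v₀])⟩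
    · obtain ⟨q, hq, hqp⟩ := forall₂_mem_left h6 hp
      exact ⟨q, by rw [h2]; exact List.mem_append_left _ hq, hqp⟩
  have hextm : ∀ n m, n ≤ m → ∀ p ∈ (seq n).1.l, ∃ q ∈ (seq m).1.l,
      (p : List ℕ × Set (List ℕ)).1 <+: (q : List ℕ × Set (List ℕ)).1 := by
    intro n m hnm
    induction m with
    | zero => intro p hp; have : n = 0 := by omega
              subst this; exact ⟨p, hp, List.prefix_refl _⟩
    | succ m ih =>
      intro p hp
      rcases Nat.lt_or_ge n (m+1) with h' | h'
      · obtain ⟨q, hq, hqp⟩ := ih (by omega) p hp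
        obtain ⟨q', hq', hq'p⟩ := hext1 m q hq
        exact ⟨q', hq', hqp.trans hq'p⟩
      · have : n = m + 1 := by omega
        subst this; exact ⟨p, hp, List.prefix_refl _⟩
  -- fairness: every end eventually reaches the head and is split
  have hfair : ∀ q : ℕ, ∀ n, ∀ p : List ℕ × Set (List ℕ), (seq n).1.l[q]? = some p →
      ∃ m r, r ∈ (seq m).1.sp ∧ p.1 <+: (r : List ℕ × ℕ × ℕ).1 := by
    intro q
    induction q with
    | zero =>
      intro n p hp
      obtain ⟨e₀, T₀', rest, ρ, v₀, v₁, A, B, rest', h1, h2, h3, h4, h5, h6⟩ := htr n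
      rw [h1] at hp
      simp at hp
      refine ⟨n+1, (ρ, v₀, v₁), by rw [h3]; exact List.mem_cons_self, ?_⟩
      rw [← hp]
      exact h5
    | succ q ih =>
      intro n p hp
      obtain ⟨e₀, T₀', rest, ρ, v₀, v₁, A, B, rest', h1, h2, h3, h4, h5, h6⟩ := htr n
      rw [h1] at hp
      have hp' : rest[q]? = some p := by simpa using hp
      obtain ⟨b, hb, hbp⟩ := forall₂_getElem? h6 hp'
      have hlenq : q < rest'.length := by
        have h7 := h6.length_eq
        have h8 : q < rest.length := by
          by_contra hcon
          rw [List.getElem?_eq_none (by omega)] at hp'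
          simp at hp'
        omega
      have hb' : (seq (n+1)).1.l[q]? = some b := by
        rw [h2, List.getElem?_append, if_pos hlenq]
        exact hb
      obtain ⟨m, r, hr1, hr2⟩ := ih (n+1) b hb'
      exact ⟨m, r, hr1, hbp.trans hr2⟩
  -- recorded splits are splits of S'
  have hrec_split : ∀ m r, r ∈ (seq m).1.sp →
      IsSplit S' (r : List ℕ × ℕ × ℕ).1 ∧
      (r.1 ++ [r.2.1]) ∈ S' ∧ (r.1 ++ [r.2.2]) ∈ S' ∧ r.2.1 < r.2.2 := by
    intro m r hr
    obtain ⟨ho1, ho2, ⟨p₁, hp₁, hpre₁⟩, ⟨p₂, hp₂, hpre₂⟩⟩ := (seq m).2.spwf r hr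
    have hm1 : r.1 ++ [r.2.1] ∈ S' := ⟨m, p₁, hp₁, hpre₁⟩
    have hm2 : r.1 ++ [r.2.2] ∈ S' := ⟨m, p₂, hp₂, hpre₂⟩
    have hm0 : r.1 ∈ S' := ⟨m, p₁, hp₁, (r.1.prefix_append [r.2.1]).trans hpre₁⟩
    exact ⟨⟨hm0, r.2.1, r.2.2, by omega, hm1, hm2⟩, hm1, hm2, ho1⟩
  -- S' is a Sacks tree
  have htree : IsTree S' := by
    refine ⟨⟨[], 0, (([] : List ℕ), T₀), ?_, List.nil_prefix⟩, fun σ hσ => hS.1.2.1 σ (hS'S hσ), ?_⟩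
    · show (([] : List ℕ), T₀) ∈ (seq 0).1.l
      exact List.mem_cons_self
    · rintro σ ⟨n, p, hp, hpre⟩ τ hτ
      exact ⟨n, p, hp, hτ.trans hpre⟩
  have hsacks : IsSacks S' := by
    refine ⟨htree, ?_⟩
    rintro σ ⟨n, p, hp, hpre⟩
    obtain ⟨q, hq⟩ := List.mem_iff_getElem?.1 hp
    obtain ⟨m, r, hr1, hr2⟩ := hfair q n p hq
    exact ⟨r.1, hpre.trans hr2, (hrec_split m r hr1).1⟩
  -- characterization of splits of S'
  have hchar : ∀ σ, IsSplit S' σ → ∃ N r, r ∈ (seq N).1.sp ∧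
      (r : List ℕ × ℕ × ℕ).1 = σ ∧ r.2.1 < r.2.2 := by
    intro σ hσ
    obtain ⟨hσS', a, b, hab, ⟨n₁, p₁, hp₁, hpre₁⟩, ⟨n₂, p₂, hp₂, hpre₂⟩⟩ := hσ
    obtain ⟨f₁, hf₁, hf₁p⟩ := hextm n₁ (max n₁ n₂) (le_max_left _ _) p₁ hp₁
    obtain ⟨f₂, hf₂, hf₂p⟩ := hextm n₂ (max n₁ n₂) (le_max_right _ _) p₂ hp₂
    have ha' : σ ++ [a] <+: f₁.1 := hpre₁.trans hf₁p
    have hb' : σ ++ [b] <+: f₂.1 := hpre₂.trans hf₂p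
    obtain ⟨hdg, hnc, hva, hvb⟩ := dvg_of_append ha' hb' hab
    have hne : f₁ ≠ f₂ := by
      rintro rfl
      exact hnc (comp_refl _)
    have hσf₁ : σ <+: f₁.1 := (σ.prefix_append [a]).trans ha'
    have hσf₂ : σ <+: f₂.1 := (σ.prefix_append [b]).trans hb'
    have hpw := (seq (max n₁ n₂)).2.pw
    set D := PairRel S k R i j (seq (max n₁ n₂)).1.sp with hD
    have hsym : List.Pairwise (fun p q => D p q ∨ D q p) ((seq (max n₁ n₂)).1.l) :=
      hpw.imp (fun h => .inl h)
    have hrel := by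
      haveI : Std.Symm (fun p q => D p q ∨ D q p) := ⟨fun x y h => h.elim .inr .inl⟩
      exact List.Pairwise.forall hsym hf₁ hf₂ hne
    rcases hrel with hrel | hrel
    · obtain ⟨_, _, _, r, hr, hrtake, _⟩ := hrel
      refine ⟨max n₁ n₂, r, hr, ?_, ((seq (max n₁ n₂)).2.spwf r hr).1⟩
      rw [hrtake, hdg]
      exact (List.prefix_iff_eq_take.1 hσf₁).symm
    · obtain ⟨_, _, _, r, hr, hrtake, _⟩ := hrel
      refine ⟨max n₁ n₂, r, hr, ?_, ((seq (max n₁ n₂)).2.spwf r hr).1⟩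
      have hnc' : ¬ Comp f₂.1 f₁.1 := fun hc => hnc hc.symm
      have hdg' : dvg f₂.1 f₁.1 = σ.length := by
        rw [dvg_comm hnc, hdg]
      rw [hrtake, hdg']
      exact (List.prefix_iff_eq_take.1 hσf₂).symm
  -- succs of recorded splits
  have hsuccs : ∀ N r, r ∈ (seq N).1.sp →
      succs S' (r : List ℕ × ℕ × ℕ).1 = {r.2.1, r.2.2} := by
    intro N r hr
    ext x
    constructor
    · rintro ⟨n₃, p, hp, hpre⟩
      obtain ⟨f, hf, hfp⟩ := hextm n₃ (max N n₃) (le_max_right _ _) p hp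
      have hrM : r ∈ (seq (max N n₃)).1.sp := hsp_mono N _ (le_max_left _ _) r hr
      have := (seq (max N n₃)).2.h5 r hrM f hf x (hpre.trans hfp)
      simpa using this
    · intro hx
      obtain ⟨_, _, ⟨p₁, hp₁, hpre₁⟩, ⟨p₂, hp₂, hpre₂⟩⟩ := (seq N).2.spwf r hr
      rcases hx with rfl | hx
      · exact ⟨N, p₁, hp₁, hpre₁⟩
      · simp at hx
        subst hx
        exact ⟨N, p₂, hp₂, hpre₂⟩
  -- the color machine
  have hcolmach : ∀ (σ : List ℕ) (a b : ℕ), a ≠ b → ∀ ρ τ, (σ ++ [a]) <+: ρ → IsSplit S' ρ →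
      (σ ++ [b]) <+: τ → τ ∈ S' → ρ.length = τ.length →
      col k R ρ τ = tgt i j ρ τ ∧ (ρ, τ) ∈ R (col k R ρ τ) ∧ col k R ρ τ < k := by
    intro σ a b hab ρ τ hρpre hρsplit hτpre hτS' hlen
    obtain ⟨N₂, r₂, hr₂, hr₂eq, _⟩ := hchar ρ hρsplit
    obtain ⟨n₄, p, hp, hppre⟩ := hτS'
    have hτS'2 : τ ∈ S' := ⟨n₄, p, hp, hppre⟩
    obtain ⟨f, hf, hfp⟩ := hextm n₄ (max N₂ n₄) (le_max_right _ _) p hp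
    have hr₂M : r₂ ∈ (seq (max N₂ n₄)).1.sp := hsp_mono N₂ _ (le_max_left _ _) r₂ hr₂
    have hτf : τ <+: f.1 := hppre.trans hfp
    have hρ' : σ ++ [a] <+: r₂.1 := by rw [hr₂eq]; exact hρpre
    have hτ' : σ ++ [b] <+: f.1 := hτpre.trans hτf
    obtain ⟨hdg, hnc, _, _⟩ := dvg_of_append hρ' hτ' hab
    have h6 := (seq (max N₂ n₄)).2.h6 r₂ hr₂M f hf hnc
    have htgt : tgt i j r₂.1 f.1 = tgt i j ρ τ := by
      obtain ⟨hdg2, hnc2, _, _⟩ := dvg_of_append hρpre hτpre hab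
      have e1 : ρ <+: r₂.1 := by rw [hr₂eq]
      exact (tgt_ext hnc2 e1 hτf)
    have htake : f.1.take r₂.1.length = τ := by
      rw [hr₂eq]
      have hτlen : τ.length = ρ.length := hlen.symm
      have h1 : f.1.take ρ.length = τ.take ρ.length := take_eq_of_prefix hτf (by omega)
      rw [h1, List.take_of_length_le (by omega)]
    rw [htake, htgt, hr₂eq] at h6
    have hmem : ∃ i', i' < k ∧ (ρ, τ) ∈ R i' := by
      obtain ⟨i', hi1, hi2⟩ := hcover ρ (hS'S hρsplit.1) τ (hS'S hτS'2) hlen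
      exact ⟨i', hi1, hi2⟩
    obtain ⟨hclt, hcmem⟩ := col_lt_mem hmem
    exact ⟨h6, hcmem, hclt⟩
  -- conclusion
  refine ⟨S', i, j, hi, hj, hsacks, hS'S, ?_⟩
  intro σ hσsplit
  obtain ⟨N, r, hrN, hreq, hrlt⟩ := hchar σ hσsplit
  refine ⟨r.2.1, r.2.2, hrlt, by rw [← hreq]; exact hsuccs N r hrN, ?_, ?_⟩
  · intro ρ τ hρpre hρsplit hτpre hτS' hlen
    obtain ⟨hcoltgt, hcolmem, _⟩ := hcolmach σ r.2.1 r.2.2 (by omega) ρ τ hρpre hρsplit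
      hτpre hτS' hlen
    have htgt : tgt i j ρ τ = i := by
      obtain ⟨n₄, p, hp, hppre⟩ := hτS'
      exact tgt_append_lt hρpre hτpre hrlt
    rwa [hcoltgt, htgt] at hcolmem
  · intro ρ τ hρpre hρsplit hτpre hτS' hlen
    obtain ⟨hcoltgt, hcolmem, _⟩ := hcolmach σ r.2.2 r.2.1 (by omega) ρ τ hρpre hρsplit
      hτpre hτS' hlen
    have htgt : tgt i j ρ τ = j := tgt_append_gt hρpre hτpre hrlt
    rwa [hcoltgt, htgt] at hcolmem

end STT

/-- **Lemma 2.** Let `S` be a Sacks tree and `R 0, …, R (k-1)` pairwise disjoint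
relations whose union is exactly the set of pairs of equal-length nodes of `S`.
Then there are a Sacks tree `S' ⊆ S` in which every splitting node has exactly two
immediate successors, and `⟨i,j⟩ ∈ k × k`, such that every splitting node of `S'`
is of type `⟨i,j⟩` in `S'`. -/
theorem sacks_typed_subtree
    (S : Set (List ℕ)) (hS : IsSacks S) (k : ℕ)
    (R : ℕ → Set (List ℕ × List ℕ))
    (hdisj : ∀ i < k, ∀ j < k, i ≠ j → Disjoint (R i) (R j))
    (hsub : ∀ i < k, ∀ p ∈ R i, p.1 ∈ S ∧ p.2 ∈ S ∧ p.1.length = p.2.length)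
    (hcover : ∀ ρ ∈ S, ∀ τ ∈ S, ρ.length = τ.length → ∃ i < k, (ρ, τ) ∈ R i) :
    ∃ S' i j, i < k ∧ j < k ∧ IsSacks S' ∧ S' ⊆ S ∧
      ∀ σ, IsSplit S' σ → ∃ n₀ n₁ : ℕ, n₀ < n₁ ∧ succs S' σ = {n₀, n₁} ∧
        (∀ ρ τ, (σ ++ [n₀]) <+: ρ → IsSplit S' ρ → (σ ++ [n₁]) <+: τ → τ ∈ S' →
          ρ.length = τ.length → (ρ, τ) ∈ R i) ∧
        (∀ ρ τ, (σ ++ [n₁]) <+: ρ → IsSplit S' ρ → (σ ++ [n₀]) <+: τ → τ ∈ S' →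
          ρ.length = τ.length → (ρ, τ) ∈ R j) := by
  exact STT.main_theorem S hS k R hcover
end

section
/- Every Miller tree M contains a cherry subtree: there is a family Σ = ⟨σ_s : s ∈ 2^{<ω}⟩ of nodes of M satisfying the cherry tree conditions (I)–(III), so that the cherry tree C(Σ) is a subtree of M. -/
/-- The initial segment of `f : ℕ → Bool` of length `n`, as an element of `2^{<ω}`. -/
def restr (f : ℕ → Bool) (n : ℕ) : List Bool := (List.range n).map f

/-- `φ = ⋃_n σfam (f↾n)`: `φ` extends every member of the chain
`⟨σfam (f↾n) : n ∈ ω⟩`. -/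
def IsUnionOf (σfam : List Bool → List ℕ) (f : ℕ → Bool) (φ : ℕ → ℕ) : Prop :=
  ∀ n k, k < (σfam (restr f n)).length → φ k = (σfam (restr f n)).getD k 0

/-- The family `⟨σ_s : s ∈ 2^{<ω}⟩` determines a cherry tree; conditions (I)–(III). -/
def IsCherrySystem (σfam : List Bool → List ℕ) : Prop :=
  (∀ s, IncSeq (σfam s)) ∧
  -- (I)
  (∀ s t : List Bool, s <+: t → s ≠ t → σfam s <+: σfam t ∧ σfam s ≠ σfam t) ∧
  -- (II)
  (∀ s : List Bool,
    (σfam (s ++ [false])).getD (σfam s).length 0 <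
      (σfam (s ++ [true])).getD (σfam s).length 0) ∧
  -- (III)
  (∀ (s : List Bool) (f₀ f₁ : ℕ → Bool) (φ₀ φ₁ : ℕ → ℕ),
    restr f₀ (s.length + 1) = s ++ [false] →
    restr f₁ (s.length + 1) = s ++ [true] →
    IsUnionOf σfam f₀ φ₀ → IsUnionOf σfam f₁ φ₁ →
    ∀ n : ℕ,
      φ₀ ((σfam (restr f₀ (s.length + 2 * n))).length) <
        φ₁ ((σfam (restr f₀ (s.length + 2 * n))).length) ∧
      φ₀ ((σfam (restr f₀ (s.length + 2 * n + 1))).length) >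
        φ₁ ((σfam (restr f₀ (s.length + 2 * n + 1))).length) ∧
      φ₁ ((σfam (restr f₁ (s.length + 2 * n))).length) >
        φ₀ ((σfam (restr f₁ (s.length + 2 * n))).length) ∧
      φ₁ ((σfam (restr f₁ (s.length + 2 * n + 1))).length) <
        φ₀ ((σfam (restr f₁ (s.length + 2 * n + 1))).length))

/-- The cherry tree `C(Σ)`: the closure of `{σ_s : s ∈ 2^{<ω}}` under initial
segments. -/
def cherryTree (σfam : List Bool → List ℕ) : Set (List ℕ) :=
  {ρ | ∃ t, ρ <+: σfam t}

namespace MillerCherry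

/-! ### Binary encoding with twisted order -/

def bval : List Bool → ℕ
  | [] => 0
  | b :: l => b.toNat + 2 * bval l

def twp : Bool → List Bool → List Bool
  | _, [] => []
  | p, b :: l => (xor b p) :: twp (!p) l

def key (t : List Bool) : ℕ := bval (twp false t.reverse)

def rank (t : List Bool) : ℕ := 2 ^ t.length + key t

lemma twp_length (p : Bool) (l : List Bool) : (twp p l).length = l.length := by
  induction l generalizing p with
  | nil => rfl
  | cons b l ih => simp [twp, ih]

lemma bval_lt (l : List Bool) : bval l < 2 ^ l.length := by
  induction l with
  | nil => simp [bval]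
  | cons b l ih =>
    simp only [bval, List.length_cons, pow_succ]
    cases b <;> simp <;> omega

def flips (p : Bool) (n : ℕ) : Bool := if Even n then p else !p

lemma flips_succ (p : Bool) (n : ℕ) : flips p (n+1) = flips (!p) n := by
  rcases Nat.even_or_odd n with h | h
  · simp [flips, h, Nat.even_add_one, by simpa using h.add_one]
  · simp [flips, Nat.not_even_iff_odd.2 h, Nat.even_add_one, Nat.not_even_iff_odd.2 h]

lemma twp_append (p : Bool) (x y : List Bool) :
    twp p (x ++ y) = twp p x ++ twp (flips p x.length) y := by
  induction x generalizing p with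
  | nil => simp [twp, flips]
  | cons b x ih =>
    simp only [List.cons_append, twp, List.length_cons, flips_succ]
    rw [ih (!p)]

lemma bval_append (x y : List Bool) :
    bval (x ++ y) = bval x + 2 ^ x.length * bval y := by
  induction x with
  | nil => simp [bval]
  | cons b x ih => simp [bval, ih, pow_succ]; ring

lemma key_decomp (s u : List Bool) (b : Bool) :
    key (s ++ b :: u) =
      bval (twp false u.reverse) +
        2 ^ u.length * ((xor b (flips false u.length)).toNat
          + 2 * bval (twp (!(flips false u.length)) s.reverse)) := by
  have : (s ++ b :: u).reverse = u.reverse ++ b :: s.reverse := by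
    simp
  rw [key, this, twp_append, bval_append, twp_length, List.length_reverse]
  simp [twp, bval]

lemma key_lt_even {s u u' : List Bool} (hlen : u.length = u'.length)
    (he : Even u.length) : key (s ++ false :: u) < key (s ++ true :: u') := by
  rw [key_decomp, key_decomp, hlen]
  have hf : flips false u'.length = false := by simp [flips, hlen ▸ he]
  rw [hf]
  have h1 := bval_lt (twp false u.reverse)
  rw [twp_length, List.length_reverse, hlen] at h1
  simp only [Bool.xor_false]
  simp only [Bool.toNat_false, Bool.toNat_true]
  nlinarith [Nat.two_pow_pos u'.length]

lemma key_lt_odd {s u u' : List Bool} (hlen : u.length = u'.length)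
    (he : ¬ Even u.length) : key (s ++ true :: u') < key (s ++ false :: u) := by
  rw [key_decomp, key_decomp, hlen]
  have hf : flips false u'.length = true := by simp [flips, hlen ▸ he]
  rw [hf]
  have h1 := bval_lt (twp false u'.reverse)
  rw [twp_length, List.length_reverse] at h1
  simp only [Bool.xor_true, Bool.not_false, Bool.not_true, Bool.toNat_false, Bool.toNat_true]
  nlinarith [Nat.two_pow_pos u'.length]

lemma key_lt_pow (t : List Bool) : key t < 2 ^ t.length := by
  have := bval_lt (twp false t.reverse)
  rwa [twp_length, List.length_reverse] at this

lemma rank_lt_of_length_lt {t t' : List Bool} (h : t.length < t'.length) :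
    rank t < rank t' := by
  have h1 : rank t < 2 ^ (t.length + 1) := by
    have := key_lt_pow t; simp [rank, pow_succ]; omega
  have h2 : 2 ^ (t.length + 1) ≤ 2 ^ t'.length := Nat.pow_le_pow_right (by norm_num) h
  have h3 : 2 ^ t'.length ≤ rank t' := Nat.le_add_right _ _
  omega

lemma rank_lt_even {s u u' : List Bool} (hlen : u.length = u'.length)
    (he : Even u.length) : rank (s ++ false :: u) < rank (s ++ true :: u') := by
  have : (s ++ false :: u).length = (s ++ true :: u').length := by simp [hlen]
  simp only [rank, this]
  exact Nat.add_lt_add_left (key_lt_even hlen he) _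

lemma rank_lt_odd {s u u' : List Bool} (hlen : u.length = u'.length)
    (he : ¬ Even u.length) : rank (s ++ true :: u') < rank (s ++ false :: u) := by
  have : (s ++ false :: u).length = (s ++ true :: u').length := by simp [hlen]
  simp only [rank, this]
  exact Nat.add_lt_add_left (key_lt_odd hlen he) _

lemma first_diff : ∀ {t t' : List Bool}, t.length = t'.length → t ≠ t' →
    ∃ s b u u', u.length = u'.length ∧ t = s ++ b :: u ∧ t' = s ++ (!b) :: u' := by
  intro t
  induction t with
  | nil =>
    intro t' h hne
    cases t' with
    | nil => exact absurd rfl hne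
    | cons a l => simp at h
  | cons a t ih =>
    intro t' h hne
    cases t' with
    | nil => simp at h
    | cons a' t₂ =>
      by_cases ha : a = a'
      · subst ha
        have hne2 : t ≠ t₂ := by intro h2; exact hne (by rw [h2])
        obtain ⟨s, b, u, u', h1, h2, h3⟩ := ih (by simpa using h) hne2
        exact ⟨a :: s, b, u, u', h1, by simp [h2], by simp [h3]⟩
      · refine ⟨[], a, t, t₂, by simpa using h, by simp, ?_⟩
        simp only [List.nil_append]
        have : a' = !a := by
          cases a <;> cases a' <;> simp_all
        rw [this]

lemma rank_pos (t : List Bool) : 1 ≤ rank t := by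
  have : 1 ≤ 2 ^ t.length := Nat.one_le_two_pow
  simp [rank]; omega

lemma rank_nil : rank ([] : List Bool) = 1 := by simp [rank, key, twp, bval]

lemma length_lt_of_rank_eq {t t' : List Bool} (h : rank t = rank t') :
    t.length = t'.length := by
  rcases lt_trichotomy t.length t'.length with hl | hl | hl
  · exact absurd h (Nat.ne_of_lt (rank_lt_of_length_lt hl))
  · exact hl
  · exact absurd h.symm (Nat.ne_of_lt (rank_lt_of_length_lt hl))

lemma rank_inj {t t' : List Bool} (h : rank t = rank t') : t = t' := by
  have hl := length_lt_of_rank_eq h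
  by_contra hne
  obtain ⟨s, b, u, u', h1, h2, h3⟩ := first_diff hl hne
  have hk : key t = key t' := by
    simp only [rank, hl] at h; omega
  subst h2; subst h3
  rcases Bool.eq_false_or_eq_true b with hb | hb <;> subst hb
  · rcases Nat.even_or_odd u'.length with he | he
    · exact absurd hk.symm (Nat.ne_of_lt (by simpa using key_lt_even h1.symm he))
    · exact absurd hk
        (Nat.ne_of_lt (by simpa using key_lt_odd h1.symm (Nat.not_even_iff_odd.2 he)))
  · rcases Nat.even_or_odd u.length with he | he
    · exact absurd hk (Nat.ne_of_lt (by simpa using key_lt_even h1 he))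
    · exact absurd hk.symm
        (Nat.ne_of_lt (by simpa using key_lt_odd h1 (Nat.not_even_iff_odd.2 he)))

end MillerCherry
namespace MillerCherry

def bnd (l : List ℕ) : ℕ := l.length + l.sum

lemma entry_le_bnd {x : ℕ} {l : List ℕ} (h : x ∈ l) : x ≤ bnd l :=
  le_trans (List.single_le_sum (fun _ _ => Nat.zero_le _) _ h) (Nat.le_add_left _ _)

lemma length_le_bnd (l : List ℕ) : l.length ≤ bnd l := Nat.le_add_right _ _

variable {M : Set (List ℕ)}

lemma nil_mem (hM : IsMiller M) : ([] : List ℕ) ∈ M := by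
  obtain ⟨σ, hσ⟩ := hM.1.1
  exact hM.1.2.2 σ hσ [] (List.nil_prefix)

lemma exists_gt_of_infinite {s : Set ℕ} (hs : s.Infinite) (B : ℕ) :
    ∃ v ∈ s, B < v := by
  by_contra h
  push_neg at h
  exact hs (Set.Finite.subset (Set.finite_Iic B) (fun x hx => h x hx))

lemma extend_infsplit (hM : IsMiller M) {σ : List ℕ} (hσ : σ ∈ M) (L : ℕ) :
    ∃ τ, σ <+: τ ∧ IsInfSplit M τ ∧ L ≤ τ.length := by
  induction L with
  | zero =>
    obtain ⟨τ, h1, h2⟩ := hM.2 σ hσ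
    exact ⟨τ, h1, h2, Nat.zero_le _⟩
  | succ L ih =>
    obtain ⟨τ, h1, h2, h3⟩ := ih
    obtain ⟨v, hv⟩ := h2.2.nonempty
    obtain ⟨τ', g1, g2⟩ := hM.2 (τ ++ [v]) hv
    refine ⟨τ', h1.trans ((List.prefix_append τ [v]).trans g1), g2, ?_⟩
    have := g1.length_le
    simp at this
    omega

lemma child_exists (hM : IsMiller M) {ρ : List ℕ} (hρ : IsInfSplit M ρ) (B : ℕ) :
    ∃ τ, ρ <+: τ ∧ IsInfSplit M τ ∧ B < τ.length ∧ B < τ.getD ρ.length 0 := by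
  obtain ⟨v, hv, hvB⟩ := exists_gt_of_infinite hρ.2 B
  obtain ⟨τ, h1, h2, h3⟩ := extend_infsplit hM hv (B + 1)
  refine ⟨τ, (List.prefix_append ρ [v]).trans h1, h2, by omega, ?_⟩
  have hlen : ρ.length < (ρ ++ [v]).length := by simp
  obtain ⟨u, rfl⟩ := h1
  rw [List.getD_eq_getElem _ _ (lt_of_lt_of_le hlen (by simp))]
  rw [List.getElem_append_left hlen]
  simpa using hvB

noncomputable def rootNode (hM : IsMiller M) : List ℕ :=
  (hM.2 [] (nil_mem hM)).choose

lemma rootNode_spec (hM : IsMiller M) : IsInfSplit M (rootNode hM) :=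
  (hM.2 [] (nil_mem hM)).choose_spec.2

open Classical in
noncomputable def childChoice (hM : IsMiller M) (ρ : List ℕ) (B : ℕ) : List ℕ :=
  if hρ : IsInfSplit M ρ then (child_exists hM hρ B).choose else []

open Classical in
lemma childChoice_spec (hM : IsMiller M) {ρ : List ℕ} (hρ : IsInfSplit M ρ) (B : ℕ) :
    ρ <+: childChoice hM ρ B ∧ IsInfSplit M (childChoice hM ρ B) ∧
      B < (childChoice hM ρ B).length ∧
      B < (childChoice hM ρ B).getD ρ.length 0 := by
  rw [childChoice, dif_pos hρ]
  exact (child_exists hM hρ B).choose_spec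

open Classical in
noncomputable def build (hM : IsMiller M) (g : ℕ → List ℕ) (r : ℕ) : List ℕ :=
  if h : ∃ t : List Bool, t ≠ [] ∧ rank t = r then
    childChoice hM (g (rank h.choose.dropLast)) ((Finset.range r).sup (fun x => bnd (g x)))
  else if r = 1 then rootNode hM else []

open Classical in
lemma build_congr (hM : IsMiller M) (g g' : ℕ → List ℕ) (r : ℕ)
    (h : ∀ x < r, g x = g' x) : build hM g r = build hM g' r := by
  rw [build, build]
  split
  · rename_i he
    have ht := he.choose_spec
    have hlt : rank he.choose.dropLast < r := by
      have h2 : rank he.choose.dropLast < rank he.choose := by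
        apply rank_lt_of_length_lt
        have := List.length_pos_iff.2 ht.1
        simp only [List.length_dropLast]
        omega
      omega
    rw [h _ hlt]
    congr 1
    apply Finset.sup_congr rfl
    intro x hx
    rw [h x (Finset.mem_range.1 hx)]
  · rfl

noncomputable def Gaux (hM : IsMiller M) : ℕ → ℕ → List ℕ
  | 0, _ => []
  | r + 1, x => if x = r then build hM (Gaux hM r) r else Gaux hM r x

noncomputable def G (hM : IsMiller M) (r : ℕ) : List ℕ := Gaux hM (r + 1) r

lemma Gaux_agree (hM : IsMiller M) : ∀ r x, x < r → Gaux hM r x = G hM x := by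
  intro r
  induction r with
  | zero => intro x hx; omega
  | succ r ih =>
    intro x hx
    rcases Nat.lt_succ_iff_lt_or_eq.1 hx with h | h
    · rw [show Gaux hM (r+1) x = Gaux hM r x by simp [Gaux, Nat.ne_of_lt h], ih x h]
    · subst h; rfl

lemma G_eq (hM : IsMiller M) (r : ℕ) : G hM r = build hM (G hM) r := by
  have : G hM r = build hM (Gaux hM r) r := by simp [G, Gaux]
  rw [this]
  exact build_congr hM _ _ r (fun x hx => Gaux_agree hM r x hx)

noncomputable def Bsup (hM : IsMiller M) (r : ℕ) : ℕ := (Finset.range r).sup (fun x => bnd (G hM x))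

open Classical in
lemma G_spec (hM : IsMiller M) (t : List Bool) (ht : t ≠ [])
    (hρ : IsInfSplit M (G hM (rank t.dropLast))) :
    G hM (rank t.dropLast) <+: G hM (rank t) ∧ IsInfSplit M (G hM (rank t)) ∧
      Bsup hM (rank t) < (G hM (rank t)).length ∧
      Bsup hM (rank t) < (G hM (rank t)).getD (G hM (rank t.dropLast)).length 0 := by
  have he : ∃ t' : List Bool, t' ≠ [] ∧ rank t' = rank t := ⟨t, ht, rfl⟩
  have hch : he.choose = t := rank_inj he.choose_spec.2
  have : G hM (rank t) = childChoice hM (G hM (rank t.dropLast)) (Bsup hM (rank t)) := by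
    rw [G_eq, build, dif_pos he, hch]; rfl
  rw [this]
  exact childChoice_spec hM hρ _

open Classical in
lemma G_infsplit (hM : IsMiller M) : ∀ r, ∀ t : List Bool, rank t = r →
    IsInfSplit M (G hM r) := by
  intro r
  induction r using Nat.strong_induction_on with
  | _ r ih =>
    intro t htr
    cases ht : t with
    | nil =>
      subst ht
      rw [rank_nil] at htr
      subst htr
      have hno : ¬ ∃ t' : List Bool, t' ≠ [] ∧ rank t' = 1 := by
        rintro ⟨t', ht', hr⟩
        have : t' = [] := rank_inj (by rw [hr, rank_nil])
        exact ht' this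
      rw [G_eq, build, dif_neg hno, if_pos rfl]
      exact rootNode_spec hM
    | cons a l =>
      subst ht
      have hne : (a :: l : List Bool) ≠ [] := by simp
      have hlt : rank (a :: l).dropLast < r := by
        rw [← htr]; exact rank_lt_of_length_lt (by simp)
      have hρ := ih _ hlt (a :: l).dropLast rfl
      subst htr
      exact (G_spec hM _ hne hρ).2.1

end MillerCherry
namespace MillerCherry

variable {M : Set (List ℕ)}

noncomputable def σf (hM : IsMiller M) (t : List Bool) : List ℕ := G hM (rank t)

lemma sf_infsplit (hM : IsMiller M) (t : List Bool) : IsInfSplit M (σf hM t) :=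
  G_infsplit hM (rank t) t rfl

lemma sf_mem (hM : IsMiller M) (t : List Bool) : σf hM t ∈ M := (sf_infsplit hM t).1

lemma sf_inc (hM : IsMiller M) (t : List Bool) : IncSeq (σf hM t) :=
  hM.1.2.1 _ (sf_mem hM t)

lemma sf_spec (hM : IsMiller M) (t : List Bool) (ht : t ≠ []) :
    σf hM t.dropLast <+: σf hM t ∧
      Bsup hM (rank t) < (σf hM t).length ∧
      Bsup hM (rank t) < (σf hM t).getD (σf hM t.dropLast).length 0 := by
  have h := G_spec hM t ht (G_infsplit hM _ t.dropLast rfl)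
  exact ⟨h.1, h.2.2.1, h.2.2.2⟩

lemma bnd_le_Bsup (hM : IsMiller M) {t' t : List Bool} (h : rank t' < rank t) :
    bnd (σf hM t') ≤ Bsup hM (rank t) :=
  Finset.le_sup (f := fun x => bnd (G hM x)) (Finset.mem_range.2 h)

lemma sf_len_lt (hM : IsMiller M) {t' t : List Bool} (h : rank t' < rank t)
    (ht : t ≠ []) : (σf hM t').length < (σf hM t).length :=
  lt_of_le_of_lt (le_trans (length_le_bnd _) (bnd_le_Bsup hM h)) (sf_spec hM t ht).2.1

/-- getD of a prefix -/
lemma getD_of_prefix {l₁ l₂ : List ℕ} (h : l₁ <+: l₂) {i : ℕ} (hi : i < l₁.length) :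
    l₂.getD i 0 = l₁.getD i 0 := by
  obtain ⟨u, rfl⟩ := h
  rw [List.getD_eq_getElem _ _ hi, List.getD_eq_getElem _ _ (by simp; omega),
    List.getElem_append_left hi]

lemma inc_getD_lt {l : List ℕ} (h : IncSeq l) {i j : ℕ} (hij : i < j)
    (hj : j < l.length) : l.getD i 0 < l.getD j 0 := by
  rw [List.getD_eq_getElem _ _ (by omega), List.getD_eq_getElem _ _ hj]
  exact List.pairwise_iff_getElem.1 (List.isChain_iff_pairwise.1 h) i j (by omega) hj hij

lemma inc_getD_le {l : List ℕ} (h : IncSeq l) {i j : ℕ} (hij : i ≤ j)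
    (hj : j < l.length) : l.getD i 0 ≤ l.getD j 0 := by
  rcases Nat.lt_or_ge i j with h' | h'
  · exact le_of_lt (inc_getD_lt h h' hj)
  · have : i = j := by omega
    rw [this]

/-- Main comparison: any entry of `σf t'` is below any "new" entry of `σf t`
when `rank t' < rank t`. -/
lemma cmp' (hM : IsMiller M) {t' t : List Bool} (ht : t ≠ [])
    (hr : rank t' < rank t) {i j : ℕ} (hi : i < (σf hM t').length)
    (hj1 : (σf hM t.dropLast).length ≤ j) (hj2 : j < (σf hM t).length) :
    (σf hM t').getD i 0 < (σf hM t).getD j 0 := by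
  have hmem : (σf hM t').getD i 0 ∈ σf hM t' := by
    rw [List.getD_eq_getElem _ _ hi]; exact List.getElem_mem _
  have h1 : (σf hM t').getD i 0 ≤ Bsup hM (rank t) :=
    le_trans (entry_le_bnd hmem) (bnd_le_Bsup hM hr)
  have h2 := (sf_spec hM t ht).2.2
  have h3 : (σf hM t).getD (σf hM t.dropLast).length 0 ≤ (σf hM t).getD j 0 :=
    inc_getD_le (sf_inc hM t) hj1 hj2
  omega

/-- (I): proper prefixes. -/
lemma sf_prefix (hM : IsMiller M) :
    ∀ n (t s : List Bool), s <+: t → t.length ≤ s.length + n →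
      σf hM s <+: σf hM t ∧ (s ≠ t → (σf hM s).length < (σf hM t).length) := by
  intro n
  induction n with
  | zero =>
    intro t s hst hlen
    have : s = t := hst.eq_of_length_le (by omega)
    subst this
    exact ⟨List.prefix_refl _, fun h => absurd rfl h⟩
  | succ n ih =>
    intro t s hst hlen
    by_cases hEq : s = t
    · subst hEq; exact ⟨List.prefix_refl _, fun h => absurd rfl h⟩
    · have ht : t ≠ [] := by
        rintro rfl
        exact hEq (List.prefix_nil.1 hst)
      have hst' : s <+: t.dropLast := by
        obtain ⟨u, rfl⟩ := hst
        have hu : u ≠ [] := by rintro rfl; simp at hEq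
        rw [List.dropLast_append_of_ne_nil hu]
        exact List.prefix_append _ _
      have hlen' : t.dropLast.length ≤ s.length + n := by
        have := List.length_pos_iff.2 ht
        simp only [List.length_dropLast]
        omega
      obtain ⟨hp, _⟩ := ih t.dropLast s hst' hlen'
      have hpar := sf_spec hM t ht
      have hlt : (σf hM t.dropLast).length < (σf hM t).length :=
        sf_len_lt hM (rank_lt_of_length_lt (by
          have := List.length_pos_iff.2 ht
          simp only [List.length_dropLast]; omega)) ht
      refine ⟨hp.trans hpar.1, fun _ => ?_⟩
      exact lt_of_le_of_lt hp.length_le hlt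

lemma sf_prefix' (hM : IsMiller M) {s t : List Bool} (h : s <+: t) :
    σf hM s <+: σf hM t :=
  (sf_prefix hM t.length t s h (by omega)).1

lemma sf_len_lt' (hM : IsMiller M) {s t : List Bool} (h : s <+: t) (hne : s ≠ t) :
    (σf hM s).length < (σf hM t).length :=
  (sf_prefix hM t.length t s h (by omega)).2 hne

/-! ### restr lemmas -/

lemma restr_length (f : ℕ → Bool) (n : ℕ) : (restr f n).length = n := by
  simp [restr]

lemma restr_succ (f : ℕ → Bool) (n : ℕ) : restr f (n + 1) = restr f n ++ [f n] := by
  simp [restr, List.range_succ]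

lemma restr_dropLast (f : ℕ → Bool) (n : ℕ) : (restr f (n + 1)).dropLast = restr f n := by
  rw [restr_succ]
  exact List.dropLast_concat

lemma restr_prefix (f : ℕ → Bool) {a b : ℕ} (h : a ≤ b) :
    ∃ u : List Bool, restr f b = restr f a ++ u ∧ u.length = b - a := by
  obtain ⟨d, rfl⟩ := Nat.exists_eq_add_of_le h
  induction d with
  | zero => exact ⟨[], by simp, by simp⟩
  | succ d ih =>
    obtain ⟨u, hu, hul⟩ := ih (by omega)
    refine ⟨u ++ [f (a + d)], ?_, by simp [hul]⟩
    rw [show a + (d+1) = (a+d)+1 by omega, restr_succ, hu]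
    simp

end MillerCherry
namespace MillerCherry

variable {M : Set (List ℕ)}

lemma restr_ne_nil (f : ℕ → Bool) {m : ℕ} (hm : m ≠ 0) : restr f m ≠ [] := by
  intro h
  have := congrArg List.length h
  simp [restr_length] at this
  exact hm this

lemma sf_restr_step (hM : IsMiller M) (f : ℕ → Bool) (a : ℕ) :
    (σf hM (restr f a)).length < (σf hM (restr f (a + 1))).length := by
  apply sf_len_lt' hM
  · rw [restr_succ]; exact List.prefix_append _ _
  · intro h
    have := congrArg List.length h
    simp [restr_length] at this

lemma rank_restr_lt (f g : ℕ → Bool) {a b : ℕ} (h : a < b) :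
    rank (restr f a) < rank (restr g b) :=
  rank_lt_of_length_lt (by simp [restr_length, h])

end MillerCherry

open MillerCherry in
theorem miller_contains_cherry' (M : Set (List ℕ)) (hM : IsMiller M) :
    ∃ σfam : List Bool → List ℕ, IsCherrySystem σfam ∧ cherryTree σfam ⊆ M := by
  refine ⟨σf hM, ⟨fun s => sf_inc hM s, ?_, ?_, ?_⟩, ?_⟩
  · -- (I)
    intro s t hst hne
    refine ⟨sf_prefix' hM hst, fun h => ?_⟩
    have := sf_len_lt' hM hst hne
    rw [h] at this
    omega
  · -- (II)
    intro s
    have hne0 : s ≠ s ++ [false] := by simp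
    have hne1 : s ≠ s ++ [true] := by simp
    have h1 : (σf hM s).length < (σf hM (s ++ [false])).length :=
      sf_len_lt' hM (List.prefix_append _ _) hne0
    have h2 : (σf hM s).length < (σf hM (s ++ [true])).length :=
      sf_len_lt' hM (List.prefix_append _ _) hne1
    have hr : rank (s ++ false :: ([] : List Bool)) < rank (s ++ true :: ([] : List Bool)) :=
      rank_lt_even rfl (by simp)
    have hd : (s ++ [true]).dropLast = s := List.dropLast_concat
    exact cmp' hM (by simp) hr h1 (by rw [hd]) h2
  · -- (III)
    intro s f₀ f₁ φ₀ φ₁ h0 h1 hu0 hu1 n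
    have dec0 : ∀ m, s.length + 1 ≤ m →
        ∃ u : List Bool, restr f₀ m = s ++ false :: u ∧ u.length = m - s.length - 1 := by
      intro m hm
      obtain ⟨u, hu, hl⟩ := restr_prefix f₀ hm
      exact ⟨u, by rw [hu, h0]; simp, by omega⟩
    have dec1 : ∀ m, s.length + 1 ≤ m →
        ∃ u : List Bool, restr f₁ m = s ++ true :: u ∧ u.length = m - s.length - 1 := by
      intro m hm
      obtain ⟨u, hu, hl⟩ := restr_prefix f₁ hm
      exact ⟨u, by rw [hu, h1]; simp, by omega⟩
    have rank01 : ∀ m, s.length + 1 ≤ m →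
        (Even (m - s.length - 1) → rank (restr f₀ m) < rank (restr f₁ m)) ∧
        (¬Even (m - s.length - 1) → rank (restr f₁ m) < rank (restr f₀ m)) := by
      intro m hm
      obtain ⟨u, hu, hul⟩ := dec0 m hm
      obtain ⟨u', hu', hul'⟩ := dec1 m hm
      constructor
      · intro he
        rw [hu, hu']
        exact rank_lt_even (by omega) (by rw [hul]; exact he)
      · intro he
        rw [hu, hu']
        exact rank_lt_odd (by omega) (by rw [hul]; exact he)
    have hbase : restr f₀ s.length = s ∧ restr f₁ s.length = s := by
      constructor
      · have := restr_succ f₀ s.length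
        rw [h0] at this
        exact (List.append_inj this (restr_length f₀ s.length).symm).1.symm
      · have := restr_succ f₁ s.length
        rw [h1] at this
        exact (List.append_inj this (restr_length f₁ s.length).symm).1.symm
    refine ⟨?_, ?_, ?_, ?_⟩
    · -- ineq 1 : φ₀ ℓ < φ₁ ℓ, ℓ = |σf (restr f₀ (s.length + 2n))|
      set m₀ := s.length + 2 * n with hm₀
      have hT0 : (σf hM (restr f₀ m₀)).length < (σf hM (restr f₀ (m₀ + 1))).length :=
        sf_restr_step hM f₀ m₀
      have hT1 : (σf hM (restr f₀ m₀)).length < (σf hM (restr f₁ (m₀ + 1))).length :=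
        sf_len_lt hM (rank_restr_lt f₀ f₁ (by omega)) (restr_ne_nil f₁ (by omega))
      rw [hu0 (m₀ + 1) _ hT0, hu1 (m₀ + 1) _ hT1]
      have hrT : rank (restr f₀ (m₀ + 1)) < rank (restr f₁ (m₀ + 1)) :=
        (rank01 (m₀ + 1) (by omega)).1 (Nat.even_iff.2 (by omega))
      apply cmp' hM (restr_ne_nil f₁ (by omega)) hrT hT0 _ hT1
      rw [restr_dropLast]
      rcases Nat.eq_zero_or_pos n with hn | hn
      · subst hn
        rw [show m₀ = s.length by omega, hbase.1, hbase.2]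
      · have hA : rank (restr f₁ m₀) < rank (restr f₀ m₀) :=
          (rank01 m₀ (by omega)).2 (Nat.not_even_iff.2 (by omega))
        exact le_of_lt (sf_len_lt hM hA (restr_ne_nil f₀ (by omega)))
    · -- ineq 2 : φ₀ ℓ > φ₁ ℓ, ℓ = |σf (restr f₀ (s.length + 2n + 1))|
      set m₁ := s.length + 2 * n + 1 with hm₁
      have hPA : rank (restr f₀ m₁) < rank (restr f₁ m₁) :=
        (rank01 m₁ (by omega)).1 (Nat.even_iff.2 (by omega))
      have hAlen : (σf hM (restr f₀ m₁)).length < (σf hM (restr f₁ m₁)).length :=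
        sf_len_lt hM hPA (restr_ne_nil f₁ (by omega))
      have hT0 : (σf hM (restr f₀ m₁)).length < (σf hM (restr f₀ (m₁ + 1))).length :=
        sf_restr_step hM f₀ m₁
      rw [hu1 m₁ _ hAlen, hu0 (m₁ + 1) _ hT0]
      apply cmp' hM (restr_ne_nil f₀ (by omega))
        (rank_restr_lt f₁ f₀ (by omega)) hAlen _ hT0
      rw [restr_dropLast]
    · -- ineq 3 : φ₁ ℓ > φ₀ ℓ, ℓ = |σf (restr f₁ (s.length + 2n))|
      set m₀ := s.length + 2 * n with hm₀
      have hT1 : (σf hM (restr f₁ m₀)).length < (σf hM (restr f₁ (m₀ + 1))).length :=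
        sf_restr_step hM f₁ m₀
      have hT0 : (σf hM (restr f₁ m₀)).length < (σf hM (restr f₀ (m₀ + 1))).length :=
        sf_len_lt hM (rank_restr_lt f₁ f₀ (by omega)) (restr_ne_nil f₀ (by omega))
      rw [hu1 (m₀ + 1) _ hT1, hu0 (m₀ + 1) _ hT0]
      have hrT : rank (restr f₀ (m₀ + 1)) < rank (restr f₁ (m₀ + 1)) :=
        (rank01 (m₀ + 1) (by omega)).1 (Nat.even_iff.2 (by omega))
      apply cmp' hM (restr_ne_nil f₁ (by omega)) hrT hT0 _ hT1
      rw [restr_dropLast]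
    · -- ineq 4 : φ₁ ℓ < φ₀ ℓ, ℓ = |σf (restr f₁ (s.length + 2n + 1))|
      set m₁ := s.length + 2 * n + 1 with hm₁
      have hT1 : (σf hM (restr f₁ m₁)).length < (σf hM (restr f₁ (m₁ + 1))).length :=
        sf_restr_step hM f₁ m₁
      have hT0 : (σf hM (restr f₁ m₁)).length < (σf hM (restr f₀ (m₁ + 1))).length :=
        sf_len_lt hM (rank_restr_lt f₁ f₀ (by omega)) (restr_ne_nil f₀ (by omega))
      rw [hu1 (m₁ + 1) _ hT1, hu0 (m₁ + 1) _ hT0]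
      have hrT : rank (restr f₁ (m₁ + 1)) < rank (restr f₀ (m₁ + 1)) :=
        (rank01 (m₁ + 1) (by omega)).2 (Nat.not_even_iff.2 (by omega))
      apply cmp' hM (restr_ne_nil f₀ (by omega)) hrT hT1 _ hT0
      rw [restr_dropLast]
      have hPP : rank (restr f₀ m₁) < rank (restr f₁ m₁) :=
        (rank01 m₁ (by omega)).1 (Nat.even_iff.2 (by omega))
      exact le_of_lt (sf_len_lt hM hPP (restr_ne_nil f₁ (by omega)))
  · -- subset
    rintro ρ ⟨t, hρ⟩
    exact hM.1.2.2 _ (sf_mem hM t) ρ hρ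
/-- **Lemma 3.** Every Miller tree contains a cherry subtree. -/
theorem miller_contains_cherry (M : Set (List ℕ)) (hM : IsMiller M) :
    ∃ σfam : List Bool → List ℕ, IsCherrySystem σfam ∧ cherryTree σfam ⊆ M := by
  exact miller_contains_cherry' M hM
end

section
/- Every Miller tree contains a mango subtree: for every Miller tree N there is a system Σ = ⟨σ_{⟨s,t⟩} : s, t ∈ 2^{<ω}, |s| = |t|⟩ of nodes of N satisfying the mango tree conditions (I)–(III), so that the mango tree M(Σ) is a subtree of N. -/
/-- `φ = ⋃_n σ2 (f↾n) (g↾n)`. -/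
def IsUnionOf2 (σ2 : List Bool → List Bool → List ℕ) (f g : ℕ → Bool) (φ : ℕ → ℕ) :
    Prop :=
  ∀ n k, k < (σ2 (restr f n) (restr g n)).length →
    φ k = (σ2 (restr f n) (restr g n)).getD k 0

/-- The system `⟨σ_{⟨s,t⟩} : s, t ∈ 2^{<ω}, |s| = |t|⟩` determines a mango tree;
conditions (I)–(III). -/
def IsMangoSystem (σ2 : List Bool → List Bool → List ℕ) : Prop :=
  (∀ s t : List Bool, s.length = t.length → IncSeq (σ2 s t)) ∧
  -- (I)
  (∀ s t s' t' : List Bool, s.length = t.length → s'.length = t'.length →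
    s <+: s' → s ≠ s' → t <+: t' → t ≠ t' →
    σ2 s t <+: σ2 s' t' ∧ σ2 s t ≠ σ2 s' t') ∧
  -- (II): every vertical section is a cherry system
  (∀ f : ℕ → Bool, IsCherrySystem (fun t => σ2 (restr f t.length) t)) ∧
  -- (III)
  (∀ (s : List Bool) (f₀ f₁ g₀ g₁ : ℕ → Bool) (φ₀ φ₁ : ℕ → ℕ),
    restr f₀ (s.length + 1) = s ++ [false] →
    restr f₁ (s.length + 1) = s ++ [true] →
    IsUnionOf2 σ2 f₀ g₀ φ₀ → IsUnionOf2 σ2 f₁ g₁ φ₁ →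
    (∀ n : ℕ, n > s.length →
      φ₀ ((σ2 (restr f₀ n) (restr g₀ n)).length) >
        φ₁ ((σ2 (restr f₀ n) (restr g₀ n)).length) ∧
      φ₁ ((σ2 (restr f₁ n) (restr g₁ n)).length) >
        φ₀ ((σ2 (restr f₁ n) (restr g₁ n)).length)) ∧
    φ₁ ((σ2 s (restr g₁ s.length)).length) > φ₀ ((σ2 s (restr g₁ s.length)).length))

/-- The mango tree `M(Σ)`: all initial segments of the `σ_{⟨s,t⟩}`. -/
def mangoTree (σ2 : List Bool → List Bool → List ℕ) : Set (List ℕ) :=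
  {ρ | ∃ s t : List Bool, s.length = t.length ∧ ρ <+: σ2 s t}

/-- The vertical section `M^f = {σ_{⟨f↾i,t⟩}↾n : i, n ∈ ω, t ∈ 2^i}` of a mango
tree. -/
def mangoSection (σ2 : List Bool → List Bool → List ℕ) (f : ℕ → Bool) :
    Set (List ℕ) :=
  {ρ | ∃ t : List Bool, ρ <+: σ2 (restr f t.length) t}

namespace MangoAux

/-! ### Binary values and alternation ranks of bit strings -/

def ebits (l : List Bool) : ℕ := l.foldl (fun n b => 2 * n + b.toNat) 0

lemma ebits_shift (x : List Bool) : ∀ c : ℕ,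
    x.foldl (fun n b => 2 * n + b.toNat) c = c * 2 ^ x.length + ebits x := by
  induction x with
  | nil => intro c; simp [ebits]
  | cons b x ih =>
    intro c
    simp only [List.foldl_cons, List.length_cons, ebits]
    rw [ih, show (2 * 0 + b.toNat) = b.toNat by omega, ih b.toNat]
    ring

lemma ebits_cons (b : Bool) (x : List Bool) :
    ebits (b :: x) = b.toNat * 2 ^ x.length + ebits x := by
  simpa [ebits] using ebits_shift x b.toNat

lemma ebits_append (p q : List Bool) :
    ebits (p ++ q) = ebits p * 2 ^ q.length + ebits q := by
  simp only [ebits, List.foldl_append]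
  exact ebits_shift q _

lemma ebits_lt (l : List Bool) : ebits l < 2 ^ l.length := by
  induction l with
  | nil => simp [ebits]
  | cons b x ih =>
    rw [ebits_cons]
    have hb : b.toNat ≤ 1 := Bool.toNat_le b
    have := Nat.mul_le_mul_right (2 ^ x.length) hb
    simp only [List.length_cons, pow_succ]
    omega

lemma ebits_lex {x y : List Bool} (p : List Bool) (h : x.length = y.length) :
    ebits (p ++ false :: x) < ebits (p ++ true :: y) := by
  rw [ebits_append, ebits_append, ebits_cons, ebits_cons]
  simp only [List.length_cons, h, Bool.toNat_false, Bool.toNat_true]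
  have hx := ebits_lt x
  rw [h] at hx
  omega

def pattern (n : ℕ) : List Bool := (List.range n).map (fun k => decide (k % 2 = n % 2))

def rrank (t : List Bool) : ℕ := ebits (t.zipWith xor (pattern t.length))

lemma pattern_length (n : ℕ) : (pattern n).length = n := by simp [pattern]

lemma rrank_lt (t : List Bool) : rrank t < 2 ^ t.length := by
  have h := ebits_lt (t.zipWith xor (pattern t.length))
  rwa [List.length_zipWith, pattern_length, min_self] at h

lemma pattern_decomp (pl xl : ℕ) :
    pattern (pl + 1 + xl) =
      (List.range pl).map (fun k => decide (k % 2 = (pl + 1 + xl) % 2)) ++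
      (decide (pl % 2 = (pl + 1 + xl) % 2)) ::
      (List.range xl).map (fun j => decide ((pl + 1 + j) % 2 = (pl + 1 + xl) % 2)) := by
  unfold pattern
  rw [List.range_add, List.map_append, List.range_succ, List.map_append]
  simp only [List.map_cons, List.map_nil, List.map_map, List.append_assoc,
    List.singleton_append]
  simp [Function.comp]

lemma rrank_decomp (p x : List Bool) (b : Bool) :
    rrank (p ++ b :: x) =
      ebits ((p.zipWith xor ((List.range p.length).map
          (fun k => decide (k % 2 = (p.length + 1 + x.length) % 2)))) ++
        (xor b (decide (p.length % 2 = (p.length + 1 + x.length) % 2))) ::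
        (x.zipWith xor ((List.range x.length).map
          (fun j => decide ((p.length + 1 + j) % 2 = (p.length + 1 + x.length) % 2))))) := by
  unfold rrank
  have hl : (p ++ b :: x).length = p.length + 1 + x.length := by
    simp [List.length_append]; omega
  rw [hl, pattern_decomp]
  rw [List.zipWith_append (by simp)]
  simp

lemma rrank_flip_false {x y : List Bool} (p : List Bool) (h : x.length = y.length)
    (hc : ¬ (p.length % 2 = (p.length + 1 + x.length) % 2)) :
    rrank (p ++ false :: x) < rrank (p ++ true :: y) := by
  rw [rrank_decomp, rrank_decomp, ← h]
  simp only [decide_eq_false hc, Bool.xor_false]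
  exact ebits_lex _ (by simp [List.length_zipWith, h])

lemma rrank_flip_true {x y : List Bool} (p : List Bool) (h : x.length = y.length)
    (hc : p.length % 2 = (p.length + 1 + x.length) % 2) :
    rrank (p ++ true :: y) < rrank (p ++ false :: x) := by
  rw [rrank_decomp, rrank_decomp, ← h]
  simp only [decide_eq_true hc, Bool.xor_true, Bool.not_false, Bool.not_true]
  exact ebits_lex _ (by simp [List.length_zipWith, h])

/-! ### The global creation order on pairs -/

def start : ℕ → ℕ
  | 0 => 0
  | n + 1 => start n + 4 ^ n

lemma start_mono : Monotone start := by
  apply monotone_nat_of_le_succ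
  intro n
  simp only [start, le_add_iff_nonneg_right]
  positivity

def key (s t : List Bool) : ℕ := start s.length + ebits s * 2 ^ s.length + rrank t

lemma four_pow (n : ℕ) : (4 : ℕ) ^ n = 2 ^ n * 2 ^ n := by
  rw [show (4 : ℕ) = 2 * 2 by norm_num, mul_pow]

lemma key_lt_start {s t : List Bool} (h : t.length = s.length) :
    key s t < start (s.length + 1) := by
  have h1 := ebits_lt s
  have h2 := rrank_lt t
  rw [h] at h2
  unfold key
  rw [show start (s.length + 1) = start s.length + 4 ^ s.length from rfl, four_pow]
  have : ebits s * 2 ^ s.length + 2 ^ s.length ≤ 2 ^ s.length * 2 ^ s.length := by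
    calc ebits s * 2 ^ s.length + 2 ^ s.length = (ebits s + 1) * 2 ^ s.length := by ring
    _ ≤ 2 ^ s.length * 2 ^ s.length := Nat.mul_le_mul_right _ (by omega)
  omega

lemma start_le_key (s t : List Bool) : start s.length ≤ key s t := by
  unfold key; omega

lemma key_lt_of_length {s t u w : List Bool} (hst : t.length = s.length)
    (h : s.length < u.length) : key s t < key u w :=
  lt_of_lt_of_le (key_lt_start hst)
    (le_trans (start_mono h) (start_le_key u w))

lemma key_lt_of_ebits {s t u w : List Bool} (hst : t.length = s.length)
    (hsu : u.length = s.length) (he : ebits s < ebits u) : key s t < key u w := by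
  have h2 := rrank_lt t
  rw [hst] at h2
  unfold key
  rw [hsu]
  have : ebits s * 2 ^ s.length + rrank t < ebits u * 2 ^ s.length := by
    calc ebits s * 2 ^ s.length + rrank t < (ebits s + 1) * 2 ^ s.length := by
          rw [add_mul, one_mul]; omega
    _ ≤ ebits u * 2 ^ s.length := Nat.mul_le_mul_right _ (by omega)
  have h3 : rrank w ≥ 0 := Nat.zero_le _
  omega

lemma key_lt_of_rrank {s t w : List Bool} (h : rrank t < rrank w) :
    key s t < key s w := by unfold key; omega

lemma level_le_of_key_lt {s t u w : List Bool} (hst : t.length = s.length)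
    (h : key u w < key s t) : u.length ≤ s.length := by
  by_contra hc
  push_neg at hc
  have h1 : start (s.length + 1) ≤ start u.length := start_mono hc
  have h2 := key_lt_start hst
  have h3 := start_le_key u w
  omega

lemma key_nil_nil : key [] [] = 0 := by
  simp [key, start, ebits, rrank, pattern]

/-! ### Enumerating pairs -/

def boolLists : ℕ → List (List Bool)
  | 0 => [[]]
  | n + 1 => (boolLists n).flatMap (fun u => [u ++ [false], u ++ [true]])

lemma mem_boolLists (u : List Bool) : u ∈ boolLists u.length := by
  induction u using List.reverseRecOn with
  | nil => simp [boolLists]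
  | append_singleton v b ih =>
    have : (v ++ [b]).length = v.length + 1 := by simp
    rw [this]
    simp only [boolLists, List.mem_flatMap]
    refine ⟨v, ih, ?_⟩
    cases b <;> simp

def allPairs (n : ℕ) : List (List Bool × List Bool) :=
  (List.range (n + 1)).flatMap
    (fun k => (boolLists k).flatMap (fun u => (boolLists k).map (fun w => (u, w))))

lemma mem_allPairs {u w : List Bool} {n : ℕ} (h : w.length = u.length)
    (hn : u.length ≤ n) : (u, w) ∈ allPairs n := by
  simp only [allPairs, List.mem_flatMap, List.mem_range, List.mem_map]
  refine ⟨u.length, by omega, u, mem_boolLists u, w, ?_, rfl⟩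
  have := mem_boolLists w
  rwa [h] at this

/-! ### Max of a list -/

def MX (l : List ℕ) : ℕ := l.length + l.foldr max 0

lemma le_foldr_max {l : List ℕ} {x : ℕ} (h : x ∈ l) : x ≤ l.foldr max 0 := by
  induction l with
  | nil => simp at h
  | cons a l ih =>
    rcases List.mem_cons.1 h with rfl | h
    · exact le_max_left _ _
    · exact le_trans (ih h) (le_max_right _ _)

lemma getD_le_MX (l : List ℕ) (i : ℕ) : l.getD i 0 ≤ MX l := by
  by_cases hi : i < l.length
  · rw [List.getD_eq_getElem l 0 hi]
    exact le_trans (le_foldr_max (l.getElem_mem hi)) (Nat.le_add_left _ _)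
  · rw [List.getD_eq_default l 0 (by omega)]
    exact Nat.zero_le _

lemma length_le_MX (l : List ℕ) : l.length ≤ MX l := Nat.le_add_right _ _

lemma foldr_max_ge {α : Type*} (fv : α → ℕ) {L : List α} {p : α} (hp : p ∈ L) :
    fv p ≤ L.foldr (fun q acc => max (fv q) acc) 0 := by
  induction L with
  | nil => simp at hp
  | cons a L ih =>
    rcases List.mem_cons.1 hp with rfl | hp
    · exact le_max_left _ _
    · exact le_trans (ih hp) (le_max_right _ _)

/-! ### getD monotonicity, prefixes -/

lemma incseq_getD_lt {l : List ℕ} (h : IncSeq l) {i j : ℕ} (hij : i < j)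
    (hj : j < l.length) : l.getD i 0 < l.getD j 0 := by
  have hp : List.Pairwise (· < ·) l := List.isChain_iff_pairwise.1 h
  rw [List.getD_eq_getElem l 0 (lt_trans hij hj), List.getD_eq_getElem l 0 hj]
  exact List.pairwise_iff_getElem.1 hp i j _ _ hij

lemma incseq_getD_le {l : List ℕ} (h : IncSeq l) {i j : ℕ} (hij : i ≤ j)
    (hj : j < l.length) : l.getD i 0 ≤ l.getD j 0 := by
  rcases eq_or_lt_of_le hij with rfl | hlt
  · exact le_refl _
  · exact le_of_lt (incseq_getD_lt h hlt hj)

lemma prefix_getD {l₁ l₂ : List ℕ} (h : l₁ <+: l₂) {i : ℕ} (hi : i < l₁.length) :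
    l₂.getD i 0 = l₁.getD i 0 := by
  rw [List.getD_eq_getElem l₁ 0 hi,
    List.getD_eq_getElem l₂ 0 (lt_of_lt_of_le hi h.length_le)]
  exact (h.getElem hi).symm

lemma prefix_dropLast {l₁ l₂ : List α} (h : l₁ <+: l₂)
    (hl : l₁.length + 1 ≤ l₂.length) : l₁ <+: l₂.dropLast := by
  have h1 : l₁ = l₂.take l₁.length := List.prefix_iff_eq_take.1 h
  rw [List.dropLast_eq_take, List.prefix_iff_eq_take, List.take_take,
    min_eq_left (by omega)]
  exact h1

/-! ### restr facts -/

lemma restr_length (f : ℕ → Bool) (n : ℕ) : (restr f n).length = n := by simp [restr]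

lemma restr_succ (f : ℕ → Bool) (n : ℕ) : restr f (n + 1) = restr f n ++ [f n] := by
  simp [restr, List.range_succ]

lemma restr_dropLast (f : ℕ → Bool) (n : ℕ) : (restr f (n + 1)).dropLast = restr f n := by
  rw [restr_succ, List.dropLast_concat]

lemma restr_split (f : ℕ → Bool) (a d : ℕ) :
    restr f (a + d) = restr f a ++ (List.range d).map (fun j => f (a + j)) := by
  simp [restr, List.range_add, List.map_map, Function.comp]

end MangoAux
namespace MangoAux

/-! ### Miller tree lemmas -/

lemma tree_nil {N : Set (List ℕ)} (hT : IsTree N) : [] ∈ N := by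
  obtain ⟨⟨σ, hσ⟩, _, hcl⟩ := hT
  exact hcl σ hσ [] List.nil_prefix

lemma mem_incseq {N : Set (List ℕ)} (hT : IsTree N) {σ : List ℕ} (h : σ ∈ N) :
    IncSeq σ := hT.2.1 σ h

lemma split_long {N : Set (List ℕ)} (hN : IsMiller N) (L : ℕ) :
    ∀ σ ∈ N, ∃ τ, σ <+: τ ∧ IsInfSplit N τ ∧ L ≤ τ.length := by
  induction L with
  | zero =>
    intro σ hσ
    obtain ⟨τ, h1, h2⟩ := hN.2 σ hσ
    exact ⟨τ, h1, h2, Nat.zero_le _⟩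
  | succ L ih =>
    intro σ hσ
    obtain ⟨τ, h1, h2, h3⟩ := ih σ hσ
    by_cases hc : L + 1 ≤ τ.length
    · exact ⟨τ, h1, h2, hc⟩
    · obtain ⟨m, hm⟩ := h2.2.nonempty
      obtain ⟨τ', k1, k2⟩ := hN.2 _ hm
      refine ⟨τ', h1.trans ((List.prefix_append τ [m]).trans k1), k2, ?_⟩
      have h4 := k1.length_le
      simp only [List.length_append, List.length_singleton] at h4
      omega

lemma step_ex {N : Set (List ℕ)} (hN : IsMiller N) {σ : List ℕ}
    (h : IsInfSplit N σ) (B : ℕ) :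
    ∃ τ, σ <+: τ ∧ IsInfSplit N τ ∧ B < τ.length ∧ σ.length < τ.length ∧
      B < τ.getD σ.length 0 := by
  obtain ⟨m, hm, hmB⟩ := h.2.exists_gt B
  obtain ⟨τ, h1, h2, h3⟩ := split_long hN (B + 1) (σ ++ [m]) hm
  have hlen : σ.length + 1 ≤ τ.length := by
    have := h1.length_le
    simp only [List.length_append, List.length_singleton] at this
    omega
  refine ⟨τ, (List.prefix_append σ [m]).trans h1, h2, by omega, by omega, ?_⟩
  have hg : τ.getD σ.length 0 = (σ ++ [m]).getD σ.length 0 :=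
    prefix_getD h1 (by simp)
  rw [hg, List.getD_eq_getElem _ 0 (by simp)]
  simpa using hmB

lemma root_ex {N : Set (List ℕ)} (hN : IsMiller N) : ∃ τ, IsInfSplit N τ := by
  obtain ⟨τ, _, h⟩ := hN.2 [] (tree_nil hN.1)
  exact ⟨τ, h⟩

/-! ### The construction -/

open Classical in
noncomputable def extNode (N : Set (List ℕ)) (σ : List ℕ) (B : ℕ) : List ℕ :=
  if h : IsMiller N ∧ IsInfSplit N σ then Classical.choose (step_ex h.1 h.2 B) else []

open Classical in
noncomputable def rootNode (N : Set (List ℕ)) : List ℕ :=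
  if h : IsMiller N then Classical.choose (root_ex h) else []

def bnd (g : List Bool → List Bool → List ℕ) (K n : ℕ) : ℕ :=
  (allPairs n).foldr (fun p acc => max (if key p.1 p.2 < K then MX (g p.1 p.2) else 0) acc) 0

noncomputable def Phi (N : Set (List ℕ)) : ℕ → List Bool → List Bool → List ℕ
  | 0, _, _ => []
  | (k + 1), s, t =>
    if key s t = k then
      (if s = [] then rootNode N
       else extNode N (Phi N k s.dropLast t.dropLast) (bnd (Phi N k) (key s t) s.length))
    else Phi N k s t

noncomputable def FF (N : Set (List ℕ)) (s t : List Bool) : List ℕ :=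
  Phi N (key s t + 1) s t

lemma Phi_stable (N : Set (List ℕ)) (s t : List Bool) {k k' : ℕ}
    (h : key s t < k) (hk : k ≤ k') : Phi N k' s t = Phi N k s t := by
  induction k' with
  | zero => omega
  | succ k' ih =>
    rcases Nat.lt_or_ge k (k' + 1) with hlt | hge
    · have hne : key s t ≠ k' := by omega
      have : Phi N (k' + 1) s t = Phi N k' s t := by
        simp only [Phi, if_neg hne]
      rw [this, ih (by omega)]
    · have : k = k' + 1 := by omega
      rw [this]

lemma Phi_eq_FF (N : Set (List ℕ)) (s t : List Bool) {k : ℕ} (h : key s t < k) :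
    Phi N k s t = FF N s t := by
  unfold FF
  rcases Nat.lt_or_ge (key s t + 1) k with h2 | h2
  · exact Phi_stable N s t (by omega) (by omega)
  · have : k = key s t + 1 := by omega
    rw [this]

lemma FF_nil (N : Set (List ℕ)) : FF N [] [] = rootNode N := by
  unfold FF
  rw [key_nil_nil]
  simp [Phi, key_nil_nil]

lemma key_parent_lt {s t : List Bool} (hst : t.length = s.length) (hs : s ≠ []) :
    key s.dropLast t.dropLast < key s t := by
  have h1 : s.dropLast.length = s.length - 1 := by simp
  have h2 : t.dropLast.length = t.length - 1 := by simp
  have hpos : 0 < s.length := List.length_pos_iff.2 hs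
  apply lt_of_lt_of_le (key_lt_start (by omega))
  rw [h1, Nat.sub_add_cancel hpos]
  exact start_le_key s t

lemma FF_eq (N : Set (List ℕ)) {s t : List Bool} (hst : t.length = s.length)
    (hs : s ≠ []) :
    FF N s t = extNode N (FF N s.dropLast t.dropLast)
      (bnd (Phi N (key s t)) (key s t) s.length) := by
  have h : FF N s t = if s = [] then rootNode N
      else extNode N (Phi N (key s t) s.dropLast t.dropLast)
        (bnd (Phi N (key s t)) (key s t) s.length) := by
    unfold FF
    simp only [Phi, if_pos rfl]
    simp
  rw [h, if_neg hs, Phi_eq_FF N _ _ (key_parent_lt hst hs)]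

end MangoAux
namespace MangoAux

variable {N : Set (List ℕ)}

lemma ext_spec (hN : IsMiller N) {σ : List ℕ} (h : IsInfSplit N σ) (B : ℕ) :
    σ <+: extNode N σ B ∧ IsInfSplit N (extNode N σ B) ∧
      B < (extNode N σ B).length ∧ σ.length < (extNode N σ B).length ∧
      B < (extNode N σ B).getD σ.length 0 := by
  unfold extNode
  rw [dif_pos ⟨hN, h⟩]
  exact Classical.choose_spec (step_ex hN h B)

lemma root_spec (hN : IsMiller N) : IsInfSplit N (rootNode N) := by
  unfold rootNode
  rw [dif_pos hN]
  exact Classical.choose_spec (root_ex hN)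

/-- All nodes of the construction are infinite-splitting nodes of `N`. -/
lemma FF_split (hN : IsMiller N) :
    ∀ n (s t : List Bool), s.length = n → t.length = n → IsInfSplit N (FF N s t) := by
  intro n
  induction n with
  | zero =>
    intro s t hs ht
    rw [List.length_eq_zero_iff.1 hs, List.length_eq_zero_iff.1 ht, FF_nil]
    exact root_spec hN
  | succ n ih =>
    intro s t hs ht
    have hne : s ≠ [] := by intro h; rw [h] at hs; simp at hs
    rw [FF_eq N (by omega) hne]
    have hpar : IsInfSplit N (FF N s.dropLast t.dropLast) :=
      ih _ _ (by simp [hs]) (by simp [ht])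
    exact (ext_spec hN hpar _).2.1

lemma FF_mem (hN : IsMiller N) {s t : List Bool} (h : t.length = s.length) :
    FF N s t ∈ N := (FF_split hN s.length s t rfl h).1

lemma FF_incseq (hN : IsMiller N) {s t : List Bool} (h : t.length = s.length) :
    IncSeq (FF N s t) := mem_incseq hN.1 (FF_mem hN h)

/-- The basic extension properties of a constructed node over its parent. -/
lemma FF_spec (hN : IsMiller N) {s t : List Bool} (hst : t.length = s.length)
    (hs : s ≠ []) :
    FF N s.dropLast t.dropLast <+: FF N s t ∧
      bnd (Phi N (key s t)) (key s t) s.length < (FF N s t).length ∧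
      (FF N s.dropLast t.dropLast).length < (FF N s t).length ∧
      bnd (Phi N (key s t)) (key s t) s.length <
        (FF N s t).getD (FF N s.dropLast t.dropLast).length 0 := by
  have hpar : IsInfSplit N (FF N s.dropLast t.dropLast) := by
    apply FF_split hN s.dropLast.length _ _ rfl
    simp [hst]
  have h := ext_spec hN hpar (bnd (Phi N (key s t)) (key s t) s.length)
  rw [← FF_eq N hst hs] at h
  exact ⟨h.1, h.2.2.1, h.2.2.2.1, h.2.2.2.2⟩

/-- Everything about an earlier node is bounded by the `bnd` of a later node. -/
lemma bnd_ge (hN : IsMiller N) {s t u w : List Bool} (hst : t.length = s.length)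
    (huw : w.length = u.length) (hk : key u w < key s t) :
    MX (FF N u w) ≤ bnd (Phi N (key s t)) (key s t) s.length := by
  have hlev : u.length ≤ s.length := level_le_of_key_lt hst hk
  have hmem : (u, w) ∈ allPairs s.length := mem_allPairs huw hlev
  have := foldr_max_ge
    (fun p : List Bool × List Bool =>
      if key p.1 p.2 < key s t then MX (Phi N (key s t) p.1 p.2) else 0) hmem
  simp only [if_pos hk] at this
  rw [Phi_eq_FF N u w hk] at this
  exact this

/-- Lengths strictly increase along the creation order. -/
lemma FF_len_lt (hN : IsMiller N) {s t u w : List Bool} (hst : t.length = s.length)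
    (huw : w.length = u.length) (hk : key u w < key s t) :
    (FF N u w).length < (FF N s t).length := by
  have hs : s ≠ [] := by
    intro h
    rw [h] at hst
    have ht : t = [] := List.length_eq_zero_iff.1 (by simpa using hst)
    rw [h, ht, key_nil_nil] at hk
    omega
  calc (FF N u w).length ≤ MX (FF N u w) := length_le_MX _
  _ ≤ bnd (Phi N (key s t)) (key s t) s.length := bnd_ge hN hst huw hk
  _ < (FF N s t).length := (FF_spec hN hst hs).2.1

/-- Entries of an earlier node are smaller than all new entries of a later node. -/
lemma FF_cmp (hN : IsMiller N) {s t u w : List Bool} (hst : t.length = s.length)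
    (huw : w.length = u.length) (hk : key u w < key s t) (hs : s ≠ [])
    {i j : ℕ} (hj1 : (FF N s.dropLast t.dropLast).length ≤ j)
    (hj2 : j < (FF N s t).length) :
    (FF N u w).getD i 0 < (FF N s t).getD j 0 := by
  calc (FF N u w).getD i 0 ≤ MX (FF N u w) := getD_le_MX _ _
  _ ≤ bnd (Phi N (key s t)) (key s t) s.length := bnd_ge hN hst huw hk
  _ < (FF N s t).getD (FF N s.dropLast t.dropLast).length 0 := (FF_spec hN hst hs).2.2.2
  _ ≤ (FF N s t).getD j 0 := incseq_getD_le (FF_incseq hN hst) hj1 hj2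

/-- Prefix-monotonicity of the construction. -/
lemma FF_prefix (hN : IsMiller N) :
    ∀ d (s t s' t' : List Bool), t.length = s.length → t'.length = s'.length →
      s <+: s' → t <+: t' → s'.length = s.length + d → FF N s t <+: FF N s' t' := by
  intro d
  induction d with
  | zero =>
    intro s t s' t' h1 h2 h3 h4 h5
    have e1 : s = s' := by
      rw [List.prefix_iff_eq_take.1 h3, List.take_of_length_le (by omega)]
    have e2 : t = t' := by
      rw [List.prefix_iff_eq_take.1 h4, List.take_of_length_le (by omega)]
    rw [e1, e2]
  | succ d ih =>
    intro s t s' t' h1 h2 h3 h4 h5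
    have hs' : s' ≠ [] := by intro h; rw [h] at h5; simp at h5
    have hd1 : s <+: s'.dropLast := prefix_dropLast h3 (by omega)
    have hd2 : t <+: t'.dropLast := prefix_dropLast h4 (by omega)
    have := ih s t s'.dropLast t'.dropLast h1 (by simp [h2]) hd1 hd2
      (by simp; omega)
    exact this.trans (FF_spec hN h2 hs').1

end MangoAux
namespace MangoAux

variable {N : Set (List ℕ)}

lemma restr_ne_nil (f : ℕ → Bool) (n : ℕ) : restr f (n + 1) ≠ [] := by
  intro h
  have := restr_length f (n + 1)
  rw [h] at this
  simp at this

/-- The central domination lemma: if, in the creation order, the branch `q`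
covers the coordinate `|FF a b|` later than the branch `p` does, then the value
of `φq` there exceeds that of `φp`. -/
lemma domcore (hN : IsMiller N) {fp gp fq gq : ℕ → Bool} {φp φq : ℕ → ℕ}
    (hp : ∀ n k, k < (FF N (restr fp n) (restr gp n)).length →
      φp k = (FF N (restr fp n) (restr gp n)).getD k 0)
    (hq : ∀ n k, k < (FF N (restr fq n) (restr gq n)).length →
      φq k = (FF N (restr fq n) (restr gq n)).getD k 0)
    (n n' : ℕ) (a b : List Bool) (hab : b.length = a.length)
    (h1 : (restr fq n = a ∧ restr gq n = b) ∨ key (restr fq n) (restr gq n) < key a b)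
    (h2 : key a b < key (restr fp n') (restr gp n'))
    (h3 : key (restr fp n') (restr gp n') < key (restr fq (n + 1)) (restr gq (n + 1))) :
    φp (FF N a b).length < φq (FF N a b).length := by
  set L := (FF N a b).length with hL
  have hlp : L < (FF N (restr fp n') (restr gp n')).length :=
    FF_len_lt hN (by simp [restr_length]) hab h2
  have hlq : L < (FF N (restr fq (n + 1)) (restr gq (n + 1))).length :=
    FF_len_lt hN (by simp [restr_length]) hab (h2.trans h3)
  rw [hp n' L hlp, hq (n + 1) L hlq]
  apply FF_cmp hN (by simp [restr_length]) (by simp [restr_length]) h3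
    (restr_ne_nil fq n) _ hlq
  rw [restr_dropLast, restr_dropLast]
  rcases h1 with ⟨e1, e2⟩ | hlt
  · rw [e1, e2]
  · exact le_of_lt (FF_len_lt hN hab (by simp [restr_length]) hlt)

/-- Domination for a pair of branches within one vertical section. -/
lemma dom_pair (hN : IsMiller N) {f glo ghi : ℕ → Bool} {φlo φhi : ℕ → ℕ}
    (hlo : ∀ n k, k < (FF N (restr f n) (restr glo n)).length →
      φlo k = (FF N (restr f n) (restr glo n)).getD k 0)
    (hhi : ∀ n k, k < (FF N (restr f n) (restr ghi n)).length →
      φhi k = (FF N (restr f n) (restr ghi n)).getD k 0)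
    (m : ℕ)
    (h1 : restr ghi m = restr glo m ∨
      key (restr f m) (restr ghi m) < key (restr f m) (restr glo m))
    (h3 : key (restr f (m + 1)) (restr glo (m + 1)) <
      key (restr f (m + 1)) (restr ghi (m + 1))) :
    φlo (FF N (restr f m) (restr glo m)).length <
      φhi (FF N (restr f m) (restr glo m)).length ∧
    φlo (FF N (restr f m) (restr ghi m)).length <
      φhi (FF N (restr f m) (restr ghi m)).length := by
  have hK1 : ∀ (g : ℕ → Bool), key (restr f m) (restr g m) <
      key (restr f (m + 1)) (restr glo (m + 1)) := by
    intro g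
    exact key_lt_of_length (by simp [restr_length]) (by simp [restr_length])
  constructor
  · apply domcore hN hlo hhi m (m + 1) (restr f m) (restr glo m)
      (by simp [restr_length]) _ (hK1 glo) h3
    rcases h1 with he | hlt
    · exact Or.inl ⟨rfl, he⟩
    · exact Or.inr hlt
  · rcases h1 with he | hlt
    · apply domcore hN hlo hhi m (m + 1) (restr f m) (restr ghi m)
        (by simp [restr_length]) (Or.inl ⟨rfl, rfl⟩) _ h3
      rw [he]
      exact hK1 glo
    · apply domcore hN hlo hhi m m (restr f m) (restr ghi m)
        (by simp [restr_length]) (Or.inl ⟨rfl, rfl⟩) hlt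
      exact key_lt_of_length (by simp [restr_length]) (by simp [restr_length])

end MangoAux
namespace MangoAux

variable {N : Set (List ℕ)}

lemma restr_prefix (f : ℕ → Bool) {m n : ℕ} (h : m ≤ n) : restr f m <+: restr f n := by
  obtain ⟨d, rfl⟩ : ∃ d, n = m + d := ⟨n - m, by omega⟩
  rw [restr_split]
  exact List.prefix_append _ _

lemma proper_prefix_length {α : Type*} {s t : List α} (h : s <+: t) (hne : s ≠ t) :
    s.length < t.length := by
  rcases lt_or_eq_of_le h.length_le with h' | h'
  · exact h'
  · exact absurd (List.IsPrefix.eq_of_length h h') hne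

lemma FF_prefix_ne (hN : IsMiller N) {s t s' t' : List Bool}
    (h1 : t.length = s.length) (h2 : t'.length = s'.length)
    (h3 : s <+: s') (h4 : t <+: t') (h5 : s.length < s'.length) :
    FF N s t <+: FF N s' t' ∧ FF N s t ≠ FF N s' t' := by
  refine ⟨FF_prefix hN (s'.length - s.length) s t s' t' h1 h2 h3 h4 (by omega), ?_⟩
  intro he
  have := FF_len_lt hN h2 h1 (key_lt_of_length h1 h5)
  rw [he] at this
  exact lt_irrefl _ this

lemma restr_decomp {g : ℕ → Bool} {s : List Bool} {b : Bool}
    (h : restr g (s.length + 1) = s ++ [b]) (d : ℕ) :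
    restr g (s.length + 1 + d) =
      s ++ b :: (List.range d).map (fun j => g (s.length + 1 + j)) := by
  rw [restr_split, h]
  simp

lemma section_key_cmp (f : ℕ → Bool) {g0 g1 : ℕ → Bool} {s : List Bool}
    (h0 : restr g0 (s.length + 1) = s ++ [false])
    (h1 : restr g1 (s.length + 1) = s ++ [true])
    (m : ℕ) (hm : s.length + 1 ≤ m) :
    ((m - s.length) % 2 = 0 →
      key (restr f m) (restr g1 m) < key (restr f m) (restr g0 m)) ∧
    ((m - s.length) % 2 = 1 →
      key (restr f m) (restr g0 m) < key (restr f m) (restr g1 m)) := by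
  obtain ⟨d, rfl⟩ : ∃ d, m = s.length + 1 + d := ⟨m - (s.length + 1), by omega⟩
  have e0 := restr_decomp h0 d
  have e1 := restr_decomp h1 d
  have hxy : ((List.range d).map (fun j => g0 (s.length + 1 + j))).length =
      ((List.range d).map (fun j => g1 (s.length + 1 + j))).length := by simp
  constructor
  · intro hpar
    apply key_lt_of_rrank
    rw [e0, e1]
    apply rrank_flip_true s hxy
    simp only [List.length_map, List.length_range]
    omega
  · intro hpar
    apply key_lt_of_rrank
    rw [e0, e1]
    apply rrank_flip_false s hxy
    simp only [List.length_map, List.length_range]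
    omega

lemma section_ebits_cmp {f0 f1 : ℕ → Bool} {s : List Bool}
    (h0 : restr f0 (s.length + 1) = s ++ [false])
    (h1 : restr f1 (s.length + 1) = s ++ [true])
    (m : ℕ) (hm : s.length + 1 ≤ m) :
    ebits (restr f0 m) < ebits (restr f1 m) := by
  obtain ⟨d, rfl⟩ : ∃ d, m = s.length + 1 + d := ⟨m - (s.length + 1), by omega⟩
  rw [restr_decomp h0 d, restr_decomp h1 d]
  exact ebits_lex s (by simp)

lemma restr_at_split {g : ℕ → Bool} {s : List Bool} {b : Bool}
    (h : restr g (s.length + 1) = s ++ [b]) : restr g s.length = s := by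
  rw [← restr_dropLast, h, List.dropLast_concat]

end MangoAux

open MangoAux in
/-- **Lemma 5.** Every Miller tree contains a mango subtree. -/
theorem miller_contains_mango (N : Set (List ℕ)) (hN : IsMiller N) :
    ∃ σ2 : List Bool → List Bool → List ℕ,
      IsMangoSystem σ2 ∧ mangoTree σ2 ⊆ N := by
  refine ⟨FF N, ⟨?_, ?_, ?_, ?_⟩, ?_⟩
  · -- IncSeq
    intro s t h
    exact FF_incseq hN h.symm
  · -- (I)
    intro s t s' t' h h' hss hsne htt htne
    exact FF_prefix_ne hN h.symm h'.symm hss htt (proper_prefix_length hss hsne)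
  · -- (II): each vertical section is a cherry system
    intro f
    refine ⟨?_, ?_, ?_, ?_⟩
    · -- IncSeq
      intro s
      exact FF_incseq hN (by simp [restr_length])
    · -- cherry (I)
      intro a b hab hne
      have hlt := proper_prefix_length hab hne
      exact FF_prefix_ne hN (by simp [restr_length]) (by simp [restr_length])
        (restr_prefix f (le_of_lt hlt)) hab (by simp [restr_length, hlt])
    · -- cherry (II)
      intro a
      simp only [List.length_append, List.length_singleton]
      apply FF_cmp hN (by simp [restr_length]) (by simp [restr_length])
        (key_lt_of_rrank (rrank_flip_false a rfl
          (by simp only [List.length_nil, Nat.add_zero]; omega)))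
        (restr_ne_nil f a.length)
      · rw [restr_dropLast, List.dropLast_concat]
      · exact FF_len_lt hN (by simp [restr_length]) (by simp [restr_length])
          (key_lt_of_length (by simp [restr_length]) (by simp [restr_length]))
    · -- cherry (III)
      intro a f₀ f₁ φ₀ φ₁ hres0 hres1 hu0 hu1 n
      have hp0 : ∀ m j, j < (FF N (restr f m) (restr f₀ m)).length →
          φ₀ j = (FF N (restr f m) (restr f₀ m)).getD j 0 := by
        intro m j hj
        have := hu0 m j
        simp only [restr_length] at this
        exact this hj
      have hp1 : ∀ m j, j < (FF N (restr f m) (restr f₁ m)).length →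
          φ₁ j = (FF N (restr f m) (restr f₁ m)).getD j 0 := by
        intro m j hj
        have := hu1 m j
        simp only [restr_length] at this
        exact this hj
      have hk0 := restr_at_split hres0
      have hk1 := restr_at_split hres1
      have kc := fun m hm => section_key_cmp f hres0 hres1 m hm
      have h1E : restr f₁ (a.length + 2 * n) = restr f₀ (a.length + 2 * n) ∨
          key (restr f (a.length + 2 * n)) (restr f₁ (a.length + 2 * n)) <
            key (restr f (a.length + 2 * n)) (restr f₀ (a.length + 2 * n)) := by
        rcases Nat.eq_zero_or_pos n with rfl | hn
        · left
          simp only [Nat.mul_zero, Nat.add_zero]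
          rw [hk0, hk1]
        · exact Or.inr ((kc (a.length + 2 * n) (by omega)).1 (by omega))
      have D1 := dom_pair hN hp0 hp1 (a.length + 2 * n) h1E
        ((kc (a.length + 2 * n + 1) (by omega)).2 (by omega))
      have D2 := dom_pair hN hp1 hp0 (a.length + 2 * n + 1)
        (Or.inr ((kc (a.length + 2 * n + 1) (by omega)).2 (by omega)))
        ((kc (a.length + 2 * n + 1 + 1) (by omega)).1 (by omega))
      refine ⟨?_, ?_, ?_, ?_⟩ <;> simp only [restr_length]
      · exact D1.1
      · exact D2.2
      · exact D1.2
      · exact D2.1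
  · -- (III)
    intro a f₀ f₁ g₀ g₁ φ₀ φ₁ hres0 hres1 hu0 hu1
    have hk1 := restr_at_split hres1
    have ec := fun m hm => section_ebits_cmp hres0 hres1 m hm
    constructor
    · intro n hn
      constructor
      · exact domcore hN hu1 hu0 n n (restr f₀ n) (restr g₀ n)
          (by simp [restr_length]) (Or.inl ⟨rfl, rfl⟩)
          (key_lt_of_ebits (by simp [restr_length]) (by simp [restr_length])
            (ec n (by omega)))
          (key_lt_of_length (by simp [restr_length]) (by simp [restr_length]))
      · exact domcore hN hu0 hu1 n (n + 1) (restr f₁ n) (restr g₁ n)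
          (by simp [restr_length]) (Or.inl ⟨rfl, rfl⟩)
          (key_lt_of_length (by simp [restr_length]) (by simp [restr_length]))
          (key_lt_of_ebits (by simp [restr_length]) (by simp [restr_length])
            (ec (n + 1) (by omega)))
    · have D := domcore hN hu0 hu1 a.length (a.length + 1)
        (restr f₁ a.length) (restr g₁ a.length)
        (by simp [restr_length]) (Or.inl ⟨rfl, rfl⟩)
        (key_lt_of_length (by simp [restr_length]) (by simp [restr_length]))
        (key_lt_of_ebits (by simp [restr_length]) (by simp [restr_length])
          (ec (a.length + 1) (by omega)))
      rw [hk1] at D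
      exact D
  · -- subtree of N
    rintro ρ ⟨s, t, hlen, hpre⟩
    exact hN.1.2.2 _ (FF_mem hN hlen.symm) ρ hpre
end

section
/- Let M = M(Σ) be a mango tree constructed from a system Σ = ⟨σ_{⟨s,t⟩} : s, t ∈ 2^{<ω}, |s| = |t|⟩, and let S be a Sacks tree of type ⟨i,j⟩ for some ⟨i,j⟩ ∈ 3 × 3 with ⟨i,j⟩ ≠ ⟨2,2⟩. Then the set {f ∈ 2^ω : [M^f ∩ S] ≠ ∅} is countable, where M^f = {σ_{⟨f↾i, t⟩}↾n : i, n ∈ ω, t ∈ 2^i}. -/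
/-- The relation `R_i` (`i ∈ {0,1,2}`) on pairs of equal-length nodes: `ρ` has exactly
two immediate successor values `m₀ < m₁`, `τ` has a unique immediate successor value
`c`, and `m₁ < c` (if `i = 0`), `m₀ ≤ c ≤ m₁` (if `i = 1`), `c < m₀` (if `i = 2`). -/
def Rrel (S : Set (List ℕ)) (i : ℕ) (ρ τ : List ℕ) : Prop :=
  ∃ m₀ m₁ c : ℕ, m₀ < m₁ ∧ succs S ρ = {m₀, m₁} ∧ succs S τ = {c} ∧
    ((i = 0 ∧ m₁ < c) ∨ (i = 1 ∧ m₀ ≤ c ∧ c ≤ m₁) ∨ (i = 2 ∧ c < m₀))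

/-- A Sacks tree of type `⟨i,j⟩`: at most one splitting node on each level, every
splitting node has exactly two immediate successors, and for every splitting node `σ`
with successor values `n₀ < n₁`, all pairs `⟨ρ,τ⟩` of equal-length nodes with
`ρ ∈ split(S)` satisfy: `σ⌢⟨n₀⟩ ⊆ ρ ∧ σ⌢⟨n₁⟩ ⊆ τ → ⟨ρ,τ⟩ ∈ R_i` and
`σ⌢⟨n₁⟩ ⊆ ρ ∧ σ⌢⟨n₀⟩ ⊆ τ → ⟨ρ,τ⟩ ∈ R_j`. -/
def IsTypeTree (S : Set (List ℕ)) (i j : ℕ) : Prop :=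
  IsSacks S ∧
  (∀ σ τ, IsSplit S σ → IsSplit S τ → σ.length = τ.length → σ = τ) ∧
  (∀ σ, IsSplit S σ → ∃ n₀ n₁ : ℕ, n₀ < n₁ ∧ succs S σ = {n₀, n₁}) ∧
  ∀ σ n₀ n₁, IsSplit S σ → n₀ < n₁ → succs S σ = {n₀, n₁} →
    ∀ ρ τ, IsSplit S ρ → τ ∈ S → ρ.length = τ.length →
      ((σ ++ [n₀]) <+: ρ → (σ ++ [n₁]) <+: τ → Rrel S i ρ τ) ∧
      ((σ ++ [n₁]) <+: ρ → (σ ++ [n₀]) <+: τ → Rrel S j ρ τ)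

section basics
variable {α : Type*}

theorem rmap_length (f : ℕ → α) (n : ℕ) : ((List.range n).map f).length = n := by simp

theorem rmap_succ (f : ℕ → α) (n : ℕ) :
    (List.range (n+1)).map f = (List.range n).map f ++ [f n] := by
  rw [List.range_succ]; simp

theorem rmap_getD (f : ℕ → α) (d : α) {n k : ℕ} (h : k < n) :
    ((List.range n).map f).getD k d = f k := by
  rw [List.getD_eq_getElem _ _ (by simpa using h)]; simp

theorem rmap_take (f : ℕ → α) {m n : ℕ} (h : m ≤ n) :
    ((List.range n).map f).take m = (List.range m).map f := by
  rw [← List.map_take, List.take_range, Nat.min_eq_left h]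

theorem rmap_prefix (f : ℕ → α) {m n : ℕ} (h : m ≤ n) :
    (List.range m).map f <+: (List.range n).map f := by
  rw [← rmap_take f h]; exact List.take_prefix _ _

theorem rmap_eq_iff {f g : ℕ → α} {n : ℕ} :
    (List.range n).map f = (List.range n).map g ↔ ∀ k < n, f k = g k := by
  constructor
  · intro h k hk
    have := congrArg (fun l => l.getD k (f 0)) h
    rwa [rmap_getD f _ hk, rmap_getD g _ hk] at this
  · intro h
    apply List.ext_getElem (by simp)
    intro i h1 h2
    simp at h1 ⊢
    exact h i h1

theorem prefix_rmap {f : ℕ → α} {n : ℕ} {l : List α} (h : l <+: (List.range n).map f) :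
    l = (List.range l.length).map f := by
  have hl : l.length ≤ n := by simpa using h.length_le
  exact (List.prefix_of_prefix_length_le h (rmap_prefix f hl) (by simp)).eq_of_length (by simp)

theorem restr_length (f : ℕ → Bool) (n : ℕ) : (restr f n).length = n := rmap_length f n
theorem seg_length (f : ℕ → ℕ) (n : ℕ) : (seg f n).length = n := rmap_length f n
theorem restr_succ (f : ℕ → Bool) (n : ℕ) : restr f (n+1) = restr f n ++ [f n] := rmap_succ f n
theorem seg_succ (f : ℕ → ℕ) (n : ℕ) : seg f (n+1) = seg f n ++ [f n] := rmap_succ f n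
theorem restr_prefix (f : ℕ → Bool) {m n : ℕ} (h : m ≤ n) : restr f m <+: restr f n := rmap_prefix f h
theorem seg_prefix (f : ℕ → ℕ) {m n : ℕ} (h : m ≤ n) : seg f m <+: seg f n := rmap_prefix f h
theorem seg_getD (f : ℕ → ℕ) {n k : ℕ} (h : k < n) : (seg f n).getD k 0 = f k := rmap_getD f 0 h

theorem restr_ne_of_len {f g : ℕ → Bool} {m n : ℕ} (h : m ≠ n) : restr f m ≠ restr g n := by
  intro he
  exact h (by simpa [restr_length] using congrArg List.length he)

theorem getD_concat (l : List α) (b d : α) : (l ++ [b]).getD l.length d = b := by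
  simp [List.getD_append_right]

theorem prefix_concat_getD {l l' : List α} (d : α) (h : l <+: l') (hlen : l.length < l'.length) :
    l ++ [l'.getD l.length d] <+: l' := by
  obtain ⟨r, rfl⟩ := h
  cases r with
  | nil => simp at hlen
  | cons a r' =>
    have : (l ++ a :: r').getD l.length d = a := by
      rw [List.getD_append_right _ _ _ _ (le_refl _)]
      simp
    rw [this]
    exact ⟨r', by simp⟩

end basics

section counting

theorem uncount_fiber {α β : Type*} [Countable β] {A : Set α} (h : ¬A.Countable) (F : α → β) :
    ∃ b : β, ¬{a ∈ A | F a = b}.Countable := by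
  by_contra hc
  push_neg at hc
  refine h (Set.Countable.mono ?_ (Set.countable_iUnion hc))
  intro a ha
  exact Set.mem_iUnion.2 ⟨F a, ha, rfl⟩

theorem uncount_pair {α β : Type*} [Countable β] {A : Set α} (h : ¬A.Countable) (F : α → β) :
    ∃ a ∈ A, ∃ a' ∈ A, a ≠ a' ∧ F a = F a' := by
  by_contra hc
  push_neg at hc
  refine h (Set.countable_iff_exists_injective.2 ?_)
  obtain ⟨e, he⟩ := Countable.exists_injective_nat β
  refine ⟨fun a => e (F a.1), fun a a' hee => ?_⟩
  have hFa : F a.1 = F a'.1 := he hee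
  by_contra hne
  have : (a : α) ≠ (a' : α) := fun hh => hne (Subtype.ext hh)
  exact (hc a.1 a.2 a'.1 a'.2 this) hFa

theorem uncount_nonempty {α : Type*} {A : Set α} (h : ¬A.Countable) : A.Nonempty := by
  rcases A.eq_empty_or_nonempty with rfl | hne
  · exact absurd Set.countable_empty h
  · exact hne

/-- Cantor–Bendixson style splitting: from an uncountable family of (injectively
attached) branches, find a node with two uncountable sides. -/
theorem cb_split (Φ : (ℕ → Bool) → (ℕ → ℕ)) (A : Set (ℕ → Bool)) (hA : ¬A.Countable)
    (hinj : ∀ f ∈ A, ∀ f' ∈ A, Φ f = Φ f' → f = f') :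
    ∃ ν : List ℕ, ∃ m₀ m₁ : ℕ, m₀ ≠ m₁ ∧
      ¬{f ∈ A | seg (Φ f) (ν.length + 1) = ν ++ [m₀]}.Countable ∧
      ¬{f ∈ A | seg (Φ f) (ν.length + 1) = ν ++ [m₁]}.Countable := by
  classical
  set N : List ℕ → Set (ℕ → Bool) := fun ν => {f ∈ A | seg (Φ f) ν.length = ν} with hN
  have hstep : ∀ ν : List ℕ, ¬(N ν).Countable → ∃ m : ℕ, ¬(N (ν ++ [m])).Countable := by
    intro ν hν
    by_contra hc
    push_neg at hc
    refine hν (Set.Countable.mono ?_ (Set.countable_iUnion hc))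
    rintro f ⟨hfA, hfs⟩
    refine Set.mem_iUnion.2 ⟨Φ f ν.length, hfA, ?_⟩
    simp only [List.length_append, List.length_singleton]
    rw [seg_succ, hfs]
  by_contra hcon
  push_neg at hcon
  have huniq : ∀ ν, ¬(N ν).Countable → ∀ m m', ¬(N (ν ++ [m])).Countable →
      ¬(N (ν ++ [m'])).Countable → m = m' := by
    intro ν _ m m' hm hm'
    by_contra hne
    have e : ∀ mm : ℕ, {f | f ∈ A ∧ seg (Φ f) (ν.length + 1) = ν ++ [mm]} = N (ν ++ [mm]) := by
      intro mm
      simp [hN, List.length_append]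
    have h := hcon ν m m' hne
    rw [e m, e m'] at h
    exact hm' (h hm)
  -- build the unique uncountable branch
  have hnil : ¬(N []).Countable := by
    have : N [] = A := by
      ext f; simp [hN, seg]
    rwa [this]
  choose! nxt hnxt using hstep
  let C : ℕ → Type := fun n => {ν : List ℕ // ν.length = n ∧ ¬(N ν).Countable}
  let stp : ∀ n, C n → C (n+1) := fun n p =>
    ⟨p.1 ++ [nxt p.1], by simp [p.2.1], hnxt p.1 p.2.2⟩
  let ch : ∀ n, C n := fun n => Nat.rec ⟨[], rfl, hnil⟩ stp n
  have chsucc : ∀ n, (ch (n+1)).1 = (ch n).1 ++ [nxt (ch n).1] := fun n => rfl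
  -- every f ∈ A either follows the branch or lies in a countable side
  have hsplit : ∀ f ∈ A, (∀ n, seg (Φ f) n = (ch n).1) ∨
      ∃ n, (N ((ch n).1 ++ [Φ f n])).Countable ∧ f ∈ N ((ch n).1 ++ [Φ f n]) := by
    intro f hf
    by_cases hall : ∀ n, seg (Φ f) n = (ch n).1
    · exact Or.inl hall
    · right
      push_neg at hall
      have hex : ∃ n, seg (Φ f) n ≠ (ch n).1 := hall
      have hpos : Nat.find hex ≠ 0 := by
        intro h0
        have := Nat.find_spec hex
        rw [h0] at this
        exact this rfl
      obtain ⟨n, hn⟩ := Nat.exists_eq_succ_of_ne_zero hpos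
      have hspec : seg (Φ f) (n+1) ≠ (ch (n+1)).1 := by
        have := Nat.find_spec hex
        rwa [hn] at this
      have hprev : seg (Φ f) n = (ch n).1 := by
        by_contra hc
        exact (Nat.find_min hex (by omega)) hc
      have hmem : f ∈ N ((ch n).1 ++ [Φ f n]) := by
        refine ⟨hf, ?_⟩
        have : ((ch n).1 ++ [Φ f n]).length = n + 1 := by simp [(ch n).2.1]
        rw [this, seg_succ, hprev]
      refine ⟨n, ?_, hmem⟩
      by_contra hunc
      have hne : Φ f n ≠ nxt (ch n).1 := by
        intro he
        apply hspec
        rw [chsucc n, ← he]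
        have : ((ch n).1 ++ [Φ f n]).length = n + 1 := by simp [(ch n).2.1]
        rw [seg_succ, hprev]
      exact hne (huniq (ch n).1 (ch n).2.2 (Φ f n) (nxt (ch n).1) hunc (hnxt (ch n).1 (ch n).2.2))
  -- conclude countability of A
  apply hA
  have hsub : A ⊆ {f ∈ A | ∀ n, seg (Φ f) n = (ch n).1} ∪
      ⋃ p : ℕ × ℕ, if (N ((ch p.1).1 ++ [p.2])).Countable then N ((ch p.1).1 ++ [p.2]) else ∅ := by
    intro f hf
    rcases hsplit f hf with h | ⟨n, hcnt, hmem⟩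
    · exact Or.inl ⟨hf, h⟩
    · refine Or.inr (Set.mem_iUnion.2 ⟨⟨n, Φ f n⟩, ?_⟩)
      simp only [if_pos hcnt]
      exact hmem
  refine Set.Countable.mono hsub (Set.Countable.union ?_ (Set.countable_iUnion ?_))
  · apply Set.Subsingleton.countable
    intro f hf f' hf'
    have hΦ : Φ f = Φ f' := by
      funext k
      have h1 : seg (Φ f) (k+1) = seg (Φ f') (k+1) := (hf.2 (k+1)).trans (hf'.2 (k+1)).symm
      have := rmap_eq_iff.1 h1
      exact this k (Nat.lt_succ_self k)
    exact hinj f hf.1 f' hf'.1 hΦ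
  · intro p
    by_cases hc : (N ((ch p.1).1 ++ [p.2])).Countable
    · simpa [if_pos hc] using hc
    · simp [if_neg hc]

end counting

section mango
variable {σ2 : List Bool → List Bool → List ℕ}

/-- length of the `n`-th approximation along `(f,g)`. -/
noncomputable def Lfun (σ2 : List Bool → List Bool → List ℕ) (f g : ℕ → Bool) (n : ℕ) : ℕ :=
  (σ2 (restr f n) (restr g n)).length

theorem mango_mono (hσ2 : IsMangoSystem σ2) (f g : ℕ → Bool) {m n : ℕ} (h : m < n) :
    σ2 (restr f m) (restr g m) <+: σ2 (restr f n) (restr g n) ∧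
      Lfun σ2 f g m < Lfun σ2 f g n := by
  obtain ⟨hpre, hne⟩ := hσ2.2.1 (restr f m) (restr g m) (restr f n) (restr g n)
    (by simp [restr_length]) (by simp [restr_length])
    (restr_prefix f h.le) (restr_ne_of_len h.ne) (restr_prefix g h.le) (restr_ne_of_len h.ne)
  refine ⟨hpre, lt_of_le_of_ne hpre.length_le ?_⟩
  intro he
  exact hne (hpre.eq_of_length he)

theorem mango_le (hσ2 : IsMangoSystem σ2) (f g : ℕ → Bool) (n : ℕ) : n ≤ Lfun σ2 f g n := by
  induction n with
  | zero => exact Nat.zero_le _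
  | succ n ih => exact Nat.lt_of_le_of_lt ih (mango_mono hσ2 f g (Nat.lt_succ_self n)).2

/-- Every branch of a vertical section is the union along some `g`. -/
theorem exists_union_rep (hσ2 : IsMangoSystem σ2) (f : ℕ → Bool) (φ : ℕ → ℕ)
    (hφ : ∀ n, seg φ n ∈ mangoSection σ2 f) :
    ∃ g : ℕ → Bool, ∀ n,
      σ2 (restr f n) (restr g n) = seg φ (σ2 (restr f n) (restr g n)).length := by
  classical
  set InT : List Bool → Prop :=
    fun t => σ2 (restr f t.length) t = seg φ (σ2 (restr f t.length) t).length with hInT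
  have hImem : ∀ s t s' t' : List Bool, s.length = t.length → s'.length = t'.length →
      s <+: s' → s ≠ s' → t <+: t' → t ≠ t' →
      σ2 s t <+: σ2 s' t' := fun s t s' t' h1 h2 h3 h4 h5 h6 =>
    (hσ2.2.1 s t s' t' h1 h2 h3 h4 h5 h6).1
  -- closure under prefixes
  have InT_pref : ∀ t t' : List Bool, t <+: t' → InT t' → InT t := by
    intro t t' hp hI
    rcases eq_or_ne t t' with rfl | hne
    · exact hI
    have hlt : t.length < t'.length :=
      lt_of_le_of_ne hp.length_le (fun he => hne (hp.eq_of_length he))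
    have hpre : σ2 (restr f t.length) t <+: σ2 (restr f t'.length) t' :=
      hImem _ _ _ _ (by simp [restr_length]) (by simp [restr_length])
        (restr_prefix f hlt.le) (restr_ne_of_len hlt.ne) hp hne
    have : σ2 (restr f t.length) t <+: seg φ (σ2 (restr f t'.length) t').length := by
      rw [← hI]; exact hpre
    exact prefix_rmap this
  -- existence of nodes of every length
  have exists_level : ∀ N, ∃ t : List Bool, t.length = N ∧ InT t := by
    intro N
    set V : Finset ℕ :=
      Finset.image (fun v : Fin N → Bool => (σ2 (restr f N) (List.ofFn v)).length)
        Finset.univ with hV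
    have hVne : V.Nonempty := ⟨_, Finset.mem_image_of_mem _ (Finset.mem_univ (fun _ => false))⟩
    have hmemV : ∀ t : List Bool, t.length = N → (σ2 (restr f N) t).length ∈ V := by
      intro t ht
      have : List.ofFn (fun i : Fin N => t.getD i false) = t := by
        apply List.ext_getElem (by simp [ht])
        intro k h1 h2
        simp only [List.getElem_ofFn]
        exact (List.getD_eq_getElem t false h2).symm ▸ rfl
      rw [hV]
      refine Finset.mem_image.2 ⟨fun i : Fin N => t.getD i false, Finset.mem_univ _, by rw [this]⟩
    set m : ℕ := V.max' hVne + 1 with hm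
    have hmax : ∀ t : List Bool, t.length = N → (σ2 (restr f N) t).length < m :=
      fun t ht => Nat.lt_succ_of_le (V.le_max' _ (hmemV t ht))
    obtain ⟨t₁, ht₁⟩ := hφ m
    have hmle : m ≤ (σ2 (restr f t₁.length) t₁).length := by
      simpa [seg_length] using ht₁.length_le
    rcases lt_trichotomy t₁.length N with hlt | heq | hgt
    · exfalso
      set pad := t₁ ++ List.replicate (N - t₁.length) false with hpad
      have hpadlen : pad.length = N := by simp [hpad]; omega
      have hpre : σ2 (restr f t₁.length) t₁ <+: σ2 (restr f N) pad :=
        hImem _ _ _ _ (by simp [restr_length]) (by simp [restr_length, hpadlen])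
          (restr_prefix f hlt.le) (restr_ne_of_len hlt.ne) ⟨_, rfl⟩
          (fun he => by
            have := congrArg List.length he
            simp [hpadlen] at this; omega)
      have := hmax pad hpadlen
      have := hpre.length_le
      omega
    · exfalso
      have := hmax t₁ heq
      rw [heq] at hmle
      omega
    · refine ⟨t₁.take N, by simp; omega, ?_⟩
      set t := t₁.take N with ht
      have htlen : t.length = N := by simp [ht]; omega
      have htp : t <+: t₁ := List.take_prefix _ _
      have hpre : σ2 (restr f t.length) t <+: σ2 (restr f t₁.length) t₁ :=
        hImem _ _ _ _ (by simp [restr_length]) (by simp [restr_length])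
          (restr_prefix f (by omega)) (restr_ne_of_len (by omega)) htp
          (fun he => by have := congrArg List.length he; omega)
      have hlen2 : (σ2 (restr f t.length) t).length ≤ m := by
        have := hmax t htlen
        rw [htlen] at *
        omega
      have : σ2 (restr f t.length) t <+: seg φ m :=
        List.prefix_of_prefix_length_le hpre ht₁ (by simpa [seg_length] using hlen2)
      exact prefix_rmap this
  -- the Good predicate and König's lemma
  set Good : List Bool → Prop :=
    fun t => ∀ N, ∃ t', InT t' ∧ t <+: t' ∧ N ≤ t'.length with hGood
  have good_nil : Good [] := by
    intro N
    obtain ⟨t, ht1, ht2⟩ := exists_level N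
    exact ⟨t, ht2, List.nil_prefix, le_of_eq ht1.symm⟩
  have good_InT : ∀ t, Good t → InT t := by
    intro t ht
    obtain ⟨t', h1, h2, _⟩ := ht t.length
    exact InT_pref t t' h2 h1
  have key : ∀ t, Good t → ∃ b : Bool, Good (t ++ [b]) := by
    intro t ht
    by_contra hcon
    push_neg at hcon
    have hcon' : ∀ b : Bool, ∃ N, ∀ t', InT t' → t ++ [b] <+: t' → t'.length < N := by
      intro b
      have h1 := hcon b
      simp only [hGood] at h1
      push_neg at h1
      obtain ⟨N, hN⟩ := h1
      exact ⟨N, fun t' h1 h2 => by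
        by_contra hc
        push_neg at hc
        exact absurd hc (by simpa using (hN t' h1 h2))⟩
    obtain ⟨N₀, hN₀⟩ := hcon' false
    obtain ⟨N₁, hN₁⟩ := hcon' true
    obtain ⟨t', h1, h2, h3⟩ := ht (max (max N₀ N₁) (t.length + 1))
    have hlt : t.length < t'.length := by omega
    have hp : t ++ [t'.getD t.length false] <+: t' := prefix_concat_getD false h2 hlt
    cases hb : t'.getD t.length false with
    | false => have := hN₀ t' h1 (hb ▸ hp); omega
    | true => have := hN₁ t' h1 (hb ▸ hp); omega
  choose bit hbit using key
  let C : ℕ → Type := fun n => {t : List Bool // t.length = n ∧ Good t}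
  let step : ∀ n, C n → C (n+1) := fun n p =>
    ⟨p.1 ++ [bit p.1 p.2.2], by simp [p.2.1], hbit p.1 p.2.2⟩
  let ch : ∀ n, C n := fun n => Nat.rec ⟨[], rfl, good_nil⟩ step n
  refine ⟨fun n => (ch (n+1)).1.getD n false, ?_⟩
  have hrg : ∀ n, restr (fun n => (ch (n+1)).1.getD n false) n = (ch n).1 := by
    intro n
    induction n with
    | zero => rfl
    | succ n ih =>
      rw [restr_succ, ih]
      have haux : ∀ (l : List Bool), l.length = n → ∀ b : Bool, (l ++ [b]).getD n false = b := by
        intro l hl b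
        rw [← hl]
        exact getD_concat l b false
      have hsucc : (ch (n+1)).1 = (ch n).1 ++ [bit (ch n).1 (ch n).2.2] := rfl
      rw [hsucc, haux (ch n).1 (ch n).2.1 _]
  intro n
  have hI : InT (restr (fun n => (ch (n+1)).1.getD n false) n) := by
    rw [hrg n]; exact good_InT _ (ch n).2.2
  rw [hInT] at hI
  simpa [restr_length] using hI
/-- `φ` is the union of the `σ2`-chain along `(f,g)`. -/
def IsRep (σ2 : List Bool → List Bool → List ℕ) (f g : ℕ → Bool) (φ : ℕ → ℕ) : Prop :=
  ∀ n, σ2 (restr f n) (restr g n) = seg φ (σ2 (restr f n) (restr g n)).length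

theorem IsRep.val {σ2 : List Bool → List Bool → List ℕ} {f g : ℕ → Bool} {φ : ℕ → ℕ}
    (h : IsRep σ2 f g φ) (n k : ℕ) (hk : k < (σ2 (restr f n) (restr g n)).length) :
    (σ2 (restr f n) (restr g n)).getD k 0 = φ k := by
  rw [h n]; exact seg_getD φ hk

theorem IsRep.isUnionOf2 {σ2 : List Bool → List Bool → List ℕ} {f g : ℕ → Bool} {φ : ℕ → ℕ}
    (h : IsRep σ2 f g φ) : IsUnionOf2 σ2 f g φ :=
  fun n k hk => (h.val n k hk).symm

theorem oriented_star (hσ2 : IsMangoSystem σ2) (f₀ f₁ g₀ g₁ : ℕ → Bool) (φ₀ φ₁ : ℕ → ℕ)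
    (h₀ : IsRep σ2 f₀ g₀ φ₀) (h₁ : IsRep σ2 f₁ g₁ φ₁) (d : ℕ)
    (hag : ∀ k < d, f₀ k = f₁ k) (hb₀ : f₀ d = false) (hb₁ : f₁ d = true) :
    (∀ n, d < n →
       φ₁ (Lfun σ2 f₀ g₀ n) < φ₀ (Lfun σ2 f₀ g₀ n) ∧
       φ₀ (Lfun σ2 f₁ g₁ n) < φ₁ (Lfun σ2 f₁ g₁ n)) ∧
    φ₀ ((σ2 (restr f₀ d) (restr g₁ d)).length) <
      φ₁ ((σ2 (restr f₀ d) (restr g₁ d)).length) := by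
  have hr10 : restr f₁ d = restr f₀ d := rmap_eq_iff.2 (fun k hk => (hag k hk).symm)
  have h1 : restr f₀ ((restr f₀ d).length + 1) = restr f₀ d ++ [false] := by
    rw [restr_length, restr_succ, hb₀]
  have h2 : restr f₁ ((restr f₀ d).length + 1) = restr f₀ d ++ [true] := by
    rw [restr_length, restr_succ, hr10, hb₁]
  have := hσ2.2.2.2 (restr f₀ d) f₀ f₁ g₀ g₁ φ₀ φ₁ h1 h2 h₀.isUnionOf2 h₁.isUnionOf2
  obtain ⟨hmain, hlast⟩ := this
  constructor
  · intro n hn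
    have := hmain n (by simpa [restr_length] using hn)
    exact ⟨this.1, this.2⟩
  · simpa [restr_length] using hlast

theorem rep_unique (hσ2 : IsMangoSystem σ2) {f₀ f₁ g₀ g₁ : ℕ → Bool} {φ : ℕ → ℕ}
    (h₀ : IsRep σ2 f₀ g₀ φ) (h₁ : IsRep σ2 f₁ g₁ φ) : f₀ = f₁ := by
  by_contra hne
  have hex : ∃ n, f₀ n ≠ f₁ n := Function.ne_iff.1 hne
  classical
  set d := Nat.find hex with hd
  have hag : ∀ k < d, f₀ k = f₁ k := fun k hk => by
    have := Nat.find_min hex hk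
    simpa using this
  have hdne : f₀ d ≠ f₁ d := Nat.find_spec hex
  cases hb : f₀ d with
  | false =>
    have hb1 : f₁ d = true := by
      cases hb1 : f₁ d with
      | false => exact absurd (hb.trans hb1.symm) hdne
      | true => rfl
    have := (oriented_star hσ2 f₀ f₁ g₀ g₁ φ φ h₀ h₁ d hag hb hb1).1 (d+1) (Nat.lt_succ_self d)
    exact lt_irrefl _ this.1
  | true =>
    have hb1 : f₁ d = false := by
      cases hb1 : f₁ d with
      | true => exact absurd (hb.trans hb1.symm) hdne
      | false => rfl
    have := (oriented_star hσ2 f₁ f₀ g₁ g₀ φ φ h₁ h₀ d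
      (fun k hk => (hag k hk).symm) hb1 hb).1 (d+1) (Nat.lt_succ_self d)
    exact lt_irrefl _ this.1

theorem Lfun_def (σ2 : List Bool → List Bool → List ℕ) (f g : ℕ → Bool) (n : ℕ) :
    Lfun σ2 f g n = (σ2 (restr f n) (restr g n)).length := rfl

theorem final_contra (hσ2 : IsMangoSystem σ2)
    (S : Set (List ℕ))
    (Φ : (ℕ → Bool) → (ℕ → ℕ)) (Γ : (ℕ → Bool) → (ℕ → Bool)) (F' : Set (ℕ → Bool))
    (hbr : ∀ f ∈ F', ∀ n, seg (Φ f) n ∈ S)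
    (hrep : ∀ f ∈ F', IsRep σ2 f (Γ f) (Φ f))
    (ν : List ℕ) (va vc : ℕ) (hvavc : va ≠ vc)
    (hA : ¬{f ∈ F' | seg (Φ f) (ν.length + 1) = ν ++ [va]}.Countable)
    (c : ℕ → Bool) (hcF : c ∈ F') (hcside : seg (Φ c) (ν.length + 1) = ν ++ [vc])
    (hR : ∀ ρ τ, IsSplit S ρ → τ ∈ S → ρ.length = τ.length →
        (ν ++ [va]) <+: ρ → (ν ++ [vc]) <+: τ →
        ∃ m₀ m₁ cc : ℕ, m₀ < m₁ ∧ succs S ρ = {m₀, m₁} ∧ succs S τ = {cc} ∧ m₀ ≤ cc) :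
    False := by
  classical
  set A := {f ∈ F' | seg (Φ f) (ν.length + 1) = ν ++ [va]} with hAdef
  have hac : ∀ x ∈ A, x ≠ c := by
    rintro x ⟨hxF, hxside⟩ rfl
    have : ν ++ [va] = ν ++ [vc] := hxside.symm.trans hcside
    simp at this
    exact hvavc this
  set dmap : (ℕ → Bool) → ℕ :=
    fun x => if h : ∃ n, x n ≠ c n then Nat.find h else 0 with hdmap
  obtain ⟨mb, hA'⟩ := uncount_fiber hA dmap
  obtain ⟨a, haA', a', ha'A', hne_aa', hFeq⟩ :=
    uncount_pair hA' (fun x => (restr x (mb+1), restr (Γ x) (mb+1)))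
  obtain ⟨⟨haF, haside⟩, hadm⟩ := haA'
  obtain ⟨⟨ha'F, ha'side⟩, ha'dm⟩ := ha'A'
  -- first difference with c
  have hexa : ∃ n, a n ≠ c n := Function.ne_iff.1 (hac a ⟨haF, haside⟩)
  have hexa' : ∃ n, a' n ≠ c n := Function.ne_iff.1 (hac a' ⟨ha'F, ha'side⟩)
  have hfind_a : Nat.find hexa = mb := by
    have : dmap a = Nat.find hexa := by simp only [hdmap]; rw [dif_pos hexa]
    rw [← this]; exact hadm
  have hfind_a' : Nat.find hexa' = mb := by
    have : dmap a' = Nat.find hexa' := by simp only [hdmap]; rw [dif_pos hexa']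
    rw [← this]; exact ha'dm
  have hbit_a : a mb ≠ c mb := by rw [← hfind_a]; exact Nat.find_spec hexa
  have hbit_a' : a' mb ≠ c mb := by rw [← hfind_a']; exact Nat.find_spec hexa'
  have hag_a : ∀ k < mb, a k = c k := by
    intro k hk
    have := Nat.find_min hexa (by rw [hfind_a]; exact hk)
    simpa using this
  have hag_a' : ∀ k < mb, a' k = c k := by
    intro k hk
    have := Nat.find_min hexa' (by rw [hfind_a']; exact hk)
    simpa using this
  -- common prefixes of a, a'
  have hpf : restr a (mb+1) = restr a' (mb+1) := congrArg Prod.fst hFeq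
  have hpg : restr (Γ a) (mb+1) = restr (Γ a') (mb+1) := congrArg Prod.snd hFeq
  have haa'bits : ∀ k ≤ mb, a k = a' k := fun k hk => rmap_eq_iff.1 hpf k (by omega)
  have hgg'bits : ∀ k ≤ mb, Γ a k = Γ a' k := fun k hk => rmap_eq_iff.1 hpg k (by omega)
  -- first difference of the pairs (a, Γ a), (a', Γ a')
  have hexaa' : ∃ n, a n ≠ a' n ∨ Γ a n ≠ Γ a' n := by
    obtain ⟨n, hn⟩ := Function.ne_iff.1 hne_aa'
    exact ⟨n, Or.inl hn⟩
  set ns := Nat.find hexaa' with hns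
  have hnsm : mb < ns := by
    rw [hns]
    refine (Nat.lt_find_iff hexaa' mb).2 (fun k hk => ?_)
    push_neg
    exact ⟨haa'bits k hk, hgg'bits k hk⟩
  have hag_ns : ∀ k < ns, a k = a' k ∧ Γ a k = Γ a' k := by
    intro k hk
    have := Nat.find_min hexaa' hk
    push_neg at this
    exact this
  have hra : restr a ns = restr a' ns := rmap_eq_iff.2 (fun k hk => (hag_ns k hk).1)
  have hrg : restr (Γ a) ns = restr (Γ a') ns := rmap_eq_iff.2 (fun k hk => (hag_ns k hk).2)
  set k := (σ2 (restr a ns) (restr (Γ a) ns)).length with hkdef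
  have repa : IsRep σ2 a (Γ a) (Φ a) := hrep a haF
  have repa' : IsRep σ2 a' (Γ a') (Φ a') := hrep a' ha'F
  have repc : IsRep σ2 c (Γ c) (Φ c) := hrep c hcF
  -- values below k agree
  have hval_eq : ∀ jj < k, Φ a jj = Φ a' jj := by
    intro jj hjj
    have h1 := repa.val ns jj hjj
    have h2 := repa'.val ns jj (by rw [← hra, ← hrg]; exact hjj)
    rw [← hra, ← hrg] at h2
    exact h1.symm.trans h2
  -- values at k differ
  have hbits_ns : a ns ≠ a' ns ∨ Γ a ns ≠ Γ a' ns := Nat.find_spec hexaa'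
  have hk1 : k < (σ2 (restr a (ns+1)) (restr (Γ a) (ns+1))).length :=
    (mango_mono hσ2 a (Γ a) (Nat.lt_succ_self ns)).2
  have hra1 : restr a (ns+1) = restr a' (ns+1) → restr (Γ a) (ns+1) = restr (Γ a') (ns+1) → False := by
    intro hr1 hr2
    have := Nat.find_spec hexaa'
    rcases this with h | h
    · exact h (rmap_eq_iff.1 hr1 ns (Nat.lt_succ_self ns))
    · exact h (rmap_eq_iff.1 hr2 ns (Nat.lt_succ_self ns))
  have hval_ne : Φ a k ≠ Φ a' k := by
    by_cases hfa : a ns = a' ns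
    · -- cherry case: the g-coordinates split
      have hgne : Γ a ns ≠ Γ a' ns := by
        rcases hbits_ns with h | h
        · exact absurd hfa h
        · exact h
      have hch := hσ2.2.2.1 a
      have hII := hch.2.2.1 (restr (Γ a) ns)
      simp only [restr_length] at hII
      -- rewrite the lengths inside hII
      have hlenf : ∀ b : Bool, (restr (Γ a) ns ++ [b]).length = ns + 1 := by
        intro b; simp [restr_length]
      rw [hlenf false, hlenf true] at hII
      -- hII : (σ2 (restr a (ns+1)) (restr (Γ a) ns ++ [false])).getD k 0
      --        < (σ2 (restr a (ns+1)) (restr (Γ a) ns ++ [true])).getD k 0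
      have hva : Φ a k = (σ2 (restr a (ns+1)) (restr (Γ a) ns ++ [Γ a ns])).getD k 0 := by
        have := repa.val (ns+1) k hk1
        rw [restr_succ (Γ a) ns] at this
        exact this.symm
      have hk1' : k < (σ2 (restr a' (ns+1)) (restr (Γ a') (ns+1))).length := by
        have := (mango_mono hσ2 a' (Γ a') (Nat.lt_succ_self ns)).2
        rw [Lfun_def, Lfun_def, ← hra, ← hrg] at this
        exact this
      have hva' : Φ a' k = (σ2 (restr a (ns+1)) (restr (Γ a) ns ++ [Γ a' ns])).getD k 0 := by
        have := repa'.val (ns+1) k hk1'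
        rw [restr_succ (Γ a') ns, restr_succ a' ns, ← hra, ← hrg, ← hfa, ← restr_succ a ns] at this
        exact this.symm
      cases hb : Γ a ns with
      | false =>
        have hb' : Γ a' ns = true := by
          cases hb2 : Γ a' ns with
          | false => exact absurd (hb.trans hb2.symm) hgne
          | true => rfl
        rw [hb] at hva; rw [hb'] at hva'
        rw [hva, hva']
        exact ne_of_lt hII
      | true =>
        have hb' : Γ a' ns = false := by
          cases hb2 : Γ a' ns with
          | true => exact absurd (hb.trans hb2.symm) hgne
          | false => rfl
        rw [hb] at hva; rw [hb'] at hva'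
        rw [hva, hva']
        exact (ne_of_lt hII).symm
    · -- the f-coordinates split: use the second clause of (III)
      cases hb : a ns with
      | false =>
        have hb' : a' ns = true := by
          cases hb2 : a' ns with
          | false => exact absurd (hb.trans hb2.symm) hfa
          | true => rfl
        have := (oriented_star hσ2 a a' (Γ a) (Γ a') (Φ a) (Φ a') repa repa' ns
          (fun k hk => (hag_ns k hk).1) hb hb').2
        rw [← hrg] at this
        exact ne_of_lt this
      | true =>
        have hb' : a' ns = false := by
          cases hb2 : a' ns with
          | true => exact absurd (hb.trans hb2.symm) hfa
          | false => rfl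
        have := (oriented_star hσ2 a' a (Γ a') (Γ a) (Φ a') (Φ a) repa' repa ns
          (fun k hk => (hag_ns k hk).1.symm) hb' hb).2
        rw [← hra] at this
        exact (ne_of_lt this).symm
  -- the two branches agree strictly below k
  have hseg_eq : seg (Φ a) k = seg (Φ a') k := rmap_eq_iff.2 hval_eq
  have hklen : ν.length < k := by
    by_contra hle
    push_neg at hle
    apply hval_ne
    have h1 := rmap_eq_iff.1 (haside.trans ha'side.symm)
    exact h1 k (by omega)
  set ρ := seg (Φ a) k with hρ
  have hρS : ρ ∈ S := hbr a haF k
  have hsucc_a : ρ ++ [Φ a k] ∈ S := by rw [hρ, ← seg_succ]; exact hbr a haF (k+1)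
  have hsucc_a' : ρ ++ [Φ a' k] ∈ S := by
    rw [hseg_eq, ← seg_succ]; exact hbr a' ha'F (k+1)
  have hsplitρ : IsSplit S ρ := ⟨hρS, Φ a k, Φ a' k, hval_ne, hsucc_a, hsucc_a'⟩
  set τ := seg (Φ c) k with hτ
  have hτS : τ ∈ S := hbr c hcF k
  have hlen_eq : ρ.length = τ.length := by simp [hρ, hτ, seg_length]
  have hpre_a : ν ++ [va] <+: ρ := by rw [← haside, hρ]; exact seg_prefix (Φ a) (by omega)
  have hpre_c : ν ++ [vc] <+: τ := by rw [← hcside, hτ]; exact seg_prefix (Φ c) (by omega)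
  obtain ⟨m₀, m₁, cc, hm01, hsρ, hsτ, hmle⟩ := hR ρ τ hsplitρ hτS hlen_eq hpre_a hpre_c
  have hmem_a : Φ a k ∈ succs S ρ := hsucc_a
  have hmem_a' : Φ a' k ∈ succs S ρ := hsucc_a'
  have hmem_c : Φ c k ∈ succs S τ := by
    show τ ++ [Φ c k] ∈ S
    rw [hτ, ← seg_succ]; exact hbr c hcF (k+1)
  rw [hsρ] at hmem_a hmem_a'
  rw [hsτ] at hmem_c
  have hcc : Φ c k = cc := hmem_c
  -- star inequalities: Φ a and Φ a' dominate Φ c at level k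
  have hstar_a : Φ c k < Φ a k := by
    cases hb : a mb with
    | false =>
      have hbc : c mb = true := by
        cases hb2 : c mb with
        | false => exact absurd (hb.trans hb2.symm) hbit_a
        | true => rfl
      have := ((oriented_star hσ2 a c (Γ a) (Γ c) (Φ a) (Φ c) repa repc mb hag_a hb hbc).1
        ns hnsm).1
      exact this
    | true =>
      have hbc : c mb = false := by
        cases hb2 : c mb with
        | true => exact absurd (hb.trans hb2.symm) hbit_a
        | false => rfl
      have := ((oriented_star hσ2 c a (Γ c) (Γ a) (Φ c) (Φ a) repc repa mb
        (fun k hk => (hag_a k hk).symm) hbc hb).1 ns hnsm).2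
      exact this
  have hstar_a' : Φ c k < Φ a' k := by
    have hkeq : (σ2 (restr a' ns) (restr (Γ a') ns)).length = k := by
      rw [← hra, ← hrg]
    cases hb : a' mb with
    | false =>
      have hbc : c mb = true := by
        cases hb2 : c mb with
        | false => exact absurd (hb.trans hb2.symm) hbit_a'
        | true => rfl
      have := ((oriented_star hσ2 a' c (Γ a') (Γ c) (Φ a') (Φ c) repa' repc mb hag_a' hb hbc).1
        ns hnsm).1
      rw [Lfun_def, hkeq] at this
      exact this
    | true =>
      have hbc : c mb = false := by
        cases hb2 : c mb with
        | true => exact absurd (hb.trans hb2.symm) hbit_a'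
        | false => rfl
      have := ((oriented_star hσ2 c a' (Γ c) (Γ a') (Φ c) (Φ a') repc repa' mb
        (fun k hk => (hag_a' k hk).symm) hbc hb).1 ns hnsm).2
      rw [Lfun_def, hkeq] at this
      exact this
  -- contradiction
  rw [hcc] at hstar_a hstar_a'
  rcases hmem_a with h1 | h1
  · omega
    -- Φ a k = m₀ : cc < m₀ ≤ cc
  · rcases hmem_a' with h2 | h2
    · omega
    · exact hval_ne (h1.trans h2.symm)

end mango


/-- **Lemma 6.** If `M(Σ)` is a mango tree and `S` is a Sacks tree of one of the
eight types `⟨i,j⟩ ∈ 3 × 3 \ {⟨2,2⟩}`, then only countably many vertical sections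
`M^f` share a branch with `S`. -/
theorem mango_section_meets_sacks_countably
    (σ2 : List Bool → List Bool → List ℕ) (hσ2 : IsMangoSystem σ2)
    (S : Set (List ℕ)) (i j : ℕ) (hi : i < 3) (hj : j < 3)
    (hij : ¬(i = 2 ∧ j = 2)) (hS : IsTypeTree S i j) :
    Set.Countable
      {f : ℕ → Bool | (branches (mangoSection σ2 f ∩ S)).Nonempty} := by
  by_contra hF
  set F' := {f : ℕ → Bool | (branches (mangoSection σ2 f ∩ S)).Nonempty} with hF'def
  have hch : ∀ f ∈ F', ∃ φ : ℕ → ℕ, ∃ g : ℕ → Bool,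
      (∀ n, seg φ n ∈ S) ∧ IsRep σ2 f g φ := by
    intro f hf
    obtain ⟨φ, hφmono, hφmem⟩ := hf
    have h1 : ∀ n, seg φ n ∈ mangoSection σ2 f := fun n => (hφmem n).1
    have h2 : ∀ n, seg φ n ∈ S := fun n => (hφmem n).2
    obtain ⟨g, hg⟩ := exists_union_rep hσ2 f φ h1
    exact ⟨φ, g, h2, hg⟩
  choose! Φ Γ hbr hrep using hch
  have hinj : ∀ f ∈ F', ∀ f' ∈ F', Φ f = Φ f' → f = f' := by
    intro f hf f' hf' he
    exact rep_unique hσ2 (hrep f hf) (he ▸ hrep f' hf')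
  obtain ⟨ν, m₀, m₁, hm, hU₀, hU₁⟩ := cb_split Φ F' hF hinj
  obtain ⟨f₀, hf₀F, hside₀⟩ := uncount_nonempty hU₀
  obtain ⟨f₁, hf₁F, hside₁⟩ := uncount_nonempty hU₁
  have hν₀S : ν ++ [m₀] ∈ S := by rw [← hside₀]; exact hbr f₀ hf₀F (ν.length+1)
  have hν₁S : ν ++ [m₁] ∈ S := by rw [← hside₁]; exact hbr f₁ hf₁F (ν.length+1)
  have hνS : ν ∈ S := by
    have h1 : seg (Φ f₀) ν.length = ν := by
      have h2 := congrArg (List.take ν.length) hside₀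
      rwa [show (seg (Φ f₀) (ν.length+1)).take ν.length = seg (Φ f₀) ν.length from
        rmap_take (Φ f₀) (Nat.le_succ _), List.take_left] at h2
    rw [← h1]; exact hbr f₀ hf₀F ν.length
  have hsplitν : IsSplit S ν := ⟨hνS, m₀, m₁, hm, hν₀S, hν₁S⟩
  obtain ⟨n₀, n₁, hn01, hsuccν⟩ := hS.2.2.1 ν hsplitν
  have hm₀ : m₀ ∈ ({n₀, n₁} : Set ℕ) := by rw [← hsuccν]; exact hν₀S
  have hm₁ : m₁ ∈ ({n₀, n₁} : Set ℕ) := by rw [← hsuccν]; exact hν₁S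
  simp only [Set.mem_insert_iff, Set.mem_singleton_iff] at hm₀ hm₁
  have horient : (m₀ = n₀ ∧ m₁ = n₁) ∨ (m₀ = n₁ ∧ m₁ = n₀) := by
    rcases hm₀ with h0 | h0 <;> rcases hm₁ with h1 | h1
    · exact absurd (h0.trans h1.symm) hm
    · exact Or.inl ⟨h0, h1⟩
    · exact Or.inr ⟨h0, h1⟩
    · exact absurd (h0.trans h1.symm) hm
  have hUn₀ : ¬{f ∈ F' | seg (Φ f) (ν.length + 1) = ν ++ [n₀]}.Countable := by
    rcases horient with ⟨h0, h1⟩ | ⟨h0, h1⟩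
    · rw [← h0]; exact hU₀
    · rw [← h1]; exact hU₁
  have hUn₁ : ¬{f ∈ F' | seg (Φ f) (ν.length + 1) = ν ++ [n₁]}.Countable := by
    rcases horient with ⟨h0, h1⟩ | ⟨h0, h1⟩
    · rw [← h1]; exact hU₁
    · rw [← h0]; exact hU₀
  have htype := hS.2.2.2 ν n₀ n₁ hsplitν hn01 hsuccν
  by_cases hi2 : i = 2
  · -- then j ≠ 2 : use the second relation, with ρ on the n₁-side
    have hj2 : j ≠ 2 := fun hj2 => hij ⟨hi2, hj2⟩
    obtain ⟨c, hcF, hcside⟩ := uncount_nonempty hUn₀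
    refine final_contra hσ2 S Φ Γ F' hbr hrep ν n₁ n₀ hn01.ne' hUn₁ c hcF hcside ?_
    intro ρ τ hsρ hτ hlen hp1 hp2
    obtain ⟨p₀, p₁, cc, hlt, hs1, hs2, hcase⟩ := (htype ρ τ hsρ hτ hlen).2 hp1 hp2
    refine ⟨p₀, p₁, cc, hlt, hs1, hs2, ?_⟩
    rcases hcase with ⟨_, h⟩ | ⟨_, h⟩ | ⟨hj0, _⟩
    · omega
    · exact h.1
    · exact absurd hj0 hj2
  · -- i ≠ 2 : use the first relation, with ρ on the n₀-side
    obtain ⟨c, hcF, hcside⟩ := uncount_nonempty hUn₁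
    refine final_contra hσ2 S Φ Γ F' hbr hrep ν n₀ n₁ hn01.ne hUn₀ c hcF hcside ?_
    intro ρ τ hsρ hτ hlen hp1 hp2
    obtain ⟨p₀, p₁, cc, hlt, hs1, hs2, hcase⟩ := (htype ρ τ hsρ hτ hlen).1 hp1 hp2
    refine ⟨p₀, p₁, cc, hlt, hs1, hs2, ?_⟩
    rcases hcase with ⟨_, h⟩ | ⟨_, h⟩ | ⟨hi0, _⟩
    · omega
    · exact h.1
    · exact absurd hi0 hi2
end
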